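/- arXiv:2306.10936 — 8 statements merged into one kernel-verified Lean document; each statement's English description precedes it below -/
import Mathlib

section
/- Let L > 0 and let ω_N, ω ∈ L²((0,L);ℝ³) be such that ω_N converges to ω weakly in L² and sup_N ‖ω_N‖_{L²} < ∞. For each N let b_N : [0,L] → ℝ³ be absolutely continuous with b_N'(t) = ω_N(t) × b_N(t) for a.e. t, and let b : [0,L] → ℝ³ be absolutely continuous with b'(t) = ω(t) × b(t) for a.e. t. If b_N(0) → b(0), then ∫₀^L |b_N(t) − b(t)|² dt → 0 as N → ∞. -/
open MeasureTheory Set Filter Topology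
open scoped RealInnerProductSpace

noncomputable abbrev E3 : Type := EuclideanSpace ℝ (Fin 3)

/-- The cross product on `ℝ³`. -/
noncomputable def cross3 (v w : E3) : E3 :=
  (EuclideanSpace.equiv (Fin 3) ℝ).symm
    ![v 1 * w 2 - v 2 * w 1, v 2 * w 0 - v 0 * w 2, v 0 * w 1 - v 1 * w 0]

namespace Stmt0Aux

lemma le_of_sq_le_sq {a b : ℝ} (ha : 0 ≤ a) (hb : 0 ≤ b) (h : a ^ 2 ≤ b ^ 2) : a ≤ b := by
  nlinarith

lemma inner_cross3_self (v w : E3) : ⟪cross3 v w, w⟫ = 0 := by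
  simp [cross3, PiLp.inner_apply, Fin.sum_univ_three]
  ring

lemma norm_cross3_le (v w : E3) : ‖cross3 v w‖ ≤ ‖v‖ * ‖w‖ := by
  refine le_of_sq_le_sq (norm_nonneg _) (mul_nonneg (norm_nonneg v) (norm_nonneg w)) ?_
  rw [← real_inner_self_eq_norm_sq]
  have h1 : ⟪cross3 v w, cross3 v w⟫ + ⟪v,w⟫ ^ 2 = ⟪v,v⟫ * ⟪w,w⟫ := by
    simp [cross3, PiLp.inner_apply, Fin.sum_univ_three, -inner_self_eq_norm_sq_to_K]
    ring
  nlinarith [real_inner_self_eq_norm_sq v, real_inner_self_eq_norm_sq w, sq_nonneg (⟪v,w⟫)]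

lemma cross3_apply_inner (v w : E3) (i : Fin 3) :
    (cross3 v w) i = ⟪v, cross3 w (EuclideanSpace.single i (1:ℝ))⟫ := by
  fin_cases i <;>
    simp [cross3, PiLp.inner_apply, Fin.sum_univ_three, EuclideanSpace.single_apply] <;> ring

lemma key_inner (a c d e : E3) :
    ⟪cross3 a c - cross3 d e, c - e⟫ = ⟪cross3 a e - cross3 d e, c - e⟫ := by
  simp [cross3, PiLp.inner_apply, Fin.sum_univ_three]
  ring

lemma continuous_cross3 : Continuous fun p : E3 × E3 => cross3 p.1 p.2 := by
  refine ((EuclideanSpace.equiv (Fin 3) ℝ).symm.continuous).comp ?_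
  refine continuous_pi fun i => ?_
  have h : ∀ j : Fin 3, Continuous fun p : E3 × E3 => p.1 j :=
    fun j => ((EuclideanSpace.proj j).continuous).comp continuous_fst
  have h' : ∀ j : Fin 3, Continuous fun p : E3 × E3 => p.2 j :=
    fun j => ((EuclideanSpace.proj j).continuous).comp continuous_snd
  fin_cases i <;> simp <;> fun_prop

lemma norm_le_sum3 (x : E3) : ‖x‖ ≤ |x 0| + |x 1| + |x 2| := by
  refine le_of_sq_le_sq (norm_nonneg _) (by positivity) ?_
  rw [← real_inner_self_eq_norm_sq]
  simp only [PiLp.inner_apply, Fin.sum_univ_three, RCLike.inner_apply, conj_trivial]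
  nlinarith [abs_nonneg (x 0), abs_nonneg (x 1), abs_nonneg (x 2), sq_abs (x 0), sq_abs (x 1),
    sq_abs (x 2), mul_nonneg (abs_nonneg (x 0)) (abs_nonneg (x 1)),
    mul_nonneg (abs_nonneg (x 0)) (abs_nonneg (x 2)),
    mul_nonneg (abs_nonneg (x 1)) (abs_nonneg (x 2))]


lemma cs_lemma {s : Set ℝ} {f : ℝ → E3} [IsFiniteMeasure (volume.restrict s)]
    (hf : MemLp f 2 (volume.restrict s)) :
    ∫ x in s, ‖f x‖ ≤
      Real.sqrt (volume s).toReal * Real.sqrt (∫ x in s, ‖f x‖ ^ 2) := by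
  have hconj : Real.HolderConjugate 2 2 := Real.holderConjugate_iff.mpr ⟨one_lt_two, by norm_num⟩
  have h2 : ENNReal.ofReal (2:ℝ) = 2 := by norm_num
  have hg : MemLp (fun _ : ℝ => (1:ℝ)) (ENNReal.ofReal (2:ℝ)) (volume.restrict s) := by
    rw [h2]; exact memLp_const 1
  have hf' : MemLp (fun x => ‖f x‖) (ENNReal.ofReal (2:ℝ)) (volume.restrict s) := by
    rw [h2]; exact hf.norm
  have hnn : 0 ≤ᵐ[volume.restrict s] fun x => ‖f x‖ :=
    Eventually.of_forall fun x => norm_nonneg _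
  have hnn1 : 0 ≤ᵐ[volume.restrict s] fun _ : ℝ => (1:ℝ) :=
    Eventually.of_forall fun _ => zero_le_one
  have := integral_mul_le_Lp_mul_Lq_of_nonneg hconj hnn hnn1 hf' hg
  simp only [mul_one, Real.one_rpow, integral_const, smul_eq_mul,
    Measure.restrict_apply_univ] at this
  have hieq : (∫ x in s, ‖f x‖ ^ (2:ℝ)) = ∫ x in s, ‖f x‖ ^ (2:ℕ) :=
    integral_congr_ae (Eventually.of_forall fun x => by
      show ‖f x‖ ^ (2:ℝ) = ‖f x‖ ^ (2:ℕ)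
      rw [show ((2:ℝ)) = ((2:ℕ):ℝ) by norm_num, Real.rpow_natCast])
  rw [hieq] at this
  calc ∫ x in s, ‖f x‖ ≤ (∫ x in s, ‖f x‖ ^ (2:ℕ)) ^ (1/(2:ℝ)) *
        ((volume s).toReal) ^ (1/(2:ℝ)) := by simpa [Measure.real, Measure.restrict_apply_univ] using this
    _ = Real.sqrt (volume s).toReal * Real.sqrt (∫ x in s, ‖f x‖ ^ 2) := by
        rw [← Real.sqrt_eq_rpow, ← Real.sqrt_eq_rpow, mul_comm]


lemma lemT {t : ℝ} {u w : ℝ → E3} (hu : IntegrableOn u (Ioc 0 t))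
    (hw : IntegrableOn w (Ioc 0 t)) :
    Integrable (fun s => ⟪u s, ∫ r in Ioc 0 s, w r⟫) (volume.restrict (Ioc 0 t)) ∧
    ⟪∫ s in Ioc 0 t, u s, ∫ s in Ioc 0 t, w s⟫ =
      (∫ s in Ioc 0 t, ⟪u s, ∫ r in Ioc 0 s, w r⟫) +
        ∫ s in Ioc 0 t, ⟪∫ r in Ioc 0 s, u r, w s⟫ := by
  set μ := volume.restrict (Ioc (0:ℝ) t) with hμdef
  have hD : MeasurableSet {p : ℝ × ℝ | p.2 ≤ p.1} := measurableSet_le measurable_snd measurable_fst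
  have hD' : MeasurableSet {p : ℝ × ℝ | p.1 ≤ p.2} := measurableSet_le measurable_fst measurable_snd
  -- integrability of the kernels
  have hG : Integrable (fun p : ℝ × ℝ => ⟪u p.1, w p.2⟫) (μ.prod μ) := by
    refine Integrable.mono' (Integrable.mul_prod hu.norm hw.norm)
      (hu.aestronglyMeasurable.comp_fst.inner hw.aestronglyMeasurable.comp_snd)
      (Eventually.of_forall fun p => ?_)
    exact (norm_inner_le_norm _ _)
  have hG' : Integrable (fun p : ℝ × ℝ => ⟪u p.2, w p.1⟫) (μ.prod μ) := by
    refine Integrable.mono' (Integrable.mul_prod hw.norm hu.norm)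
      (hu.aestronglyMeasurable.comp_snd.inner hw.aestronglyMeasurable.comp_fst)
      (Eventually.of_forall fun p => ?_)
    exact le_trans (norm_inner_le_norm _ _) (le_of_eq (mul_comm _ _))
  set F₁ : ℝ × ℝ → ℝ := {p : ℝ × ℝ | p.2 ≤ p.1}.indicator (fun p => ⟪u p.1, w p.2⟫) with hF₁def
  set F₂ : ℝ × ℝ → ℝ := {p : ℝ × ℝ | p.2 ≤ p.1}.indicator (fun p => ⟪u p.2, w p.1⟫) with hF₂def
  set F₂' : ℝ × ℝ → ℝ := {p : ℝ × ℝ | p.1 ≤ p.2}.indicator (fun p => ⟪u p.1, w p.2⟫) with hF₂'def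
  have hF₁ : Integrable F₁ (μ.prod μ) := hG.indicator hD
  have hF₂ : Integrable F₂ (μ.prod μ) := hG'.indicator hD
  have hF₂' : Integrable F₂' (μ.prod μ) := hG.indicator hD'
  -- first term
  have eqn1 : (∫ s in Ioc 0 t, ⟪u s, ∫ r in Ioc 0 s, w r⟫) = ∫ s, (∫ r, F₁ (s, r) ∂μ) ∂μ := by
    refine setIntegral_congr_fun measurableSet_Ioc fun s hs => ?_
    have h1 : ⟪u s, ∫ r in Ioc 0 s, w r⟫ = ∫ r in Ioc 0 s, ⟪u s, w r⟫ :=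
      (integral_inner (hw.mono_set (Ioc_subset_Ioc_right hs.2)) (u s)).symm
    have h2 : ∀ r : ℝ, F₁ (s, r) = (Iic s).indicator (fun r => ⟪u s, w r⟫) r := fun r => by
      simp only [hF₁def, Set.indicator_apply, Set.mem_setOf_eq, Set.mem_Iic]
    have h3 : (∫ r, F₁ (s, r) ∂μ) = ∫ r in Ioc 0 t ∩ Iic s, ⟪u s, w r⟫ := by
      rw [hμdef]
      simp_rw [h2]
      exact setIntegral_indicator measurableSet_Iic
    have h4 : Ioc 0 t ∩ Iic s = Ioc 0 s := by
      ext r; simp only [Set.mem_inter_iff, Set.mem_Ioc, Set.mem_Iic]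
      exact ⟨fun ⟨⟨h5, _⟩, h7⟩ => ⟨h5, h7⟩, fun ⟨h5, h6⟩ => ⟨⟨h5, h6.trans hs.2⟩, h6⟩⟩
    rw [h1, h3, h4]
  -- second term
  have eqn2 : (∫ s in Ioc 0 t, ⟪∫ r in Ioc 0 s, u r, w s⟫) = ∫ s, (∫ r, F₂ (s, r) ∂μ) ∂μ := by
    refine setIntegral_congr_fun measurableSet_Ioc fun s hs => ?_
    have h1 : ⟪∫ r in Ioc 0 s, u r, w s⟫ = ∫ r in Ioc 0 s, ⟪u r, w s⟫ := by
      rw [real_inner_comm, ← integral_inner (hu.mono_set (Ioc_subset_Ioc_right hs.2)) (w s)]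
      simp_rw [real_inner_comm]
    have h2 : ∀ r : ℝ, F₂ (s, r) = (Iic s).indicator (fun r => ⟪u r, w s⟫) r := fun r => by
      simp only [hF₂def, Set.indicator_apply, Set.mem_setOf_eq, Set.mem_Iic]
    have h3 : (∫ r, F₂ (s, r) ∂μ) = ∫ r in Ioc 0 t ∩ Iic s, ⟪u r, w s⟫ := by
      rw [hμdef]; simp_rw [h2]; exact setIntegral_indicator measurableSet_Iic
    have h4 : Ioc 0 t ∩ Iic s = Ioc 0 s := by
      ext r; simp only [Set.mem_inter_iff, Set.mem_Ioc, Set.mem_Iic]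
      exact ⟨fun ⟨⟨h5, _⟩, h7⟩ => ⟨h5, h7⟩, fun ⟨h5, h6⟩ => ⟨⟨h5, h6.trans hs.2⟩, h6⟩⟩
    rw [h1, h3, h4]
  -- double integrals as product integrals
  have dbl1 : (∫ s, (∫ r, F₁ (s, r) ∂μ) ∂μ) = ∫ p, F₁ p ∂(μ.prod μ) := (integral_prod F₁ hF₁).symm
  have dbl2 : (∫ s, (∫ r, F₂ (s, r) ∂μ) ∂μ) = ∫ p, F₂ p ∂(μ.prod μ) := (integral_prod F₂ hF₂).symm
  -- swap F₂ into F₂'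
  have swap2 : (∫ p, F₂ p ∂(μ.prod μ)) = ∫ p, F₂' p ∂(μ.prod μ) := by
    have : ∀ p : ℝ × ℝ, F₂ p = F₂' p.swap := fun p => by
      simp only [hF₂def, hF₂'def, Set.indicator_apply, Set.mem_setOf_eq, Prod.fst_swap,
        Prod.snd_swap]
    simp_rw [this]
    exact integral_prod_swap F₂'
  -- diagonal is null
  have hdiagnull : (μ.prod μ) {p : ℝ × ℝ | p.2 = p.1} = 0 := by
    rw [Measure.prod_apply (measurableSet_eq_fun measurable_snd measurable_fst)]
    have : ∀ x : ℝ, μ {r : ℝ | r = x} = 0 := fun x => by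
      refine le_antisymm (le_trans (Measure.restrict_le_self _) ?_) zero_le
      simp [Set.setOf_eq_eq_singleton]
    simp only [Set.preimage_setOf_eq]
    simp [this]
  have hae : ∀ᵐ p ∂(μ.prod μ), p.2 ≠ p.1 := by
    rw [ae_iff]
    simpa using hdiagnull
  -- sum of the two halves is the full integral
  have hsum : (∫ p, F₁ p ∂(μ.prod μ)) + (∫ p, F₂' p ∂(μ.prod μ)) =
      ∫ p, ⟪u p.1, w p.2⟫ ∂(μ.prod μ) := by
    rw [← integral_add hF₁ hF₂']
    refine integral_congr_ae ?_
    filter_upwards [hae] with p hp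
    rcases lt_or_gt_of_ne hp with h | h
    · simp [hF₁def, hF₂'def, Set.indicator_apply, h.le, not_le.mpr h]
    · simp [hF₁def, hF₂'def, Set.indicator_apply, h.le, not_le.mpr h]
  -- the full integral is the product of the integrals
  have hfull : (∫ p, ⟪u p.1, w p.2⟫ ∂(μ.prod μ)) = ⟪∫ s in Ioc 0 t, u s, ∫ s in Ioc 0 t, w s⟫ := by
    rw [integral_prod _ hG]
    have h1 : ∀ s : ℝ, (∫ r, ⟪u s, w r⟫ ∂μ) = ⟪u s, ∫ r, w r ∂μ⟫ := fun s => integral_inner hw _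
    simp_rw [h1]
    rw [real_inner_comm, ← integral_inner hu]
    simp_rw [real_inner_comm]
    rfl
  -- integrability conclusion
  have hint : Integrable (fun s => ⟪u s, ∫ r in Ioc 0 s, w r⟫) μ := by
    refine (hF₁.integral_prod_left).congr ?_
    filter_upwards [ae_restrict_mem measurableSet_Ioc] with s hs
    have h1 : ⟪u s, ∫ r in Ioc 0 s, w r⟫ = ∫ r in Ioc 0 s, ⟪u s, w r⟫ :=
      (integral_inner (hw.mono_set (Ioc_subset_Ioc_right hs.2)) (u s)).symm
    have h2 : ∀ r : ℝ, F₁ (s, r) = (Iic s).indicator (fun r => ⟪u s, w r⟫) r := fun r => by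
      simp only [hF₁def, Set.indicator_apply, Set.mem_setOf_eq, Set.mem_Iic]
    have h3 : (∫ r, F₁ (s, r) ∂μ) = ∫ r in Ioc 0 t ∩ Iic s, ⟪u s, w r⟫ := by
      rw [hμdef]; simp_rw [h2]; exact setIntegral_indicator measurableSet_Iic
    have h4 : Ioc 0 t ∩ Iic s = Ioc 0 s := by
      ext r; simp only [Set.mem_inter_iff, Set.mem_Ioc, Set.mem_Iic]
      exact ⟨fun ⟨⟨h5, _⟩, h7⟩ => ⟨h5, h7⟩, fun ⟨h5, h6⟩ => ⟨⟨h5, h6.trans hs.2⟩, h6⟩⟩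
    rw [h3, h4, ← h1]
  exact ⟨hint, by rw [eqn1, eqn2, dbl1, dbl2, swap2, hsum, hfull]⟩


lemma lemA {t : ℝ} {v : ℝ → E3} (hv : IntegrableOn v (Ioc 0 t)) (x0 : E3) :
    ‖x0 + ∫ s in Ioc 0 t, v s‖ ^ 2
      = ‖x0‖ ^ 2 + 2 * ∫ s in Ioc 0 t, ⟪v s, x0 + ∫ r in Ioc 0 s, v r⟫ := by
  obtain ⟨hint, heq⟩ := lemT hv hv
  have hVV : ⟪∫ s in Ioc 0 t, v s, ∫ s in Ioc 0 t, v s⟫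
      = 2 * ∫ s in Ioc 0 t, ⟪v s, ∫ r in Ioc 0 s, v r⟫ := by
    rw [heq]
    have : (∫ s in Ioc 0 t, ⟪∫ r in Ioc 0 s, v r, v s⟫)
        = ∫ s in Ioc 0 t, ⟪v s, ∫ r in Ioc 0 s, v r⟫ := by
      simp_rw [real_inner_comm]
    rw [this]; ring
  have hx0V : ⟪x0, ∫ s in Ioc 0 t, v s⟫ = ∫ s in Ioc 0 t, ⟪v s, x0⟫ := by
    rw [← integral_inner hv x0]
    simp_rw [real_inner_comm]
  have hx0int : Integrable (fun s => ⟪v s, x0⟫) (volume.restrict (Ioc 0 t)) := by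
    refine Integrable.mono' (hv.norm.mul_const ‖x0‖)
      (hv.aestronglyMeasurable.inner aestronglyMeasurable_const)
      (Eventually.of_forall fun s => norm_inner_le_norm _ _)
  have hsplit : (∫ s in Ioc 0 t, ⟪v s, x0 + ∫ r in Ioc 0 s, v r⟫)
      = (∫ s in Ioc 0 t, ⟪v s, x0⟫) + ∫ s in Ioc 0 t, ⟪v s, ∫ r in Ioc 0 s, v r⟫ := by
    rw [← integral_add hx0int hint]
    simp_rw [inner_add_right]
  have hVV' : ‖∫ s in Ioc 0 t, v s‖ ^ 2 = 2 * ∫ s in Ioc 0 t, ⟪v s, ∫ r in Ioc 0 s, v r⟫ := by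
    rw [← real_inner_self_eq_norm_sq]; exact hVV
  rw [@norm_add_sq_real, hsplit, hx0V, hVV']
  ring


lemma norm_conserved {L : ℝ} (hL : 0 ≤ L) {β ωf : ℝ → E3}
    (hint : IntervalIntegrable (fun s => cross3 (ωf s) (β s)) volume 0 L)
    (hrep : ∀ t ∈ Icc 0 L, β t = β 0 + ∫ s in (0:ℝ)..t, cross3 (ωf s) (β s)) :
    ∀ t ∈ Icc 0 L, ‖β t‖ = ‖β 0‖ := by
  have hrep' : ∀ t ∈ Icc (0:ℝ) L, β t = β 0 + ∫ s in Ioc 0 t, cross3 (ωf s) (β s) := by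
    intro t ht
    rw [hrep t ht, intervalIntegral.integral_of_le ht.1]
  intro t ht
  have hi : IntegrableOn (fun s => cross3 (ωf s) (β s)) (Ioc 0 t) :=
    ((intervalIntegrable_iff_integrableOn_Ioc_of_le hL).1 hint).mono_set
      (Ioc_subset_Ioc_right ht.2)
  have hA := lemA hi (β 0)
  have hzero : ∀ s ∈ Ioc (0:ℝ) t,
      (fun s => ⟪cross3 (ωf s) (β s), β 0 + ∫ r in Ioc 0 s, cross3 (ωf r) (β r)⟫) s
        = (fun _ : ℝ => (0:ℝ)) s := by
    intro s hs
    have hsIcc : s ∈ Icc (0:ℝ) L := ⟨hs.1.le, hs.2.trans ht.2⟩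
    simp only
    rw [← hrep' s hsIcc]
    exact inner_cross3_self _ _
  rw [setIntegral_congr_fun measurableSet_Ioc hzero] at hA
  simp only [integral_zero, mul_zero, add_zero] at hA
  rw [← hrep' t ht] at hA
  exact le_antisymm (le_of_sq_le_sq (norm_nonneg _) (norm_nonneg _) hA.le)
    (le_of_sq_le_sq (norm_nonneg _) (norm_nonneg _) hA.ge)

lemma finmeas_Ioc (a b : ℝ) : IsFiniteMeasure (volume.restrict (Ioc a b)) :=
  ⟨by rw [Measure.restrict_apply_univ, Real.volume_Ioc]; exact ENNReal.ofReal_lt_top⟩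

lemma finmeas_Ioo (a b : ℝ) : IsFiniteMeasure (volume.restrict (Ioo a b)) :=
  ⟨by rw [Measure.restrict_apply_univ, Real.volume_Ioo]; exact ENNReal.ofReal_lt_top⟩


end Stmt0Aux

open Stmt0Aux

set_option maxHeartbeats 1000000 in
/-- stability of solutions of `b' = ω × b` under weak `L²` convergence of `ω`. -/
theorem stmt0 (L : ℝ) (hL : 0 < L)
    (ωN : ℕ → ℝ → E3) (ω : ℝ → E3)
    (hωN : ∀ n, MemLp (ωN n) 2 (volume.restrict (Ioo 0 L)))
    (hω : MemLp ω 2 (volume.restrict (Ioo 0 L)))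
    (hweak : ∀ g : ℝ → E3, MemLp g 2 (volume.restrict (Ioo 0 L)) →
      Tendsto (fun n => ∫ t in Ioo 0 L, ⟪ωN n t, g t⟫) atTop
        (𝓝 (∫ t in Ioo 0 L, ⟪ω t, g t⟫)))
    (hbdd : ∃ C : ℝ, ∀ n, ∫ t in Ioo 0 L, ‖ωN n t‖ ^ 2 ≤ C)
    (bN : ℕ → ℝ → E3) (b : ℝ → E3)
    -- each `bN n` is absolutely continuous on `[0,L]` with `bN'(t) = ωN(t) × bN(t)` a.e.:
    (hbNint : ∀ n, IntervalIntegrable (fun s => cross3 (ωN n s) (bN n s)) volume 0 L)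
    (hbN : ∀ n, ∀ t ∈ Icc 0 L, bN n t = bN n 0 + ∫ s in (0:ℝ)..t, cross3 (ωN n s) (bN n s))
    -- `b` is absolutely continuous on `[0,L]` with `b'(t) = ω(t) × b(t)` a.e.:
    (hbint : IntervalIntegrable (fun s => cross3 (ω s) (b s)) volume 0 L)
    (hb : ∀ t ∈ Icc 0 L, b t = b 0 + ∫ s in (0:ℝ)..t, cross3 (ω s) (b s))
    (h0 : Tendsto (fun n => bN n 0) atTop (𝓝 (b 0))) :
    Tendsto (fun n => ∫ t in Ioo 0 L, ‖bN n t - b t‖ ^ 2) atTop (𝓝 0) := by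
  classical
  obtain ⟨C, hC⟩ := hbdd
  haveI := Stmt0Aux.finmeas_Ioo (0:ℝ) L
  haveI := Stmt0Aux.finmeas_Ioc (0:ℝ) L
  have hres : volume.restrict (Ioo (0:ℝ) L) = volume.restrict (Ioc (0:ℝ) L) :=
    Measure.restrict_congr_set Ioo_ae_eq_Ioc
  set C' : ℝ := max C 0 with hC'def
  have hC'0 : 0 ≤ C' := le_max_right _ _
  have hC' : ∀ n, ∫ t in Ioo 0 L, ‖ωN n t‖ ^ 2 ≤ C' := fun n => (hC n).trans (le_max_left _ _)
  set Iω : ℝ := ∫ t in Ioo 0 L, ‖ω t‖ ^ 2 with hIωdef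
  have hIω0 : 0 ≤ Iω := setIntegral_nonneg measurableSet_Ioo fun t _ => sq_nonneg _
  -- integrability of ωN, ω
  have hωNi : ∀ n, IntegrableOn (ωN n) (Ioc 0 L) := fun n =>
    (hres ▸ hωN n).integrable one_le_two
  have hωi : IntegrableOn ω (Ioc 0 L) := (hres ▸ hω).integrable one_le_two
  have hωNsq : ∀ n, IntegrableOn (fun s => ‖ωN n s‖ ^ 2) (Ioo 0 L) := fun n =>
    (hωN n).norm.integrable_sq
  have hωsq : IntegrableOn (fun s => ‖ω s‖ ^ 2) (Ioo 0 L) := hω.norm.integrable_sq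
  -- representations
  have hbrep : ∀ t ∈ Icc (0:ℝ) L, b t = b 0 + ∫ s in Ioc 0 t, cross3 (ω s) (b s) := fun t ht => by
    rw [hb t ht, intervalIntegral.integral_of_le ht.1]
  have hbNrep : ∀ n, ∀ t ∈ Icc (0:ℝ) L,
      bN n t = bN n 0 + ∫ s in Ioc 0 t, cross3 (ωN n s) (bN n s) := fun n t ht => by
    rw [hbN n t ht, intervalIntegral.integral_of_le ht.1]
  have hbi : IntegrableOn (fun s => cross3 (ω s) (b s)) (Ioc 0 L) :=
    (intervalIntegrable_iff_integrableOn_Ioc_of_le hL.le).1 hbint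
  have hbNi : ∀ n, IntegrableOn (fun s => cross3 (ωN n s) (bN n s)) (Ioc 0 L) := fun n =>
    (intervalIntegrable_iff_integrableOn_Ioc_of_le hL.le).1 (hbNint n)
  -- continuity / measurability of b, bN
  have hbcont : ContinuousOn b (Icc 0 L) := by
    have h1 : ContinuousOn (fun t => ∫ s in Ioc (0:ℝ) t, cross3 (ω s) (b s)) (Icc 0 L) :=
      intervalIntegral.continuousOn_primitive ((integrableOn_Icc_iff_integrableOn_Ioc (by simp)).2 hbi)
    exact (continuousOn_const.add h1).congr fun t ht => hbrep t ht
  have hbNcont : ∀ n, ContinuousOn (bN n) (Icc 0 L) := by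
    intro n
    have h1 : ContinuousOn (fun t => ∫ s in Ioc (0:ℝ) t, cross3 (ωN n s) (bN n s)) (Icc 0 L) :=
      intervalIntegral.continuousOn_primitive ((integrableOn_Icc_iff_integrableOn_Ioc (by simp)).2 (hbNi n))
    exact (continuousOn_const.add h1).congr fun t ht => hbNrep n t ht
  have hbmeasIoo : AEStronglyMeasurable b (volume.restrict (Ioo 0 L)) :=
    (hbcont.mono Ioo_subset_Icc_self).aestronglyMeasurable measurableSet_Ioo
  have hbNmeasIoo : ∀ n, AEStronglyMeasurable (bN n) (volume.restrict (Ioo 0 L)) := fun n =>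
    ((hbNcont n).mono Ioo_subset_Icc_self).aestronglyMeasurable measurableSet_Ioo
  -- uniform bound R0
  have hnormb : ∀ t ∈ Icc (0:ℝ) L, ‖b t‖ = ‖b 0‖ := norm_conserved hL.le hbint hb
  have hnormbN : ∀ n, ∀ t ∈ Icc (0:ℝ) L, ‖bN n t‖ = ‖bN n 0‖ := fun n =>
    norm_conserved hL.le (hbNint n) (hbN n)
  obtain ⟨R1, hR1⟩ : BddAbove (range fun n => ‖bN n 0‖) := h0.norm.bddAbove_range
  set R0 : ℝ := max R1 ‖b 0‖ with hR0def
  have hR00 : 0 ≤ R0 := le_trans (norm_nonneg _) (le_max_right _ _)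
  have hbR : ∀ t ∈ Icc (0:ℝ) L, ‖b t‖ ≤ R0 := fun t ht =>
    (hnormb t ht).le.trans (le_max_right _ _)
  have hbNR : ∀ n, ∀ t ∈ Icc (0:ℝ) L, ‖bN n t‖ ≤ R0 := fun n t ht => by
    rw [hnormbN n t ht]; exact le_trans (hR1 (mem_range_self n)) (le_max_left _ _)
  -- ψ, ρ, Φ
  set ψ : ℕ → ℝ → E3 := fun n s => cross3 (ωN n s) (b s) - cross3 (ω s) (b s) with hψdef
  set ρ : ℕ → ℝ → E3 := fun n s => cross3 (ωN n s) (bN n s) - cross3 (ω s) (b s) with hρdef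
  set Φ : ℕ → ℝ → E3 := fun n t => ∫ s in Ioc 0 t, ψ n s with hΦdef
  have hρi : ∀ n, IntegrableOn (ρ n) (Ioc 0 L) := fun n => (hbNi n).sub hbi
  have hψi : ∀ n, IntegrableOn (ψ n) (Ioc 0 L) := by
    intro n
    have hb' : AEStronglyMeasurable b (volume.restrict (Ioc 0 L)) := hres ▸ hbmeasIoo
    have hω' : AEStronglyMeasurable (ωN n) (volume.restrict (Ioc 0 L)) := hres ▸ (hωN n).1
    have hcross : AEStronglyMeasurable (fun s => cross3 (ωN n s) (b s))
        (volume.restrict (Ioc 0 L)) :=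
      continuous_cross3.comp_aestronglyMeasurable (hω'.prodMk hb')
    have h1 : IntegrableOn (fun s => cross3 (ωN n s) (b s)) (Ioc 0 L) := by
      refine Integrable.mono' ((hωNi n).norm.mul_const R0) hcross ?_
      filter_upwards [ae_restrict_mem measurableSet_Ioc] with s hs
      exact (norm_cross3_le _ _).trans
        (mul_le_mul_of_nonneg_left (hbR s ⟨hs.1.le, hs.2⟩) (norm_nonneg _))
    exact h1.sub hbi
  have hψbound : ∀ n, ∀ s ∈ Icc (0:ℝ) L, ‖ψ n s‖ ≤ R0 * (‖ωN n s‖ + ‖ω s‖) := by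
    intro n s hs
    refine (norm_sub_le _ _).trans ?_
    have h1 := (norm_cross3_le (ωN n s) (b s)).trans
      (mul_le_mul_of_nonneg_left (hbR s hs) (norm_nonneg (ωN n s)))
    have h2 := (norm_cross3_le (ω s) (b s)).trans
      (mul_le_mul_of_nonneg_left (hbR s hs) (norm_nonneg (ω s)))
    calc ‖cross3 (ωN n s) (b s)‖ + ‖cross3 (ω s) (b s)‖ ≤ ‖ωN n s‖ * R0 + ‖ω s‖ * R0 :=
          add_le_add h1 h2
      _ = R0 * (‖ωN n s‖ + ‖ω s‖) := by ring
  have hρbound : ∀ n, ∀ s ∈ Icc (0:ℝ) L, ‖ρ n s‖ ≤ R0 * (‖ωN n s‖ + ‖ω s‖) := by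
    intro n s hs
    refine (norm_sub_le _ _).trans ?_
    have h1 := (norm_cross3_le (ωN n s) (bN n s)).trans
      (mul_le_mul_of_nonneg_left (hbNR n s hs) (norm_nonneg (ωN n s)))
    have h2 := (norm_cross3_le (ω s) (b s)).trans
      (mul_le_mul_of_nonneg_left (hbR s hs) (norm_nonneg (ω s)))
    calc ‖cross3 (ωN n s) (bN n s)‖ + ‖cross3 (ω s) (b s)‖ ≤ ‖ωN n s‖ * R0 + ‖ω s‖ * R0 :=
          add_le_add h1 h2
      _ = R0 * (‖ωN n s‖ + ‖ω s‖) := by ring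
  -- Cauchy-Schwarz on subintervals
  have haesub : ∀ t' t : ℝ, 0 ≤ t' → t ≤ L → Ioc t' t ≤ᵐ[volume] Ioo (0:ℝ) L := by
    intro t' t h0' htL
    refine ae_le_set.2 (measure_mono_null ?_ (measure_singleton L))
    intro x hx
    rcases hx with ⟨⟨hx1, hx2⟩, hx3⟩
    simp only [mem_Ioo, not_and, not_lt] at hx3
    have hx0 : 0 < x := lt_of_le_of_lt h0' hx1
    have hxL : x = L := le_antisymm (hx2.trans htL) (hx3 hx0)
    simp [hxL]
  have hCSN : ∀ n, ∀ t' t : ℝ, 0 ≤ t' → t' ≤ t → t ≤ L →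
      ∫ s in Ioc t' t, ‖ωN n s‖ ≤ Real.sqrt (t - t') * Real.sqrt C' := by
    intro n t' t h0' htt' htL
    haveI := Stmt0Aux.finmeas_Ioc t' t
    have hmem : MemLp (ωN n) 2 (volume.restrict (Ioc t' t)) :=
      (hres ▸ hωN n).mono_measure (Measure.restrict_mono (Ioc_subset_Ioc h0' htL) le_rfl)
    have h1 := cs_lemma hmem
    have hvol : (volume (Ioc t' t)).toReal = t - t' := by
      rw [Real.volume_Ioc, ENNReal.toReal_ofReal (by linarith)]
    have h2 : ∫ s in Ioc t' t, ‖ωN n s‖ ^ 2 ≤ C' := by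
      refine le_trans (setIntegral_mono_set (hωNsq n)
        (Eventually.of_forall fun s => sq_nonneg _) (haesub t' t h0' htL)) (hC' n)
    refine h1.trans ?_
    rw [hvol]
    exact mul_le_mul_of_nonneg_left (Real.sqrt_le_sqrt h2) (Real.sqrt_nonneg _)
  have hCSω : ∀ t' t : ℝ, 0 ≤ t' → t' ≤ t → t ≤ L →
      ∫ s in Ioc t' t, ‖ω s‖ ≤ Real.sqrt (t - t') * Real.sqrt Iω := by
    intro t' t h0' htt' htL
    haveI := Stmt0Aux.finmeas_Ioc t' t
    have hmem : MemLp ω 2 (volume.restrict (Ioc t' t)) :=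
      (hres ▸ hω).mono_measure (Measure.restrict_mono (Ioc_subset_Ioc h0' htL) le_rfl)
    have h1 := cs_lemma hmem
    have hvol : (volume (Ioc t' t)).toReal = t - t' := by
      rw [Real.volume_Ioc, ENNReal.toReal_ofReal (by linarith)]
    have h2 : ∫ s in Ioc t' t, ‖ω s‖ ^ 2 ≤ Iω :=
      setIntegral_mono_set hωsq (Eventually.of_forall fun s => sq_nonneg _)
        (haesub t' t h0' htL)
    refine h1.trans ?_
    rw [hvol]
    exact mul_le_mul_of_nonneg_left (Real.sqrt_le_sqrt h2) (Real.sqrt_nonneg _)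
  -- Hölder modulus for Φ
  have hHol : ∀ n, ∀ t' t : ℝ, 0 ≤ t' → t' ≤ t → t ≤ L →
      ‖Φ n t - Φ n t'‖ ≤ (R0 * (Real.sqrt C' + Real.sqrt Iω)) * Real.sqrt (t - t') := by
    intro n t' t h0' htt' htL
    have hsub2 : Ioc t' t ⊆ Ioc (0:ℝ) L := Ioc_subset_Ioc h0' htL
    have hint1 : IntegrableOn (ψ n) (Ioc 0 t') :=
      (hψi n).mono_set (Ioc_subset_Ioc le_rfl (htt'.trans htL))
    have hint2 : IntegrableOn (ψ n) (Ioc t' t) := (hψi n).mono_set hsub2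
    have hdiff : Φ n t - Φ n t' = ∫ s in Ioc t' t, ψ n s := by
      have hsplit : (∫ s in Ioc (0:ℝ) t, ψ n s)
          = (∫ s in Ioc (0:ℝ) t', ψ n s) + ∫ s in Ioc t' t, ψ n s := by
        rw [← Ioc_union_Ioc_eq_Ioc h0' htt',
          setIntegral_union (Ioc_disjoint_Ioc_of_le le_rfl) measurableSet_Ioc hint1 hint2]
      simp only [hΦdef]
      rw [hsplit]
      abel
    rw [hdiff]
    have hb1 : ∫ s in Ioc t' t, ‖ψ n s‖ ≤ ∫ s in Ioc t' t, R0 * (‖ωN n s‖ + ‖ω s‖) := by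
      refine integral_mono_ae hint2.norm
        ((((hωNi n).mono_set hsub2).norm.add ((hωi.mono_set hsub2).norm)).const_mul R0) ?_
      filter_upwards [ae_restrict_mem measurableSet_Ioc] with s hs
      exact hψbound n s ⟨h0'.trans hs.1.le, hs.2.trans htL⟩
    calc ‖∫ s in Ioc t' t, ψ n s‖ ≤ ∫ s in Ioc t' t, ‖ψ n s‖ := norm_integral_le_integral_norm _
      _ ≤ ∫ s in Ioc t' t, R0 * (‖ωN n s‖ + ‖ω s‖) := hb1
      _ = R0 * ((∫ s in Ioc t' t, ‖ωN n s‖) + ∫ s in Ioc t' t, ‖ω s‖) := by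
          rw [integral_const_mul,
            integral_add ((hωNi n).mono_set hsub2).norm ((hωi.mono_set hsub2).norm)]
      _ ≤ R0 * (Real.sqrt (t - t') * Real.sqrt C' + Real.sqrt (t - t') * Real.sqrt Iω) :=
          mul_le_mul_of_nonneg_left
            (add_le_add (hCSN n t' t h0' htt' htL) (hCSω t' t h0' htt' htL)) hR00
      _ = (R0 * (Real.sqrt C' + Real.sqrt Iω)) * Real.sqrt (t - t') := by ring
  -- pointwise convergence of Φ
  have hptwise : ∀ p ∈ Icc (0:ℝ) L, Tendsto (fun n => Φ n p) atTop (𝓝 0) := by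
    intro p hp
    have hsubIoo : Ioo (0:ℝ) p ⊆ Ioo (0:ℝ) L := Ioo_subset_Ioo le_rfl hp.2
    have hsubIoc : Ioo (0:ℝ) p ⊆ Ioc (0:ℝ) L := fun x hx => ⟨hx.1, hx.2.le.trans hp.2⟩
    have hcoord : ∀ i : Fin 3, Tendsto (fun n => (Φ n p) i) atTop (𝓝 0) := by
      intro i
      set e : E3 := EuclideanSpace.single i (1:ℝ) with hedef
      set g : ℝ → E3 := fun s => cross3 (b s) e with hgdef
      set G : ℝ → E3 := (Ioo (0:ℝ) p).indicator g with hGdef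
      have hgcont : Continuous fun v : E3 => cross3 v e :=
        continuous_cross3.comp (continuous_id.prodMk continuous_const)
      have hgmeas : AEStronglyMeasurable g (volume.restrict (Ioo 0 L)) :=
        hgcont.comp_aestronglyMeasurable hbmeasIoo
      have hgbound : ∀ s ∈ Icc (0:ℝ) L, ‖g s‖ ≤ R0 := by
        intro s hs
        have h1 : ‖e‖ = 1 := by rw [hedef, EuclideanSpace.norm_single, norm_one]
        calc ‖g s‖ ≤ ‖b s‖ * ‖e‖ := norm_cross3_le _ _
          _ = ‖b s‖ := by rw [h1, mul_one]
          _ ≤ R0 := hbR s hs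
      have hGmem : MemLp G 2 (volume.restrict (Ioo 0 L)) := by
        refine MemLp.of_bound (hgmeas.indicator measurableSet_Ioo) R0 ?_
        filter_upwards [ae_restrict_mem measurableSet_Ioo] with s hs
        by_cases hsp : s ∈ Ioo (0:ℝ) p
        · rw [hGdef, Set.indicator_of_mem hsp]
          exact hgbound s ⟨hs.1.le, hs.2.le⟩
        · rw [hGdef, Set.indicator_of_notMem hsp]
          simpa using hR00
      have hrw : ∀ f : ℝ → E3,
          (∫ s in Ioo (0:ℝ) L, ⟪f s, G s⟫) = ∫ s in Ioo (0:ℝ) p, ⟪f s, g s⟫ := by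
        intro f
        have h1 : ∀ s : ℝ, ⟪f s, G s⟫ = (Ioo (0:ℝ) p).indicator (fun s => ⟪f s, g s⟫) s := by
          intro s
          by_cases hsp : s ∈ Ioo (0:ℝ) p
          · rw [hGdef, Set.indicator_of_mem hsp, Set.indicator_of_mem hsp]
          · rw [hGdef, Set.indicator_of_notMem hsp, Set.indicator_of_notMem hsp,
              inner_zero_right]
        simp_rw [h1]
        rw [setIntegral_indicator measurableSet_Ioo, inter_eq_self_of_subset_right hsubIoo]
      have hweak' : Tendsto (fun n => ∫ s in Ioo (0:ℝ) p, ⟪ωN n s, g s⟫) atTop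
          (𝓝 (∫ s in Ioo (0:ℝ) p, ⟪ω s, g s⟫)) := by
        have h := hweak G hGmem
        rw [hrw ω] at h
        exact h.congr fun n => hrw (ωN n)
      have hle : volume.restrict (Ioo (0:ℝ) p) ≤ volume.restrict (Ioo (0:ℝ) L) :=
        Measure.restrict_mono hsubIoo le_rfl
      have hiωg : Integrable (fun s => ⟪ω s, g s⟫) (volume.restrict (Ioo 0 p)) := by
        refine Integrable.mono' ((hωi.mono_set hsubIoc).norm.mul_const R0)
          ((hω.1.mono_measure hle).inner (hgmeas.mono_measure hle)) ?_
        filter_upwards [ae_restrict_mem measurableSet_Ioo] with s hs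
        exact (norm_inner_le_norm _ _).trans
          (mul_le_mul_of_nonneg_left (hgbound s ⟨hs.1.le, (hs.2.le.trans hp.2)⟩) (norm_nonneg _))
      have hiNg : ∀ n, Integrable (fun s => ⟪ωN n s, g s⟫) (volume.restrict (Ioo 0 p)) := by
        intro n
        refine Integrable.mono' (((hωNi n).mono_set hsubIoc).norm.mul_const R0)
          (((hωN n).1.mono_measure hle).inner (hgmeas.mono_measure hle)) ?_
        filter_upwards [ae_restrict_mem measurableSet_Ioo] with s hs
        exact (norm_inner_le_norm _ _).trans
          (mul_le_mul_of_nonneg_left (hgbound s ⟨hs.1.le, (hs.2.le.trans hp.2)⟩) (norm_nonneg _))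
      have hproj : ∀ n, (Φ n p) i
          = (∫ s in Ioo (0:ℝ) p, ⟪ωN n s, g s⟫) - ∫ s in Ioo (0:ℝ) p, ⟪ω s, g s⟫ := by
        intro n
        have hψp : IntegrableOn (ψ n) (Ioc 0 p) := (hψi n).mono_set (Ioc_subset_Ioc le_rfl hp.2)
        have h1 : (Φ n p) i = ∫ s in Ioc (0:ℝ) p, (ψ n s) i := by
          simp only [hΦdef]
          have h := ContinuousLinearMap.integral_comp_comm (𝕜 := ℝ) (EuclideanSpace.proj i) hψp
          simpa using h.symm
        rw [h1]
        have h2 : ∀ s : ℝ, (ψ n s) i = ⟪ωN n s, g s⟫ - ⟪ω s, g s⟫ := by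
          intro s
          have ha := cross3_apply_inner (ωN n s) (b s) i
          have hb' := cross3_apply_inner (ω s) (b s) i
          simp only [hψdef, hgdef, hedef]
          rw [PiLp.sub_apply, ha, hb']
        simp_rw [h2]
        rw [integral_Ioc_eq_integral_Ioo, integral_sub (hiNg n) hiωg]
      have hlim := hweak'.sub_const (∫ s in Ioo (0:ℝ) p, ⟪ω s, g s⟫)
      rw [sub_self] at hlim
      exact hlim.congr fun n => (hproj n).symm
    rw [tendsto_zero_iff_norm_tendsto_zero]
    have habs : Tendsto (fun n => |(Φ n p) 0| + |(Φ n p) 1| + |(Φ n p) 2|) atTop (𝓝 0) := by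
      have h0' := (hcoord 0).abs
      have h1' := (hcoord 1).abs
      have h2' := (hcoord 2).abs
      simpa using (h0'.add h1').add h2'
    exact squeeze_zero (fun n => norm_nonneg _) (fun n => norm_le_sum3 _) habs
  -- uniform convergence of Φ
  have hunif : ∀ ε : ℝ, 0 < ε → ∀ᶠ n in atTop, ∀ t ∈ Icc (0:ℝ) L, ‖Φ n t‖ ≤ ε := by
    intro ε hε
    set KA : ℝ := R0 * (Real.sqrt C' + Real.sqrt Iω) with hKAdef
    have hKA0 : 0 ≤ KA := mul_nonneg hR00 (by positivity)
    set KA' : ℝ := KA + 1 with hKA'def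
    have hKA'pos : 0 < KA' := by linarith
    set δ : ℝ := (ε / (2 * KA')) ^ 2 with hδdef
    have hδpos : 0 < δ := by positivity
    have hsqδ : Real.sqrt δ = ε / (2 * KA') := Real.sqrt_sq (by positivity)
    set m : ℕ := ⌈L / δ⌉₊ with hmdef
    have hgrid : ∀ᶠ n in atTop, ∀ j ∈ Finset.range (m + 1),
        ‖Φ n (min ((j:ℝ) * δ) L)‖ ≤ ε / 2 := by
      rw [Filter.eventually_all_finset]
      intro j _
      have hmem : min ((j:ℝ) * δ) L ∈ Icc (0:ℝ) L :=
        ⟨le_min (by positivity) hL.le, min_le_right _ _⟩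
      refine Tendsto.eventually_le_const (by linarith : (0:ℝ) < ε / 2) ?_
      simpa using (hptwise _ hmem).norm
    filter_upwards [hgrid] with n hn t ht
    set j : ℕ := ⌊t / δ⌋₊ with hjdef
    have htδ : 0 ≤ t / δ := div_nonneg ht.1 hδpos.le
    have hj1 : (j:ℝ) * δ ≤ t := by
      have h := Nat.floor_le htδ
      calc (j:ℝ) * δ ≤ (t / δ) * δ := mul_le_mul_of_nonneg_right h hδpos.le
        _ = t := div_mul_cancel₀ t hδpos.ne'
    have hj2 : t - (j:ℝ) * δ ≤ δ := by
      have h := Nat.lt_floor_add_one (t / δ)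
      have h2 : t < ((j:ℝ) + 1) * δ := by
        rw [← div_lt_iff₀ hδpos]
        exact_mod_cast h
      linarith
    have hjm : j ∈ Finset.range (m + 1) := by
      rw [Finset.mem_range, Nat.lt_succ_iff, hjdef, hmdef]
      refine le_trans (Nat.floor_mono ?_) (Nat.floor_le_ceil _)
      gcongr
      exact ht.2
    have hq := hn j hjm
    have hmin : min ((j:ℝ) * δ) L = (j:ℝ) * δ := min_eq_left (hj1.trans ht.2)
    rw [hmin] at hq
    have hHol' := hHol n ((j:ℝ) * δ) t (by positivity) hj1 ht.2
    have htri : ‖Φ n t‖ ≤ ‖Φ n t - Φ n ((j:ℝ) * δ)‖ + ‖Φ n ((j:ℝ) * δ)‖ := by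
      simpa [sub_add_cancel] using norm_add_le (Φ n t - Φ n ((j:ℝ) * δ)) (Φ n ((j:ℝ) * δ))
    have hmid : KA * Real.sqrt (t - (j:ℝ) * δ) ≤ KA' * Real.sqrt δ :=
      mul_le_mul (by linarith) (Real.sqrt_le_sqrt hj2) (Real.sqrt_nonneg _) (by linarith)
    have hfin : KA' * Real.sqrt δ = ε / 2 := by
      rw [hsqδ]
      field_simp
    calc ‖Φ n t‖ ≤ ‖Φ n t - Φ n ((j:ℝ) * δ)‖ + ‖Φ n ((j:ℝ) * δ)‖ := htri
      _ ≤ KA * Real.sqrt (t - (j:ℝ) * δ) + ε / 2 := add_le_add hHol' hq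
      _ ≤ KA' * Real.sqrt δ + ε / 2 := add_le_add_left hmid _
      _ = ε := by rw [hfin]; ring
  -- bound on ∫‖ρ n‖
  set Kρ : ℝ := R0 * (Real.sqrt L * (Real.sqrt C' + Real.sqrt Iω)) with hKρdef
  have hKρ0 : 0 ≤ Kρ := by positivity
  have hKn : ∀ n, ∫ s in Ioc 0 L, ‖ρ n s‖ ≤ Kρ := by
    intro n
    have hle : ∫ s in Ioc 0 L, ‖ρ n s‖ ≤ ∫ s in Ioc (0:ℝ) L, R0 * (‖ωN n s‖ + ‖ω s‖) := by
      refine integral_mono_ae (hρi n).norm (((hωNi n).norm.add hωi.norm).const_mul R0) ?_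
      filter_upwards [ae_restrict_mem measurableSet_Ioc] with s hs
      exact hρbound n s ⟨hs.1.le, hs.2⟩
    have h1 := hCSN n 0 L le_rfl hL.le le_rfl
    have h2 := hCSω 0 L le_rfl hL.le le_rfl
    rw [sub_zero] at h1 h2
    refine hle.trans ?_
    rw [integral_const_mul, integral_add (hωNi n).norm hωi.norm, hKρdef]
    calc R0 * ((∫ s in Ioc (0:ℝ) L, ‖ωN n s‖) + ∫ s in Ioc (0:ℝ) L, ‖ω s‖)
        ≤ R0 * (Real.sqrt L * Real.sqrt C' + Real.sqrt L * Real.sqrt Iω) :=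
          mul_le_mul_of_nonneg_left (add_le_add h1 h2) hR00
      _ = R0 * (Real.sqrt L * (Real.sqrt C' + Real.sqrt Iω)) := by ring
  -- key estimate
  have hkey : ∀ n (Q : ℝ), 0 ≤ Q → (∀ t ∈ Icc (0:ℝ) L, ‖Φ n t‖ ≤ Q) →
      ∀ t ∈ Icc (0:ℝ) L,
        ‖bN n t - b t‖ ^ 2 ≤ ‖bN n 0 - b 0‖ ^ 2 + 2 * Q * (‖bN n 0 - b 0‖ + 2 * Kρ) := by
    intro n Q hQ0 hQ t ht
    set x0 : E3 := bN n 0 - b 0 with hx0def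
    have hρt : IntegrableOn (ρ n) (Ioc 0 t) := (hρi n).mono_set (Ioc_subset_Ioc le_rfl ht.2)
    have hψt : IntegrableOn (ψ n) (Ioc 0 t) := (hψi n).mono_set (Ioc_subset_Ioc le_rfl ht.2)
    have hdrep : ∀ s ∈ Icc (0:ℝ) L, bN n s - b s = x0 + ∫ r in Ioc 0 s, ρ n r := by
      intro s hs
      have h1 : (∫ r in Ioc (0:ℝ) s, ρ n r)
          = (∫ r in Ioc (0:ℝ) s, cross3 (ωN n r) (bN n r))
            - ∫ r in Ioc (0:ℝ) s, cross3 (ω r) (b r) := by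
        simp only [hρdef]
        exact integral_sub ((hbNi n).mono_set (Ioc_subset_Ioc le_rfl hs.2))
          (hbi.mono_set (Ioc_subset_Ioc le_rfl hs.2))
      rw [hbNrep n s hs, hbrep s hs, hx0def, h1]
      abel
    have hA := lemA hρt x0
    rw [← hdrep t ht] at hA
    have hcongr : ∀ s ∈ Ioc (0:ℝ) t,
        (fun s => ⟪ρ n s, x0 + ∫ r in Ioc 0 s, ρ n r⟫) s
          = (fun s => ⟪ψ n s, x0 + ∫ r in Ioc 0 s, ρ n r⟫) s := by
      intro s hs
      have hsIcc : s ∈ Icc (0:ℝ) L := ⟨hs.1.le, hs.2.trans ht.2⟩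
      simp only
      rw [← hdrep s hsIcc]
      simp only [hρdef, hψdef]
      exact key_inner _ _ _ _
    rw [setIntegral_congr_fun measurableSet_Ioc hcongr] at hA
    have hx0i : Integrable (fun s => ⟪ψ n s, x0⟫) (volume.restrict (Ioc 0 t)) := by
      refine Integrable.mono' (hψt.norm.mul_const ‖x0‖)
        (hψt.aestronglyMeasurable.inner aestronglyMeasurable_const)
        (Eventually.of_forall fun s => norm_inner_le_norm _ _)
    have hTψρ := lemT hψt hρt
    have hsplit : (∫ s in Ioc 0 t, ⟪ψ n s, x0 + ∫ r in Ioc 0 s, ρ n r⟫)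
        = (∫ s in Ioc 0 t, ⟪ψ n s, x0⟫)
          + ∫ s in Ioc 0 t, ⟪ψ n s, ∫ r in Ioc 0 s, ρ n r⟫ := by
      rw [← integral_add hx0i hTψρ.1]
      simp_rw [inner_add_right]
    have e1 : (∫ s in Ioc 0 t, ⟪ψ n s, x0⟫) = ⟪Φ n t, x0⟫ := by
      simp only [hΦdef]
      rw [real_inner_comm, ← integral_inner hψt]
      simp_rw [real_inner_comm]
    have e2 : (∫ s in Ioc 0 t, ⟪ψ n s, ∫ r in Ioc 0 s, ρ n r⟫)
        = ⟪Φ n t, ∫ s in Ioc 0 t, ρ n s⟫ - ∫ s in Ioc 0 t, ⟪Φ n s, ρ n s⟫ := by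
      have h2 := hTψρ.2
      simp only [hΦdef]
      linarith
    have hΦt : ‖Φ n t‖ ≤ Q := hQ t ht
    have hρtot : (∫ s in Ioc (0:ℝ) t, ‖ρ n s‖) ≤ Kρ := by
      refine le_trans (setIntegral_mono_set (hρi n).norm
        (Eventually.of_forall fun s => norm_nonneg _)
        (HasSubset.Subset.eventuallyLE (Ioc_subset_Ioc le_rfl ht.2))) (hKn n)
    have hVρnorm : ‖∫ s in Ioc (0:ℝ) t, ρ n s‖ ≤ Kρ :=
      (norm_integral_le_integral_norm _).trans hρtot
    have hb3 : |∫ s in Ioc (0:ℝ) t, ⟪Φ n s, ρ n s⟫| ≤ Q * Kρ := by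
      have hbnd : ‖∫ s in Ioc (0:ℝ) t, ⟪Φ n s, ρ n s⟫‖ ≤ ∫ s in Ioc (0:ℝ) t, Q * ‖ρ n s‖ := by
        refine norm_integral_le_of_norm_le (hρt.norm.const_mul Q) ?_
        filter_upwards [ae_restrict_mem measurableSet_Ioc] with s hs
        calc ‖⟪Φ n s, ρ n s⟫‖ ≤ ‖Φ n s‖ * ‖ρ n s‖ := norm_inner_le_norm _ _
          _ ≤ Q * ‖ρ n s‖ :=
            mul_le_mul_of_nonneg_right (hQ s ⟨hs.1.le, hs.2.trans ht.2⟩) (norm_nonneg _)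
      rw [Real.norm_eq_abs] at hbnd
      refine hbnd.trans ?_
      rw [integral_const_mul]
      exact mul_le_mul_of_nonneg_left hρtot hQ0
    have habs1 : |⟪Φ n t, x0⟫| ≤ Q * ‖x0‖ :=
      (abs_real_inner_le_norm _ _).trans (mul_le_mul_of_nonneg_right hΦt (norm_nonneg _))
    have habs2 : |⟪Φ n t, ∫ s in Ioc (0:ℝ) t, ρ n s⟫| ≤ Q * Kρ :=
      (abs_real_inner_le_norm _ _).trans (mul_le_mul hΦt hVρnorm (norm_nonneg _) hQ0)
    rw [hA, hsplit, e1, e2]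
    have h1 := abs_le.1 habs1
    have h2 := abs_le.1 habs2
    have h3 := abs_le.1 hb3
    nlinarith [h1.2, h2.2, h3.1]
  -- final assembly
  have hTnn : ∀ n, 0 ≤ ∫ t in Ioo 0 L, ‖bN n t - b t‖ ^ 2 := fun n =>
    setIntegral_nonneg measurableSet_Ioo fun t _ => sq_nonneg _
  rw [Metric.tendsto_atTop]
  intro ε hε
  have hpos3 : (0:ℝ) < 3 + 4 * Kρ := by linarith
  have hposL : (0:ℝ) < 2 * (L * (3 + 4 * Kρ)) := by positivity
  set η : ℝ := min 1 (ε / (2 * (L * (3 + 4 * Kρ)))) with hηdef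
  have hηpos : 0 < η := lt_min one_pos (by positivity)
  have hη1 : η ≤ 1 := min_le_left _ _
  have hη2 : η ≤ ε / (2 * (L * (3 + 4 * Kρ))) := min_le_right _ _
  have hev1 : ∀ᶠ n in atTop, ‖bN n 0 - b 0‖ ≤ η := by
    have h := h0.sub tendsto_const_nhds (f := fun n => bN n 0) (g := fun _ => b 0)
    rw [sub_self] at h
    refine Tendsto.eventually_le_const hηpos ?_
    simpa using h.norm
  have hev2 := hunif η hηpos
  obtain ⟨N, hN⟩ := (hev1.and hev2).exists_forall_of_atTop
  refine ⟨N, fun n hn => ?_⟩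
  obtain ⟨hn1, hn2⟩ := hN n hn
  have hkey' := hkey n η hηpos.le hn2
  set Bn : ℝ := ‖bN n 0 - b 0‖ ^ 2 + 2 * η * (‖bN n 0 - b 0‖ + 2 * Kρ) with hBndef
  have hint : IntegrableOn (fun t => ‖bN n t - b t‖ ^ 2) (Ioo 0 L) := by
    have haesm : AEStronglyMeasurable (fun t => bN n t - b t) (volume.restrict (Ioo 0 L)) :=
      (hbNmeasIoo n).sub hbmeasIoo
    refine Integrable.mono' (integrable_const Bn)
      ((continuous_pow 2).comp_aestronglyMeasurable haesm.norm) ?_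
    filter_upwards [ae_restrict_mem measurableSet_Ioo] with t htt
    rw [Real.norm_eq_abs, abs_of_nonneg (sq_nonneg _)]
    exact hkey' t ⟨htt.1.le, htt.2.le⟩
  have hTle : (∫ t in Ioo 0 L, ‖bN n t - b t‖ ^ 2) ≤ Bn * L := by
    have h1 : (∫ t in Ioo 0 L, ‖bN n t - b t‖ ^ 2) ≤ ∫ _t in Ioo (0:ℝ) L, Bn := by
      refine integral_mono_ae hint (integrable_const Bn) ?_
      filter_upwards [ae_restrict_mem measurableSet_Ioo] with t htt
      exact hkey' t ⟨htt.1.le, htt.2.le⟩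
    refine h1.trans ?_
    rw [setIntegral_const, measureReal_def, Real.volume_Ioo, sub_zero, ENNReal.toReal_ofReal hL.le,
      smul_eq_mul, mul_comm]
  have hBnle : Bn ≤ η * (3 + 4 * Kρ) := by
    have hd0 : 0 ≤ ‖bN n 0 - b 0‖ := norm_nonneg _
    nlinarith [hηpos.le, hη1, hKρ0, hn1]
  have hεle : η * (3 + 4 * Kρ) * L ≤ ε / 2 := by
    have h2 := (le_div_iff₀ hposL).1 hη2
    nlinarith
  rw [Real.dist_eq, sub_zero, abs_of_nonneg (hTnn n)]
  have hlast : Bn * L ≤ ε / 2 := by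
    refine le_trans ?_ hεle
    exact mul_le_mul_of_nonneg_right hBnle hL.le
  exact lt_of_le_of_lt (hTle.trans hlast) (by linarith)
end

section
/- Let L > 0 and ω, f ∈ L²((0,L);ℝ³), and let δ : [0,L] → ℝ³ be absolutely continuous with δ'(t) = ω(t) × δ(t) + f(t) for a.e. t ∈ (0,L). Then for every t ∈ [0,L], ∫₀^t |δ(s)|² ds ≤ ∫₀^t exp(4‖ω‖²_{L²(0,L)}(t−τ)) · (4|∫₀^τ f(σ) dσ|² + 2|δ(0)|²) dτ. -/
open MeasureTheory Set Filter Topology intervalIntegral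
open scoped RealInnerProductSpace ENNReal

lemma E3_norm_sq (x : E3) : ‖x‖ ^ 2 = x 0 ^ 2 + x 1 ^ 2 + x 2 ^ 2 := by
  rw [EuclideanSpace.norm_eq, Real.sq_sqrt (by positivity)]
  simp [Fin.sum_univ_three, Real.norm_eq_abs, sq_abs]

lemma norm_cross3_le (v w : E3) : ‖cross3 v w‖ ≤ ‖v‖ * ‖w‖ := by
  have h0 : cross3 v w 0 = v 1 * w 2 - v 2 * w 1 := rfl
  have h1 : cross3 v w 1 = v 2 * w 0 - v 0 * w 2 := rfl
  have h2 : cross3 v w 2 = v 0 * w 1 - v 1 * w 0 := rfl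
  have hsq : ‖cross3 v w‖ ^ 2 ≤ (‖v‖ * ‖w‖) ^ 2 := by
    rw [E3_norm_sq, mul_pow, E3_norm_sq v, E3_norm_sq w, h0, h1, h2]
    nlinarith [sq_nonneg (v 0 * w 0 + v 1 * w 1 + v 2 * w 2)]
  calc ‖cross3 v w‖ = Real.sqrt (‖cross3 v w‖ ^ 2) := (Real.sqrt_sq (norm_nonneg _)).symm
    _ ≤ Real.sqrt ((‖v‖ * ‖w‖) ^ 2) := Real.sqrt_le_sqrt hsq
    _ = ‖v‖ * ‖w‖ := Real.sqrt_sq (by positivity)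

set_option maxHeartbeats 1000000 in
/-- a Grönwall-type estimate for absolutely continuous solutions of
`δ' = ω × δ + f` with `ω, f ∈ L²((0,L);ℝ³)`. Absolute continuity of `δ` is encoded
by the integral equation together with integrability of the right-hand side. -/
theorem stmt2 (L : ℝ) (hL : 0 < L) (ω f δ : ℝ → E3)
    (hω : MemLp ω 2 (volume.restrict (Ioo 0 L)))
    (hf : MemLp f 2 (volume.restrict (Ioo 0 L)))
    (hδc : ContinuousOn δ (Icc 0 L))
    (hint : IntervalIntegrable (fun s => cross3 (ω s) (δ s) + f s) volume 0 L)
    (hAC : ∀ t ∈ Icc 0 L, δ t = δ 0 + ∫ s in (0:ℝ)..t, (cross3 (ω s) (δ s) + f s)) :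
    ∀ t ∈ Icc 0 L,
      ∫ s in (0:ℝ)..t, ‖δ s‖ ^ 2 ≤
        ∫ τ in (0:ℝ)..t,
          Real.exp (4 * (∫ s in (0:ℝ)..L, ‖ω s‖ ^ 2) * (t - τ)) *
            (4 * ‖∫ σ in (0:ℝ)..τ, f σ‖ ^ 2 + 2 * ‖δ 0‖ ^ 2) := by
  -- measures
  have hres : volume.restrict (Ioo (0:ℝ) L) = volume.restrict (Icc (0:ℝ) L) :=
    Measure.restrict_congr_set Ioo_ae_eq_Icc
  haveI : IsFiniteMeasure (volume.restrict (Icc (0:ℝ) L)) := by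
    constructor
    rw [Measure.restrict_apply_univ]
    exact (measure_Icc_lt_top)
  rw [hres] at hω hf
  -- measurability of δ on Icc
  have hδm : AEStronglyMeasurable δ (volume.restrict (Icc (0:ℝ) L)) :=
    hδc.aestronglyMeasurable measurableSet_Icc
  obtain ⟨C, hC⟩ := (isCompact_Icc : IsCompact (Icc (0:ℝ) L)).exists_bound_of_continuousOn hδc
  have hδ2 : MemLp δ 2 (volume.restrict (Icc (0:ℝ) L)) :=
    MemLp.of_bound hδm C <| (ae_restrict_mem measurableSet_Icc).mono fun x hx => hC x hx
  -- interval integrabilities on [0, L]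
  have hωsq_int : IntervalIntegrable (fun s => ‖ω s‖ ^ 2) volume 0 L := by
    have h1 : MemLp (fun x => ‖ω x‖ ^ ((2:ℝ≥0∞)).toReal) 1 (volume.restrict (Icc (0:ℝ) L)) :=
      hω.norm_rpow (by norm_num) (by norm_num)
    have h2 : Integrable (fun x => ‖ω x‖ ^ (2:ℕ)) (volume.restrict (Icc (0:ℝ) L)) := by
      have := memLp_one_iff_integrable.mp h1
      refine this.congr (Eventually.of_forall fun x => ?_)
      norm_num [Real.rpow_natCast]
    rw [intervalIntegrable_iff_integrableOn_Ioc_of_le hL.le]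
    have h3 : IntegrableOn (fun x => ‖ω x‖ ^ (2:ℕ)) (Icc (0:ℝ) L) volume := h2
    exact h3.mono_set Ioc_subset_Icc_self
  have hf_int : IntervalIntegrable f volume 0 L := by
    have h1 : MemLp f 1 (volume.restrict (Icc (0:ℝ) L)) :=
      hf.mono_exponent (by norm_num)
    rw [intervalIntegrable_iff_integrableOn_Ioc_of_le hL.le]
    have h3 : IntegrableOn f (Icc (0:ℝ) L) volume := memLp_one_iff_integrable.mp h1
    exact h3.mono_set Ioc_subset_Icc_self
  have hω_int : IntervalIntegrable (fun s => ‖ω s‖) volume 0 L := by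
    have h1 : MemLp ω 1 (volume.restrict (Icc (0:ℝ) L)) :=
      hω.mono_exponent (by norm_num)
    rw [intervalIntegrable_iff_integrableOn_Ioc_of_le hL.le]
    have h3 : IntegrableOn (fun s => ‖ω s‖) (Icc (0:ℝ) L) volume :=
      (memLp_one_iff_integrable.mp h1).norm
    exact h3.mono_set Ioc_subset_Icc_self
  have hcross_int : IntervalIntegrable (fun s => cross3 (ω s) (δ s)) volume 0 L := by
    have := hint.sub hf_int
    simpa using this
  have hδsqc : ContinuousOn (fun s => ‖δ s‖ ^ 2) (Icc (0:ℝ) L) := (hδc.norm).pow 2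
  have hδsq_int : IntervalIntegrable (fun s => ‖δ s‖ ^ 2) volume 0 L := by
    apply ContinuousOn.intervalIntegrable
    rwa [uIcc_of_le hL.le]
  -- abbreviations
  set K := ∫ s in (0:ℝ)..L, ‖ω s‖ ^ 2 with hKdef
  have hK0 : 0 ≤ K := integral_nonneg hL.le fun u _ => by positivity
  set F : ℝ → E3 := fun x => ∫ σ in (0:ℝ)..x, f σ with hFdef
  set b : ℝ → ℝ := fun τ => 4 * ‖F τ‖ ^ 2 + 2 * ‖δ 0‖ ^ 2 with hbdef
  set g : ℝ → ℝ := fun x => ∫ s in (0:ℝ)..x, ‖δ s‖ ^ 2 with hgdef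
  have hFc : ContinuousOn F (Icc (0:ℝ) L) := by
    have := continuousOn_primitive_interval' hf_int (left_mem_uIcc)
    rwa [uIcc_of_le hL.le] at this
  have hbc : ContinuousOn b (Icc (0:ℝ) L) := by
    exact (continuousOn_const.mul ((hFc.norm).pow 2)).add continuousOn_const
  have hgc : ContinuousOn g (Icc (0:ℝ) L) := by
    have := continuousOn_primitive_interval' hδsq_int (left_mem_uIcc)
    rwa [uIcc_of_le hL.le] at this
  have hsub : ∀ x : ℝ, x ∈ Icc (0:ℝ) L → uIcc (0:ℝ) x ⊆ uIcc (0:ℝ) L := by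
    intro x hx
    rw [uIcc_of_le hx.1, uIcc_of_le hL.le]
    exact Icc_subset_Icc le_rfl hx.2
  have hg_nonneg : ∀ x ∈ Icc (0:ℝ) L, 0 ≤ g x := fun x hx =>
    integral_nonneg hx.1 fun u _ => by positivity
  -- key differential inequality
  have hkey : ∀ x ∈ Icc (0:ℝ) L, ‖δ x‖ ^ 2 ≤ 4 * K * g x + b x := by
    intro x hx
    have hx0 := hx.1
    have hIccsub : Ioc (0:ℝ) x ⊆ Icc (0:ℝ) L :=
      Ioc_subset_Icc_self.trans (Icc_subset_Icc le_rfl hx.2)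
    have hcross_x : IntervalIntegrable (fun s => cross3 (ω s) (δ s)) volume 0 x :=
      hcross_int.mono_set (hsub x hx)
    have hf_x : IntervalIntegrable f volume 0 x := hf_int.mono_set (hsub x hx)
    have hω_x : IntervalIntegrable (fun s => ‖ω s‖) volume 0 x := hω_int.mono_set (hsub x hx)
    set I : E3 := ∫ s in (0:ℝ)..x, cross3 (ω s) (δ s) with hIdef
    have hδx : δ x = δ 0 + (I + F x) := by
      rw [hAC x hx, intervalIntegral.integral_add hcross_x hf_x]
    have hprod_int : IntervalIntegrable (fun s => ‖ω s‖ * ‖δ s‖) volume 0 x := by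
      rw [intervalIntegrable_iff_integrableOn_Ioc_of_le hx0]
      have hgint : IntegrableOn (fun s => ‖ω s‖ * C) (Ioc (0:ℝ) x) volume := by
        have h3 : IntegrableOn (fun s => ‖ω s‖) (Ioc (0:ℝ) x) volume := by
          rw [intervalIntegrable_iff_integrableOn_Ioc_of_le hx0] at hω_x; exact hω_x
        exact h3.mul_const C
      apply Integrable.mono' hgint
      · have hωm : AEStronglyMeasurable ω (volume.restrict (Ioc (0:ℝ) x)) :=
          hω.1.mono_measure (Measure.restrict_mono hIccsub le_rfl)
        have hδm' : AEStronglyMeasurable δ (volume.restrict (Ioc (0:ℝ) x)) :=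
          hδm.mono_measure (Measure.restrict_mono hIccsub le_rfl)
        exact hωm.norm.mul hδm'.norm
      · filter_upwards [ae_restrict_mem measurableSet_Ioc] with s hs
        have hsC : ‖δ s‖ ≤ C := hC s (hIccsub hs)
        have h1 : (0:ℝ) ≤ ‖ω s‖ := norm_nonneg _
        rw [Real.norm_eq_abs, abs_of_nonneg (by positivity)]
        exact mul_le_mul_of_nonneg_left hsC h1
    have hIle : ‖I‖ ≤ ∫ s in (0:ℝ)..x, ‖ω s‖ * ‖δ s‖ := by
      refine (intervalIntegral.norm_integral_le_integral_norm hx0).trans ?_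
      apply intervalIntegral.integral_mono_on hx0 hcross_x.norm hprod_int
      intro s _
      exact norm_cross3_le _ _
    have hCS : (∫ s in (0:ℝ)..x, ‖ω s‖ * ‖δ s‖) ≤
        Real.sqrt (∫ s in (0:ℝ)..x, ‖ω s‖ ^ 2) * Real.sqrt (∫ s in (0:ℝ)..x, ‖δ s‖ ^ 2) := by
      rw [intervalIntegral.integral_of_le hx0, intervalIntegral.integral_of_le hx0,
        intervalIntegral.integral_of_le hx0]
      have hμle : volume.restrict (Ioc (0:ℝ) x) ≤ volume.restrict (Icc (0:ℝ) L) :=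
        Measure.restrict_mono hIccsub le_rfl
      have hω2 : MemLp ω (ENNReal.ofReal 2) (volume.restrict (Ioc (0:ℝ) x)) := by
        rw [ENNReal.ofReal_ofNat]
        exact hω.mono_measure hμle
      have hδ2' : MemLp δ (ENNReal.ofReal 2) (volume.restrict (Ioc (0:ℝ) x)) := by
        rw [ENNReal.ofReal_ofNat]
        exact hδ2.mono_measure hμle
      have hpq : Real.HolderConjugate 2 2 := Real.HolderConjugate.two_two
      have hH := MeasureTheory.integral_mul_norm_le_Lp_mul_Lq hpq hω2 hδ2'
      have hr2 : ∀ a : ℝ, a ^ (2:ℝ) = a ^ (2:ℕ) := fun a => by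
        rw [← Real.rpow_natCast a 2]; norm_num
      simp only [hr2] at hH
      rw [← Real.sqrt_eq_rpow, ← Real.sqrt_eq_rpow] at hH
      exact hH
    have hA0 : (0:ℝ) ≤ ∫ s in (0:ℝ)..x, ‖ω s‖ ^ 2 :=
      intervalIntegral.integral_nonneg hx0 fun u _ => by positivity
    have hB0 : (0:ℝ) ≤ g x := hg_nonneg x hx
    have hAK : (∫ s in (0:ℝ)..x, ‖ω s‖ ^ 2) ≤ K :=
      intervalIntegral.integral_mono_interval le_rfl hx0 hx.2
        (Eventually.of_forall fun s => by positivity) hωsq_int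
    have hIsq : ‖I‖ ^ 2 ≤ K * g x := by
      have hle2 : ‖I‖ ≤ Real.sqrt (∫ s in (0:ℝ)..x, ‖ω s‖ ^ 2) *
          Real.sqrt (∫ s in (0:ℝ)..x, ‖δ s‖ ^ 2) := hIle.trans hCS
      calc ‖I‖ ^ 2 ≤ (Real.sqrt (∫ s in (0:ℝ)..x, ‖ω s‖ ^ 2) *
            Real.sqrt (∫ s in (0:ℝ)..x, ‖δ s‖ ^ 2)) ^ 2 :=
            pow_le_pow_left₀ (norm_nonneg _) hle2 2
        _ = (∫ s in (0:ℝ)..x, ‖ω s‖ ^ 2) * (∫ s in (0:ℝ)..x, ‖δ s‖ ^ 2) := by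
            rw [mul_pow, Real.sq_sqrt hA0, Real.sq_sqrt hB0]
        _ ≤ K * g x := mul_le_mul_of_nonneg_right hAK hB0
    have hnorm : ‖δ x‖ ≤ ‖δ 0‖ + (‖I‖ + ‖F x‖) := by
      rw [hδx]
      exact (norm_add_le _ _).trans (by gcongr; exact norm_add_le _ _)
    show ‖δ x‖ ^ 2 ≤ 4 * K * g x + (4 * ‖F x‖ ^ 2 + 2 * ‖δ 0‖ ^ 2)
    nlinarith [hnorm, hIsq, norm_nonneg (δ 0), norm_nonneg I, norm_nonneg (F x),
      norm_nonneg (δ x), sq_nonneg (‖δ 0‖ - (‖I‖ + ‖F x‖)), sq_nonneg (‖I‖ - ‖F x‖)]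
  -- Grönwall
  set B : ℝ → ℝ := fun x => ∫ τ in (0:ℝ)..x, Real.exp (-(4*K)*τ) * b τ with hBdef
  have hebc : ContinuousOn (fun τ => Real.exp (-(4*K)*τ) * b τ) (Icc (0:ℝ) L) :=
    ((Real.continuous_exp.comp (continuous_const.mul continuous_id)).continuousOn).mul hbc
  have heb_int : IntervalIntegrable (fun τ => Real.exp (-(4*K)*τ) * b τ) volume 0 L := by
    apply ContinuousOn.intervalIntegrable
    rwa [uIcc_of_le hL.le]
  have hBc : ContinuousOn B (Icc (0:ℝ) L) := by
    have := continuousOn_primitive_interval' heb_int left_mem_uIcc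
    rwa [uIcc_of_le hL.le] at this
  set ψ : ℝ → ℝ := fun x => Real.exp (-(4*K)*x) * g x - B x with hψdef
  have hψc : ContinuousOn ψ (Icc (0:ℝ) L) :=
    (((Real.continuous_exp.comp (continuous_const.mul continuous_id)).continuousOn).mul hgc).sub hBc
  have hψderiv : ∀ x ∈ Ioo (0:ℝ) L, HasDerivAt ψ
      (Real.exp (-(4*K)*x) * (‖δ x‖ ^ 2 - 4*K*g x - b x)) x := by
    intro x hx
    have hmem : Icc (0:ℝ) L ∈ 𝓝 x := Icc_mem_nhds hx.1 hx.2
    have hxIcc : x ∈ Icc (0:ℝ) L := Ioo_subset_Icc_self hx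
    have hg' : HasDerivAt g (‖δ x‖ ^ 2) x :=
      intervalIntegral.integral_hasDerivAt_right (hδsq_int.mono_set (hsub x hxIcc))
        ⟨Icc 0 L, hmem, hδsqc.aestronglyMeasurable measurableSet_Icc⟩
        (hδsqc.continuousAt hmem)
    have hB' : HasDerivAt B (Real.exp (-(4*K)*x) * b x) x :=
      intervalIntegral.integral_hasDerivAt_right (heb_int.mono_set (hsub x hxIcc))
        ⟨Icc 0 L, hmem, hebc.aestronglyMeasurable measurableSet_Icc⟩
        (hebc.continuousAt hmem)
    have he : HasDerivAt (fun y => Real.exp (-(4*K)*y)) (Real.exp (-(4*K)*x) * (-(4*K))) x := by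
      have h1 : HasDerivAt (fun y : ℝ => -(4*K)*y) (-(4*K)) x := by
        simpa using (hasDerivAt_id x).const_mul (-(4*K))
      exact h1.exp
    have hD := (he.mul hg').sub hB'
    refine hD.congr_deriv ?_
    ring
  have hψ_anti : AntitoneOn ψ (Icc (0:ℝ) L) := by
    apply antitoneOn_of_deriv_nonpos (convex_Icc 0 L) hψc
    · intro x hx
      rw [interior_Icc] at hx
      exact (hψderiv x hx).differentiableAt.differentiableWithinAt
    · intro x hx
      rw [interior_Icc] at hx
      rw [(hψderiv x hx).deriv]
      have h1 : ‖δ x‖ ^ 2 - 4*K*g x - b x ≤ 0 := by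
        have := hkey x (Ioo_subset_Icc_self hx); linarith
      exact mul_nonpos_of_nonneg_of_nonpos (Real.exp_nonneg _) h1
  intro t ht
  have hψt : ψ t ≤ ψ 0 := hψ_anti (left_mem_Icc.mpr hL.le) ht ht.1
  have hψ0 : ψ 0 = 0 := by simp [hψdef, hgdef, hBdef]
  have hexp1 : Real.exp (4*K*t) * Real.exp (-(4*K)*t) = 1 := by
    have h0 : 4*K*t + -(4*K)*t = 0 := by ring
    rw [← Real.exp_add, h0, Real.exp_zero]
  have h1 : Real.exp (-(4*K)*t) * g t ≤ B t := by
    rw [hψ0] at hψt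
    simp only [hψdef] at hψt
    linarith
  have h2 : g t ≤ Real.exp (4*K*t) * B t := by
    calc g t = Real.exp (4*K*t) * (Real.exp (-(4*K)*t) * g t) := by
          rw [← mul_assoc, hexp1, one_mul]
      _ ≤ Real.exp (4*K*t) * B t := mul_le_mul_of_nonneg_left h1 (Real.exp_nonneg _)
  have h3 : Real.exp (4*K*t) * B t = ∫ τ in (0:ℝ)..t, Real.exp (4*K*(t-τ)) * b τ := by
    rw [hBdef, ← intervalIntegral.integral_const_mul]
    apply intervalIntegral.integral_congr
    intro τ _
    show Real.exp (4*K*t) * (Real.exp (-(4*K)*τ) * b τ) = Real.exp (4*K*(t-τ)) * b τ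
    rw [← mul_assoc, ← Real.exp_add]
    congr 2
    ring
  have h4 : (∫ τ in (0:ℝ)..t, Real.exp (4*K*(t-τ)) * b τ) =
      ∫ τ in (0:ℝ)..t, Real.exp (4 * K * (t - τ)) *
        (4 * ‖∫ σ in (0:ℝ)..τ, f σ‖ ^ 2 + 2 * ‖δ 0‖ ^ 2) := rfl
  calc (∫ s in (0:ℝ)..t, ‖δ s‖ ^ 2) = g t := rfl
    _ ≤ Real.exp (4*K*t) * B t := h2
    _ = _ := h3.trans h4
end

section
/- Let L > 0 and let u : [0,L] → ℝ³ be three times continuously differentiable with |u'(s)| = 1 for all s ∈ [0,L]. Then for all s₀ and l ≥ 0 with 0 ≤ s₀ ≤ s₀ + l ≤ L, l − (l³/6)·sup_{s∈[0,L]}|u'''(s)| ≤ |u(s₀+l) − u(s₀)| ≤ l. -/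
open Set

/-- for a three times continuously differentiable arc-length parametrized
curve `u : [0,L] → ℝ³`, the chord length `|u(s₀+l) − u(s₀)|` is between
`l − (l³/6)·sup|u'''|` and `l`. -/
theorem stmt3 (L : ℝ) (hL : 0 < L) (u : ℝ → EuclideanSpace ℝ (Fin 3))
    (hu : ContDiffOn ℝ 3 u (Icc 0 L))
    (hunit : ∀ s ∈ Icc 0 L, ‖derivWithin u (Icc 0 L) s‖ = 1)
    (s₀ l : ℝ) (hs₀ : 0 ≤ s₀) (hl : 0 ≤ l) (hsl : s₀ + l ≤ L) :
    l - l ^ 3 / 6 * (⨆ s : Icc (0:ℝ) L, ‖iteratedDerivWithin 3 u (Icc 0 L) s‖) ≤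
        ‖u (s₀ + l) - u s₀‖ ∧
      ‖u (s₀ + l) - u s₀‖ ≤ l := by
  have uniq : UniqueDiffOn ℝ (Icc (0:ℝ) L) := uniqueDiffOn_Icc hL
  set S := Icc (0:ℝ) L with hSdef
  set u1 := derivWithin u S with hu1def
  set u2 := derivWithin u1 S with hu2def
  set u3 := derivWithin u2 S with hu3def
  set M := ⨆ s : Icc (0:ℝ) L, ‖iteratedDerivWithin 3 u (Icc 0 L) s‖ with hMdef
  have hs₀S : s₀ ∈ S := ⟨hs₀, by linarith⟩
  have hslS : s₀ + l ∈ S := ⟨by linarith, hsl⟩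
  have hu1 : ContDiffOn ℝ 2 u1 S := hu.derivWithin uniq (by norm_num)
  have hu2 : ContDiffOn ℝ 1 u2 S := hu1.derivWithin uniq (by norm_num)
  have hdiff : DifferentiableOn ℝ u S := hu.differentiableOn (by norm_num)
  have hdiff1 : DifferentiableOn ℝ u1 S := hu1.differentiableOn (by norm_num)
  have hdiff2 : DifferentiableOn ℝ u2 S := hu2.differentiableOn one_ne_zero
  have hd1 : ∀ x ∈ S, HasDerivWithinAt u (u1 x) S x := fun x hx =>
    (hdiff x hx).hasDerivWithinAt
  have hd2 : ∀ x ∈ S, HasDerivWithinAt u1 (u2 x) S x := fun x hx =>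
    (hdiff1 x hx).hasDerivWithinAt
  have hd3 : ∀ x ∈ S, HasDerivWithinAt u2 (u3 x) S x := fun x hx =>
    (hdiff2 x hx).hasDerivWithinAt
  -- identify iterated derivative
  have e1 : EqOn (iteratedDerivWithin 1 u S) u1 S := fun x hx => by
    rw [iteratedDerivWithin_one]
  have e2 : EqOn (iteratedDerivWithin 2 u S) u2 S := fun x hx => by
    rw [show (2:ℕ) = 1 + 1 from rfl, iteratedDerivWithin_succ]
    exact derivWithin_congr e1 (e1 hx)
  have e3 : ∀ x ∈ S, iteratedDerivWithin 3 u S x = u3 x := fun x hx => by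
    show iteratedDerivWithin (2 + 1) u S x = u3 x
    rw [iteratedDerivWithin_succ]
    exact derivWithin_congr e2 (e2 hx)
  -- boundedness
  have hbdd : BddAbove (range fun s : Icc (0:ℝ) L => ‖iteratedDerivWithin 3 u (Icc 0 L) s‖) := by
    have hc : ContinuousOn (fun x => ‖iteratedDerivWithin 3 u S x‖) S :=
      (hu.continuousOn_iteratedDerivWithin (by norm_num) uniq).norm
    have : range (fun s : Icc (0:ℝ) L => ‖iteratedDerivWithin 3 u (Icc 0 L) s‖)
        = (fun x => ‖iteratedDerivWithin 3 u S x‖) '' S := by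
      rw [← Set.range_restrict]; rfl
    rw [this]
    exact (isCompact_Icc.image_of_continuousOn hc).bddAbove
  have hM3 : ∀ x ∈ S, ‖u3 x‖ ≤ M := fun x hx => by
    rw [← e3 x hx]
    exact le_ciSup hbdd ⟨x, hx⟩
  have hM0 : 0 ≤ M := le_trans (norm_nonneg _) (hM3 0 ⟨le_rfl, hL.le⟩)
  -- upper bound
  have hupper : ‖u (s₀ + l) - u s₀‖ ≤ l := by
    have := Convex.norm_image_sub_le_of_norm_derivWithin_le hdiff
      (fun x hx => by rw [← hu1def]; exact (hunit x hx).le) (convex_Icc 0 L) hs₀S hslS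
    simpa [abs_of_nonneg hl] using this
  -- orthogonality ⟪u1, u2⟫ = 0
  have hA : ∀ x ∈ S, (inner ℝ (u1 x) (u2 x) : ℝ) = 0 := by
    intro x hx
    have h1 : HasDerivWithinAt (fun t => (inner ℝ (u1 t) (u1 t) : ℝ))
        (inner ℝ (u1 x) (u2 x) + inner ℝ (u2 x) (u1 x)) S x :=
      (hd2 x hx).inner ℝ (hd2 x hx)
    have h2 : HasDerivWithinAt (fun t => (inner ℝ (u1 t) (u1 t) : ℝ)) 0 S x := by
      refine (hasDerivWithinAt_const x S (1:ℝ)).congr (fun y hy => ?_) ?_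
      · rw [real_inner_self_eq_norm_sq, hunit y hy]; norm_num
      · rw [real_inner_self_eq_norm_sq, hunit x hx]; norm_num
    have := (h1.derivWithin (uniq x hx)).symm.trans (h2.derivWithin (uniq x hx))
    have hc := real_inner_comm (u1 x) (u2 x)
    linarith
  -- ‖u2‖² ≤ M
  have hB : ∀ x ∈ S, ‖u2 x‖ ^ 2 ≤ M := by
    intro x hx
    have h1 : HasDerivWithinAt (fun t => (inner ℝ (u1 t) (u2 t) : ℝ))
        (inner ℝ (u1 x) (u3 x) + inner ℝ (u2 x) (u2 x)) S x :=
      (hd2 x hx).inner ℝ (hd3 x hx)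
    have h2 : HasDerivWithinAt (fun t => (inner ℝ (u1 t) (u2 t) : ℝ)) 0 S x := by
      refine (hasDerivWithinAt_const x S (0:ℝ)).congr (fun y hy => (hA y hy)) (hA x hx)
    have heq := (h1.derivWithin (uniq x hx)).symm.trans (h2.derivWithin (uniq x hx))
    have : ‖u2 x‖ ^ 2 = -(inner ℝ (u1 x) (u3 x) : ℝ) := by
      rw [← real_inner_self_eq_norm_sq]; linarith
    rw [this]
    calc -(inner ℝ (u1 x) (u3 x) : ℝ) ≤ ‖u1 x‖ * ‖u3 x‖ := by
          have := abs_real_inner_le_norm (u1 x) (u3 x)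
          have := neg_abs_le (inner ℝ (u1 x) (u3 x) : ℝ)
          linarith
      _ = ‖u3 x‖ := by rw [hunit x hx, one_mul]
      _ ≤ M := hM3 x hx
  have hBs : ∀ x ∈ S, ‖u2 x‖ ≤ Real.sqrt M := by
    intro x hx
    have h := Real.sqrt_le_sqrt (hB x hx)
    rwa [Real.sqrt_sq (norm_nonneg _)] at h
  -- Lipschitz bound on u1
  have hLip : ∀ x ∈ S, ‖u1 x - u1 s₀‖ ≤ Real.sqrt M * |x - s₀| := by
    intro x hx
    have := Convex.norm_image_sub_le_of_norm_derivWithin_le hdiff1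
      (fun y hy => by rw [← hu2def]; exact hBs y hy) (convex_Icc 0 L) hs₀S hx
    simpa using this
  set v := u1 s₀ with hvdef
  have hvnorm : ‖v‖ = 1 := hunit s₀ hs₀S
  -- the comparison function
  set F : ℝ → ℝ := fun t => (inner ℝ (u t) v : ℝ) - t + M * (t - s₀) ^ 3 / 6 with hFdef
  have hFderiv : ∀ x ∈ Ioo s₀ (s₀ + l),
      HasDerivAt F ((inner ℝ (u1 x) v : ℝ) - 1 + M * (x - s₀) ^ 2 / 2) x := by
    intro x hx
    have hxS : x ∈ S := ⟨by linarith [hx.1], by linarith [hx.2]⟩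
    have hnh : S ∈ nhds x := by
      rw [hSdef]
      exact Icc_mem_nhds (by linarith [hx.1]) (by linarith [hx.2])
    have hdu : HasDerivAt u (u1 x) x := (hd1 x hxS).hasDerivAt hnh
    have hinner : HasDerivAt (fun t => (inner ℝ (u t) v : ℝ)) (inner ℝ (u1 x) v : ℝ) x := by
      have := hdu.inner ℝ (hasDerivAt_const x v)
      simpa using this
    have hpoly : HasDerivAt (fun t => -t + M * (t - s₀) ^ 3 / 6)
        (-1 + M * (x - s₀) ^ 2 / 2) x := by
      have h1 : HasDerivAt (fun t : ℝ => (t - s₀) ^ 3) (3 * (x - s₀) ^ 2) x := by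
        have := ((hasDerivAt_id x).sub_const s₀).fun_pow 3
        simpa using this
      have h2 := ((h1.const_mul M).div_const 6).const_add 0
      have h3 := (hasDerivAt_id x).neg.add ((h1.const_mul M).div_const 6)
      exact h3.congr_deriv (by ring)
    have := hinner.add hpoly
    convert this using 1
    · rfl
    · rfl
    · ext t; simp [hFdef]; ring
    · ring
  have hFmono : MonotoneOn F (Icc s₀ (s₀ + l)) := by
    apply monotoneOn_of_deriv_nonneg (convex_Icc _ _)
    · apply ContinuousOn.add
      · apply ContinuousOn.sub
        · exact ContinuousOn.inner (hu.continuousOn.mono (Icc_subset_Icc hs₀ hsl))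
            continuousOn_const
        · exact continuousOn_id
      · fun_prop
    · intro x hx
      rw [interior_Icc] at hx
      exact ((hFderiv x hx).differentiableAt).differentiableWithinAt
    · intro x hx
      rw [interior_Icc] at hx
      have hxS : x ∈ S := ⟨by linarith [hx.1], by linarith [hx.2]⟩
      rw [(hFderiv x hx).deriv]
      have hcos : (inner ℝ (u1 x) v : ℝ) - 1 = -(‖u1 x - v‖ ^ 2) / 2 := by
        have : ‖u1 x - v‖ ^ 2 = ‖u1 x‖ ^ 2 - 2 * inner ℝ (u1 x) v + ‖v‖ ^ 2 := by
          rw [← real_inner_self_eq_norm_sq, ← real_inner_self_eq_norm_sq,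
            ← real_inner_self_eq_norm_sq, inner_sub_sub_self, real_inner_comm v (u1 x)]
          ring
        rw [hunit x hxS, hvnorm] at this
        linarith
      rw [hcos]
      have hle : ‖u1 x - v‖ ^ 2 ≤ M * (x - s₀) ^ 2 := by
        have h := hLip x hxS
        have h2 : ‖u1 x - v‖ ^ 2 ≤ (Real.sqrt M * |x - s₀|) ^ 2 := by
          apply pow_le_pow_left₀ (norm_nonneg _) h
        calc ‖u1 x - v‖ ^ 2 ≤ (Real.sqrt M * |x - s₀|) ^ 2 := h2
          _ = M * (x - s₀) ^ 2 := by
            rw [mul_pow, Real.sq_sqrt hM0, sq_abs]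
      linarith
  have hF := hFmono ⟨le_rfl, by linarith⟩ ⟨by linarith, le_rfl⟩ (by linarith)
  have hineq : l - M * l ^ 3 / 6 ≤ (inner ℝ (u (s₀ + l) - u s₀) v : ℝ) := by
    have hF' : (inner ℝ (u s₀) v : ℝ) - s₀ + M * (s₀ - s₀) ^ 3 / 6 ≤
        (inner ℝ (u (s₀ + l)) v : ℝ) - (s₀ + l) + M * (s₀ + l - s₀) ^ 3 / 6 := hF
    rw [inner_sub_left]
    nlinarith [hF']
  have hlower : l - l ^ 3 / 6 * M ≤ ‖u (s₀ + l) - u s₀‖ := by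
    have h1 : (inner ℝ (u (s₀ + l) - u s₀) v : ℝ) ≤ ‖u (s₀ + l) - u s₀‖ := by
      calc (inner ℝ (u (s₀ + l) - u s₀) v : ℝ) ≤ ‖u (s₀ + l) - u s₀‖ * ‖v‖ :=
            real_inner_le_norm _ _
        _ = ‖u (s₀ + l) - u s₀‖ := by rw [hvnorm, mul_one]
    nlinarith [hineq]
  exact ⟨hlower, hupper⟩
end

section
/- Let L > 0 and let u : [0,L] → ℝ³ be twice continuously differentiable with |u'(s)| = 1 for all s ∈ [0,L]. Fix s₀ ∈ [0,L) and l ∈ (0, L − s₀] with |u(s₀+l) − u(s₀)| > 0 and l·sup_{s∈[0,L]}|u''(s)| ≤ 2. Then the function λ ↦ |u(s₀+λ) − u(s₀)| is differentiable at λ = l and its derivative there lies in the interval [1 − (l/2)·sup_{s∈[0,L]}|u''(s)|, 1]. -/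
/-!
Write `w = u(s₀+l) - u(s₀)` and `v = u'(s₀+l)`. The derivative in question is `⟪w, v⟫ / ‖w‖`,
which is at most `1` by Cauchy–Schwarz. For the lower bound, `u'` is `K`-Lipschitz with
`K = sup ‖u''‖`, so the first-order Taylor expansion of `u` at `s₀ + l` gives
`‖w - l • v‖ ≤ K l² / 2`, hence `⟪w, v⟫ ≥ l (1 - l K / 2) ≥ 0`; together with `‖w‖ ≤ l`
(unit speed) this yields `⟪w, v⟫ / ‖w‖ ≥ ⟪w, v⟫ / l ≥ 1 - l K / 2`.
-/

open Set
open scoped RealInnerProductSpace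

theorem IsCompact.norm_le_iSup_norm {X E : Type*} [TopologicalSpace X] [SeminormedAddCommGroup E]
    {g : X → E} {s : Set X} (hs : IsCompact s) (hg : ContinuousOn g s) {x : X} (hx : x ∈ s) :
    ‖g x‖ ≤ ⨆ y : s, ‖g y‖ :=
  le_ciSup (f := fun y : s => ‖g y‖)
    (by simpa [image_eq_range] using (hs.image_of_continuousOn hg.norm).bddAbove) ⟨x, hx⟩

theorem HasDerivWithinAt.norm {F : Type*} [NormedAddCommGroup F] [InnerProductSpace ℝ F]
    {f : ℝ → F} {f' : F} {s : Set ℝ} {x : ℝ} (hf : HasDerivWithinAt f f' s x) (h0 : f x ≠ 0) :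
    HasDerivWithinAt (fun y => ‖f y‖) (⟪f x, f'⟫ / ‖f x‖) s x := by
  have hsq : ‖f x‖ ^ 2 ≠ 0 := pow_ne_zero 2 (norm_ne_zero_iff.2 h0)
  convert hf.norm_sq.sqrt hsq using 1
  · simp only [Real.sqrt_sq (norm_nonneg _)]
  · rw [Real.sqrt_sq (norm_nonneg _)]
    field_simp

section

variable {E : Type*} [NormedAddCommGroup E] [NormedSpace ℝ E]

theorem ContDiffOn.norm_derivWithin_sub_le {f : ℝ → E} {s : Set ℝ} {K : ℝ}
    (hf : ContDiffOn ℝ 2 f s) (hs : UniqueDiffOn ℝ s) (hconv : Convex ℝ s)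
    (hK : ∀ t ∈ s, ‖iteratedDerivWithin 2 f s t‖ ≤ K) {x y : ℝ} (hx : x ∈ s) (hy : y ∈ s) :
    ‖derivWithin f s y - derivWithin f s x‖ ≤ K * ‖y - x‖ := by
  refine hconv.norm_image_sub_le_of_norm_derivWithin_le
    ((hf.derivWithin hs (by norm_num)).differentiableOn one_ne_zero) (fun t ht => ?_) hx hy
  simpa only [iteratedDerivWithin_succ', iteratedDerivWithin_zero] using hK t ht

theorem norm_sub_sub_smul_deriv_le {f f' : ℝ → E} {a b K : ℝ} (hab : a ≤ b)
    (hf : ∀ t ∈ Icc a b, HasDerivWithinAt f (f' t) (Icc a b) t)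
    (hlip : ∀ t ∈ Icc a b, ‖f' t - f' b‖ ≤ K * (b - t)) :
    ‖f b - f a - (b - a) • f' b‖ ≤ K / 2 * (b - a) ^ 2 := by
  have hrem : ∀ t ∈ Icc a b,
      HasDerivWithinAt (fun t => f t - f a - (t - a) • f' b) (f' t - f' b) (Icc a b) t := by
    intro t ht
    exact ((hf t ht).sub_const (f a)).sub
      (((hasDerivWithinAt_id t _).sub_const a).smul_const (f' b)) |>.congr_deriv (by rw [one_smul])
  have hB : ∀ t, HasDerivAt (fun t => K / 2 * ((b - a) ^ 2 - (b - t) ^ 2)) (K * (b - t)) t := by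
    intro t
    exact ((((hasDerivAt_id t).const_sub b).pow 2).const_sub ((b - a) ^ 2)).const_mul (K / 2)
      |>.congr_deriv (by simp only [id_eq, Nat.cast_ofNat, Nat.add_one_sub_one, pow_one]; ring)
  have := image_norm_le_of_norm_deriv_right_le_deriv_boundary
    (fun t ht => (hrem t ht).continuousWithinAt)
    (fun t ht => (hrem t (Ico_subset_Icc_self ht)).mono_of_mem_nhdsWithin
      (Icc_mem_nhdsGE_of_mem ht))
    (by simp) hB (fun t ht => hlip t (Ico_subset_Icc_self ht)) (right_mem_Icc.2 hab)
  simpa using this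

end

theorem inner_deriv_div_norm_sub_mem_Icc {F : Type*} [NormedAddCommGroup F]
    [InnerProductSpace ℝ F] {f f' : ℝ → F} {a b K : ℝ} (hab : a ≤ b)
    (hf : ∀ t ∈ Icc a b, HasDerivWithinAt f (f' t) (Icc a b) t)
    (hunit : ∀ t ∈ Icc a b, ‖f' t‖ = 1) (hlip : ∀ t ∈ Icc a b, ‖f' t - f' b‖ ≤ K * (b - t))
    (hpos : 0 < ‖f b - f a‖) (hsmall : (b - a) * K ≤ 2) :
    ⟪f b - f a, f' b⟫ / ‖f b - f a‖ ∈ Icc (1 - (b - a) / 2 * K) 1 := by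
  set w := f b - f a
  set v := f' b
  have hv : ‖v‖ = 1 := hunit b (right_mem_Icc.2 hab)
  have hw_le : ‖w‖ ≤ b - a := by
    simpa using norm_image_sub_le_of_norm_deriv_le_segment' hf
      (fun t ht => (hunit t (Ico_subset_Icc_self ht)).le) b (right_mem_Icc.2 hab)
  have hinner : (b - a) * (1 - (b - a) / 2 * K) ≤ ⟪w, v⟫ := by
    have htaylor := norm_sub_sub_smul_deriv_le hab hf hlip
    have hsplit : ⟪w - (b - a) • v, v⟫ = ⟪w, v⟫ - (b - a) := by
      rw [inner_sub_left, real_inner_smul_left, real_inner_self_eq_norm_sq, hv]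
      ring
    have hcs := neg_abs_le ⟪w - (b - a) • v, v⟫
    have hcs' := abs_real_inner_le_norm (w - (b - a) • v) v
    rw [hv, mul_one] at hcs'
    linarith
  have hinner_nonneg : 0 ≤ ⟪w, v⟫ :=
    le_trans (mul_nonneg (hpos.le.trans hw_le) (by linarith)) hinner
  constructor
  · calc 1 - (b - a) / 2 * K ≤ ⟪w, v⟫ / (b - a) := by
          rw [le_div_iff₀ (hpos.trans_le hw_le)]
          linarith
      _ ≤ ⟪w, v⟫ / ‖w‖ := div_le_div_of_nonneg_left hinner_nonneg hpos hw_le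
  · rw [div_le_one hpos]
    simpa [hv] using real_inner_le_norm w v

theorem stmt4_general (L : ℝ) (u : ℝ → EuclideanSpace ℝ (Fin 3))
    (hu : ContDiffOn ℝ 2 u (Icc 0 L))
    (hunit : ∀ s ∈ Icc 0 L, ‖derivWithin u (Icc 0 L) s‖ = 1)
    (s₀ l : ℝ) (hs₀ : 0 ≤ s₀) (hl : 0 < l) (hlL : l ≤ L - s₀)
    (hpos : 0 < ‖u (s₀ + l) - u s₀‖)
    (hsmall : l * (⨆ s : Icc (0:ℝ) L, ‖iteratedDerivWithin 2 u (Icc 0 L) s‖) ≤ 2) :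
    ∃ d : ℝ,
      HasDerivWithinAt (fun lam => ‖u (s₀ + lam) - u s₀‖) d (Icc 0 (L - s₀)) l ∧
      1 - l / 2 * (⨆ s : Icc (0:ℝ) L, ‖iteratedDerivWithin 2 u (Icc 0 L) s‖) ≤ d ∧
      d ≤ 1 := by
  set K := ⨆ s : Icc (0:ℝ) L, ‖iteratedDerivWithin 2 u (Icc 0 L) s‖
  have hI : UniqueDiffOn ℝ (Icc (0:ℝ) L) := uniqueDiffOn_Icc (by linarith)
  have hsub : Icc s₀ (s₀ + l) ⊆ Icc 0 L := Icc_subset_Icc hs₀ (by linarith)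
  have hend : s₀ + l ∈ Icc (0:ℝ) L := hsub (right_mem_Icc.2 (by linarith))
  have hderiv : ∀ t ∈ Icc (0:ℝ) L, HasDerivWithinAt u (derivWithin u (Icc 0 L) t) (Icc 0 L) t :=
    fun t ht => ((hu.differentiableOn (by norm_num)) t ht).hasDerivWithinAt
  have hlip : ∀ t ∈ Icc s₀ (s₀ + l),
      ‖derivWithin u (Icc 0 L) t - derivWithin u (Icc 0 L) (s₀ + l)‖ ≤ K * (s₀ + l - t) := by
    intro t ht
    have := hu.norm_derivWithin_sub_le hI (convex_Icc 0 L)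
      (fun s hs => isCompact_Icc.norm_le_iSup_norm
        (hu.continuousOn_iteratedDerivWithin (by norm_num) hI) hs) hend (hsub ht)
    rwa [Real.norm_eq_abs, abs_sub_comm, abs_of_nonneg (by linarith [ht.2])] at this
  obtain ⟨hlow, hup⟩ := inner_deriv_div_norm_sub_mem_Icc (by linarith)
    (fun t ht => (hderiv t (hsub ht)).mono hsub) (fun t ht => hunit t (hsub ht)) hlip hpos
    (by simpa using hsmall)
  refine ⟨_, ?_, by simpa using hlow, hup⟩
  have hshift : HasDerivWithinAt (fun lam => u (s₀ + lam)) (derivWithin u (Icc 0 L) (s₀ + l))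
      (Icc 0 (L - s₀)) l := by
    have := (hderiv _ hend).scomp l ((hasDerivWithinAt_id l _).const_add s₀)
      (fun t (ht : t ∈ Icc 0 (L - s₀)) => ⟨by linarith [ht.1], by linarith [ht.2]⟩)
    rwa [one_smul] at this
  exact (hshift.sub_const (u s₀)).norm (norm_pos_iff.1 hpos)

/-- for a twice continuously differentiable arc-length parametrized curve
`u : [0,L] → ℝ³`, the function `λ ↦ |u(s₀+λ) − u(s₀)|` is differentiable at `λ = l`
(within its natural domain `[0, L−s₀]`) with derivative in `[1 − (l/2)·sup|u''|, 1]`. -/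
theorem stmt4 (L : ℝ) (hL : 0 < L) (u : ℝ → EuclideanSpace ℝ (Fin 3))
    (hu : ContDiffOn ℝ 2 u (Icc 0 L))
    (hunit : ∀ s ∈ Icc 0 L, ‖derivWithin u (Icc 0 L) s‖ = 1)
    (s₀ l : ℝ) (hs₀ : 0 ≤ s₀) (hs₀L : s₀ < L) (hl : 0 < l) (hlL : l ≤ L - s₀)
    (hpos : 0 < ‖u (s₀ + l) - u s₀‖)
    (hsmall : l * (⨆ s : Icc (0:ℝ) L, ‖iteratedDerivWithin 2 u (Icc 0 L) s‖) ≤ 2) :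
    ∃ d : ℝ,
      HasDerivWithinAt (fun lam => ‖u (s₀ + lam) - u s₀‖) d (Icc 0 (L - s₀)) l ∧
      1 - l / 2 * (⨆ s : Icc (0:ℝ) L, ‖iteratedDerivWithin 2 u (Icc 0 L) s‖) ≤ d ∧
      d ≤ 1 :=
  stmt4_general L u hu hunit s₀ l hs₀ hl hlL hpos hsmall
end

section
/- Let L > 0 and let u : [0,L] → ℝ³ be smooth with |u'(s)| = 1 for all s ∈ [0,L]. For s ∈ [0,L) and r > 0 such that {l ∈ (0, L−s] : |u(s+l) − u(s)| = r} is nonempty, define l(s,r) := min{l > 0 : |u(s+l) − u(s)| = r}. Then there exists r₀ > 0 such that for all r ∈ (0, r₀] and all 0 ≤ a < b < L for which l(a,r) and l(b,r) are defined, a + l(a,r) < b + l(b,r). -/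
open Set MeasureTheory intervalIntegral
open scoped RealInnerProductSpace

/-- `lnext u L s r` is `l(s,r)`, the smallest `l > 0` with `s + l ≤ L` and
`|u(s+l) − u(s)| = r` (when such `l` exists; the infimum is attained by closedness). -/
noncomputable def lnext (u : ℝ → EuclideanSpace ℝ (Fin 3)) (L s r : ℝ) : ℝ :=
  sInf {l : ℝ | 0 < l ∧ s + l ≤ L ∧ ‖u (s + l) - u s‖ = r}

private lemma integral_deriv (L : ℝ) (hL : 0 < L) (u : ℝ → EuclideanSpace ℝ (Fin 3))
    (hu : ContDiffOn ℝ (⊤ : ℕ∞) u (Icc 0 L))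
    {x y : ℝ} (hx : x ∈ Icc 0 L) (hy : y ∈ Icc 0 L) (hxy : x ≤ y) :
    ∫ τ in x..y, derivWithin u (Icc 0 L) τ = u y - u x := by
  have hsub : Icc x y ⊆ Icc 0 L := Icc_subset_Icc hx.1 hy.2
  have hdiff := hu.differentiableOn (by simp)
  have hcont' : ContinuousOn (derivWithin u (Icc 0 L)) (Icc 0 L) :=
    hu.continuousOn_derivWithin (uniqueDiffOn_Icc hL) (by exact_mod_cast le_top)
  have hd : ∀ t ∈ Ioo x y, HasDerivAt u (derivWithin u (Icc 0 L) t) t := by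
    intro t ht
    exact ((hdiff t (hsub (Ioo_subset_Icc_self ht))).hasDerivWithinAt).hasDerivAt
      (Icc_mem_nhds (lt_of_le_of_lt hx.1 ht.1) (lt_of_lt_of_le ht.2 hy.2))
  have hint : IntervalIntegrable (derivWithin u (Icc 0 L)) volume x y :=
    (hcont'.mono (by rw [uIcc_of_le hxy]; exact hsub)).intervalIntegrable
  exact integral_eq_sub_of_hasDeriv_right_of_le hxy (hu.continuousOn.mono hsub)
    (fun t ht => (hd t ht).hasDerivWithinAt) hint

private lemma deriv_cont (L : ℝ) (hL : 0 < L) (u : ℝ → EuclideanSpace ℝ (Fin 3))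
    (hu : ContDiffOn ℝ (⊤ : ℕ∞) u (Icc 0 L)) :
    ContinuousOn (derivWithin u (Icc 0 L)) (Icc 0 L) :=
  hu.continuousOn_derivWithin (uniqueDiffOn_Icc hL) (by exact_mod_cast le_top)

/-- chord–tangent inner product lower bound -/
private lemma innerA (L δ : ℝ) (hL : 0 < L) (u : ℝ → EuclideanSpace ℝ (Fin 3))
    (hu : ContDiffOn ℝ (⊤ : ℕ∞) u (Icc 0 L))
    (hunit : ∀ s ∈ Icc 0 L, ‖derivWithin u (Icc 0 L) s‖ = 1)
    (hδ : ∀ p ∈ Icc 0 L, ∀ q ∈ Icc 0 L, |p - q| ≤ δ →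
      ‖derivWithin u (Icc 0 L) p - derivWithin u (Icc 0 L) q‖ ≤ 1/2)
    {x y ξ : ℝ} (hx : x ∈ Icc 0 L) (hy : y ∈ Icc 0 L) (hxy : x ≤ y) (hξ : ξ ∈ Icc 0 L)
    (hclose : ∀ τ ∈ Icc x y, |τ - ξ| ≤ δ) :
    (y - x)/2 ≤ ⟪derivWithin u (Icc 0 L) ξ, u y - u x⟫ := by
  set u' := derivWithin u (Icc 0 L) with hu'
  have hsub : Icc x y ⊆ Icc 0 L := Icc_subset_Icc hx.1 hy.2
  have hcont' : ContinuousOn u' (Icc 0 L) := deriv_cont L hL u hu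
  have hint : IntervalIntegrable u' volume x y :=
    (hcont'.mono (by rw [uIcc_of_le hxy]; exact hsub)).intervalIntegrable
  have hrep := integral_deriv L hL u hu hx hy hxy
  have hcomp : ∫ τ in x..y, ⟪u' ξ, u' τ⟫ = ⟪u' ξ, u y - u x⟫ := by
    rw [← hrep]
    exact (innerSL ℝ (u' ξ)).intervalIntegral_comp_comm hint
  rw [← hcomp]
  have hptwise : ∀ τ ∈ Icc x y, (1:ℝ)/2 ≤ ⟪u' ξ, u' τ⟫ := by
    intro τ hτ
    have h1 : ‖u' ξ‖ = 1 := hunit ξ hξ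
    have h2 : ‖u' τ‖ = 1 := hunit τ (hsub hτ)
    have h3 : ‖u' ξ - u' τ‖ ≤ 1/2 := hδ ξ hξ τ (hsub hτ) (by
      have := hclose τ hτ; rw [abs_sub_comm]; exact this)
    have hsq : ‖u' ξ - u' τ‖^2 = ‖u' ξ‖^2 - 2 * ⟪u' ξ, u' τ⟫ + ‖u' τ‖^2 := by
      rw [@norm_sub_sq_real]
    nlinarith [norm_nonneg (u' ξ - u' τ), sq_nonneg (‖u' ξ - u' τ‖)]
  have hintf : IntervalIntegrable (fun τ => ⟪u' ξ, u' τ⟫) volume x y :=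
    (continuousOn_const.inner (hcont'.mono (by rw [uIcc_of_le hxy]; exact hsub))).intervalIntegrable
  calc (y - x)/2 = ∫ _ in x..y, (1:ℝ)/2 := by
        rw [intervalIntegral.integral_const]; simp; ring
    _ ≤ ∫ τ in x..y, ⟪u' ξ, u' τ⟫ :=
        intervalIntegral.integral_mono_on hxy intervalIntegrable_const hintf hptwise

/-- chord lower bound on small scales -/
private lemma chordB (L δ : ℝ) (hL : 0 < L) (u : ℝ → EuclideanSpace ℝ (Fin 3))
    (hu : ContDiffOn ℝ (⊤ : ℕ∞) u (Icc 0 L))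
    (hunit : ∀ s ∈ Icc 0 L, ‖derivWithin u (Icc 0 L) s‖ = 1)
    (hδ : ∀ p ∈ Icc 0 L, ∀ q ∈ Icc 0 L, |p - q| ≤ δ →
      ‖derivWithin u (Icc 0 L) p - derivWithin u (Icc 0 L) q‖ ≤ 1/2)
    {x y : ℝ} (hx : x ∈ Icc 0 L) (hy : y ∈ Icc 0 L) (hxy : x ≤ y) (hyd : y - x ≤ δ) :
    (y - x)/2 ≤ ‖u y - u x‖ := by
  have hA := innerA L δ hL u hu hunit hδ hx hy hxy hx (by
    intro τ hτ
    rw [abs_of_nonneg (by linarith [hτ.1])]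
    linarith [hτ.2])
  have hcs := real_inner_le_norm (derivWithin u (Icc 0 L) x) (u y - u x)
  rw [hunit x hx, one_mul] at hcs
  linarith

/-- nonnegativity of inner products of nearby chords -/
private lemma chordC (L δ : ℝ) (hL : 0 < L) (u : ℝ → EuclideanSpace ℝ (Fin 3))
    (hu : ContDiffOn ℝ (⊤ : ℕ∞) u (Icc 0 L))
    (hunit : ∀ s ∈ Icc 0 L, ‖derivWithin u (Icc 0 L) s‖ = 1)
    (hδ : ∀ p ∈ Icc 0 L, ∀ q ∈ Icc 0 L, |p - q| ≤ δ →
      ‖derivWithin u (Icc 0 L) p - derivWithin u (Icc 0 L) q‖ ≤ 1/2)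
    {x y p q : ℝ} (hx : x ∈ Icc 0 L) (hy : y ∈ Icc 0 L) (hxy : x ≤ y)
    (hp : p ∈ Icc 0 L) (hq : q ∈ Icc 0 L) (hpq : p ≤ q)
    (hclose : ∀ τ ∈ Icc x y, ∀ ξ ∈ Icc p q, |τ - ξ| ≤ δ) :
    0 ≤ ⟪u y - u x, u q - u p⟫ := by
  set u' := derivWithin u (Icc 0 L) with hu'
  have hsub : Icc p q ⊆ Icc 0 L := Icc_subset_Icc hp.1 hq.2
  have hcont' : ContinuousOn u' (Icc 0 L) := deriv_cont L hL u hu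
  have hint : IntervalIntegrable u' volume p q :=
    (hcont'.mono (by rw [uIcc_of_le hpq]; exact hsub)).intervalIntegrable
  have hrep := integral_deriv L hL u hu hp hq hpq
  have hcomp : ∫ ξ in p..q, ⟪u y - u x, u' ξ⟫ = ⟪u y - u x, u q - u p⟫ := by
    rw [← hrep]
    exact (innerSL ℝ (u y - u x)).intervalIntegral_comp_comm hint
  rw [← hcomp]
  apply intervalIntegral.integral_nonneg hpq
  intro ξ hξ
  have hA := innerA L δ hL u hu hunit hδ hx hy hxy (hsub hξ)
    (fun τ hτ => hclose τ hτ ξ hξ)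
  rw [real_inner_comm]
  linarith

/-- Lipschitz bound -/
private lemma chordLip (L : ℝ) (hL : 0 < L) (u : ℝ → EuclideanSpace ℝ (Fin 3))
    (hu : ContDiffOn ℝ (⊤ : ℕ∞) u (Icc 0 L))
    (hunit : ∀ s ∈ Icc 0 L, ‖derivWithin u (Icc 0 L) s‖ = 1)
    {x y : ℝ} (hx : x ∈ Icc 0 L) (hy : y ∈ Icc 0 L) (hxy : x ≤ y) :
    ‖u y - u x‖ ≤ y - x := by
  rw [← integral_deriv L hL u hu hx hy hxy]
  have hsub : Icc x y ⊆ Icc 0 L := Icc_subset_Icc hx.1 hy.2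
  have := intervalIntegral.norm_integral_le_of_norm_le_const
    (C := 1) (f := derivWithin u (Icc 0 L)) (a := x) (b := y) (by
      intro τ hτ
      rw [uIoc_of_le hxy] at hτ
      exact le_of_eq (hunit τ (hsub (Ioc_subset_Icc_self hτ))))
  rw [abs_of_nonneg (by linarith), one_mul] at this
  exact this

/-- strict monotonicity in the upper endpoint -/
private lemma mono1 (L δ : ℝ) (hL : 0 < L) (u : ℝ → EuclideanSpace ℝ (Fin 3))
    (hu : ContDiffOn ℝ (⊤ : ℕ∞) u (Icc 0 L))
    (hunit : ∀ s ∈ Icc 0 L, ‖derivWithin u (Icc 0 L) s‖ = 1)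
    (hδ : ∀ p ∈ Icc 0 L, ∀ q ∈ Icc 0 L, |p - q| ≤ δ →
      ‖derivWithin u (Icc 0 L) p - derivWithin u (Icc 0 L) q‖ ≤ 1/2)
    {s x y : ℝ} (hs : s ∈ Icc 0 L) (hy : y ∈ Icc 0 L) (hsx : s ≤ x) (hxy : x < y)
    (hyd : y - s ≤ δ) :
    ‖u x - u s‖ < ‖u y - u s‖ := by
  have hx : x ∈ Icc 0 L := ⟨le_trans hs.1 hsx, le_trans hxy.le hy.2⟩
  have hinner : 0 ≤ ⟪u y - u x, u x - u s⟫ :=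
    chordC L δ hL u hu hunit hδ hx hy hxy.le hs hx hsx (by
      intro τ hτ ξ hξ
      rw [abs_of_nonneg (by linarith [hτ.1, hξ.2])]
      linarith [hτ.2, hξ.1])
  have hlow : (y - x)/2 ≤ ‖u y - u x‖ :=
    chordB L δ hL u hu hunit hδ hx hy hxy.le (by linarith)
  have hexp : ‖u y - u s‖^2 = ‖u y - u x‖^2 + 2 * ⟪u y - u x, u x - u s⟫ + ‖u x - u s‖^2 := by
    have : u y - u s = (u y - u x) + (u x - u s) := by abel
    rw [this, @norm_add_sq_real]
  have hsq : ‖u x - u s‖^2 < ‖u y - u s‖^2 := by nlinarith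
  exact lt_of_pow_lt_pow_left₀ 2 (norm_nonneg _) hsq

/-- strict antitonicity in the lower endpoint -/
private lemma mono2 (L δ : ℝ) (hL : 0 < L) (u : ℝ → EuclideanSpace ℝ (Fin 3))
    (hu : ContDiffOn ℝ (⊤ : ℕ∞) u (Icc 0 L))
    (hunit : ∀ s ∈ Icc 0 L, ‖derivWithin u (Icc 0 L) s‖ = 1)
    (hδ : ∀ p ∈ Icc 0 L, ∀ q ∈ Icc 0 L, |p - q| ≤ δ →
      ‖derivWithin u (Icc 0 L) p - derivWithin u (Icc 0 L) q‖ ≤ 1/2)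
    {x y t : ℝ} (hx : x ∈ Icc 0 L) (ht : t ∈ Icc 0 L) (hxy : x < y) (hyt : y ≤ t)
    (htd : t - x ≤ δ) :
    ‖u t - u y‖ < ‖u t - u x‖ := by
  have hy : y ∈ Icc 0 L := ⟨le_trans hx.1 hxy.le, le_trans hyt ht.2⟩
  have hinner : 0 ≤ ⟪u t - u y, u y - u x⟫ := by
    have := chordC L δ hL u hu hunit hδ hy ht hyt hx hy hxy.le (by
      intro τ hτ ξ hξ
      rw [abs_of_nonneg (by linarith [hτ.1, hξ.2])]
      linarith [hτ.2, hξ.1])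
    exact this
  have hlow : (y - x)/2 ≤ ‖u y - u x‖ :=
    chordB L δ hL u hu hunit hδ hx hy hxy.le (by linarith)
  have hexp : ‖u t - u x‖^2 = ‖u t - u y‖^2 + 2 * ⟪u t - u y, u y - u x⟫ + ‖u y - u x‖^2 := by
    have : u t - u x = (u t - u y) + (u y - u x) := by abel
    rw [this, @norm_add_sq_real]
  have hsq : ‖u t - u y‖^2 < ‖u t - u x‖^2 := by nlinarith
  exact lt_of_pow_lt_pow_left₀ 2 (norm_nonneg _) hsq

/-- the infimum defining `lnext` is attained and small -/
private lemma lnext_mem (L δ : ℝ) (hL : 0 < L) (hδpos : 0 < δ)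
    (u : ℝ → EuclideanSpace ℝ (Fin 3))
    (hu : ContDiffOn ℝ (⊤ : ℕ∞) u (Icc 0 L))
    (hunit : ∀ s ∈ Icc 0 L, ‖derivWithin u (Icc 0 L) s‖ = 1)
    (hδ : ∀ p ∈ Icc 0 L, ∀ q ∈ Icc 0 L, |p - q| ≤ δ →
      ‖derivWithin u (Icc 0 L) p - derivWithin u (Icc 0 L) q‖ ≤ 1/2)
    {r a : ℝ} (hr : 0 < r) (hrδ : r ≤ δ/4) (ha : 0 ≤ a)
    (hS : {l : ℝ | 0 < l ∧ a + l ≤ L ∧ ‖u (a + l) - u a‖ = r}.Nonempty) :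
    sInf {l : ℝ | 0 < l ∧ a + l ≤ L ∧ ‖u (a + l) - u a‖ = r} ∈
      {l : ℝ | 0 < l ∧ a + l ≤ L ∧ ‖u (a + l) - u a‖ = r} ∧
    sInf {l : ℝ | 0 < l ∧ a + l ≤ L ∧ ‖u (a + l) - u a‖ = r} ≤ 2 * r := by
  set S := {l : ℝ | 0 < l ∧ a + l ≤ L ∧ ‖u (a + l) - u a‖ = r} with hSdef
  have haL : a ≤ L := by
    obtain ⟨l₀, hl₀⟩ := hS; linarith [hl₀.1, hl₀.2.1]
  have haI : a ∈ Icc 0 L := ⟨ha, haL⟩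
  have hlb : ∀ l ∈ S, r ≤ l := by
    intro l hl
    have hal : a + l ∈ Icc 0 L := ⟨by linarith [hl.1], hl.2.1⟩
    have := chordLip L hL u hu hunit haI hal (by linarith [hl.1])
    rw [hl.2.2] at this; linarith
  have hbdd : BddBelow S := ⟨r, hlb⟩
  -- there is an element of S that is at most 2r
  have h2r : ∃ l ∈ S, l ≤ 2 * r := by
    obtain ⟨l₀, hl₀⟩ := hS
    rcases le_or_gt l₀ δ with hld | hld
    · refine ⟨l₀, hl₀, ?_⟩
      have hal : a + l₀ ∈ Icc 0 L := ⟨by linarith [hl₀.1], hl₀.2.1⟩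
      have := chordB L δ hL u hu hunit hδ haI hal (by linarith [hl₀.1]) (by linarith)
      rw [hl₀.2.2] at this; linarith
    · have haδL : a + δ ≤ L := by linarith [hl₀.2.1]
      set g : ℝ → ℝ := fun l => ‖u (a + l) - u a‖ with hgdef
      have hgc : ContinuousOn g (Icc 0 δ) := by
        apply ContinuousOn.norm
        apply ContinuousOn.sub _ continuousOn_const
        apply hu.continuousOn.comp (continuous_const.add continuous_id).continuousOn
        intro l hl
        show a + l ∈ Icc 0 L
        exact ⟨by linarith [hl.1], by linarith [hl.2]⟩
      have hg0 : g 0 = 0 := by simp [hgdef]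
      have hgδ : r ≤ g δ := by
        have hal : a + δ ∈ Icc 0 L := ⟨by linarith, haδL⟩
        have := chordB L δ hL u hu hunit hδ haI hal (by linarith) (by linarith)
        simp only [hgdef]
        have h' : (a + δ) - a = δ := by ring
        rw [h'] at this
        linarith
      have := intermediate_value_Icc hδpos.le hgc
      have hrmem : r ∈ Icc (g 0) (g δ) := by rw [hg0]; exact ⟨hr.le, hgδ⟩
      obtain ⟨l', hl'I, hl'⟩ := this hrmem
      have hl'pos : 0 < l' := by
        rcases eq_or_lt_of_le hl'I.1 with h | h
        · exfalso; rw [← h] at hl'; rw [hg0] at hl'; linarith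
        · exact h
      have hmem : l' ∈ S := ⟨hl'pos, by linarith [hl'I.2], hl'⟩
      refine ⟨l', hmem, ?_⟩
      have hal : a + l' ∈ Icc 0 L := ⟨by linarith, by linarith [hl'I.2]⟩
      have := chordB L δ hL u hu hunit hδ haI hal (by linarith) (by linarith [hl'I.2])
      have h' : (a + l') - a = l' := by ring
      rw [h'] at this
      have : l'/2 ≤ r := by rw [← hl']; exact this
      linarith
  obtain ⟨l₂, hl₂S, hl₂⟩ := h2r
  have hinfle : sInf S ≤ 2 * r := le_trans (csInf_le hbdd hl₂S) hl₂
  -- S is closed (as a subset of [r, L-a])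
  have hgc' : ContinuousOn (fun l => ‖u (a + l) - u a‖) (Icc r (L - a)) := by
    apply ContinuousOn.norm
    apply ContinuousOn.sub _ continuousOn_const
    apply hu.continuousOn.comp (continuous_const.add continuous_id).continuousOn
    intro l hl
    show a + l ∈ Icc 0 L
    exact ⟨by linarith [hl.1], by linarith [hl.2]⟩
  have hSK : S = Icc r (L - a) ∩ (fun l => ‖u (a + l) - u a‖) ⁻¹' {r} := by
    ext l
    simp only [hSdef, mem_setOf_eq, mem_inter_iff, mem_Icc, mem_preimage, mem_singleton_iff]
    constructor
    · intro hl
      exact ⟨⟨hlb l hl, by linarith [hl.2.1]⟩, hl.2.2⟩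
    · intro hl
      exact ⟨by linarith [hl.1.1], by linarith [hl.1.2], hl.2⟩
  have hclosed : IsClosed S := by
    rw [hSK]
    exact hgc'.preimage_isClosed_of_isClosed isClosed_Icc isClosed_singleton
  exact ⟨hclosed.csInf_mem ⟨l₂, hl₂S⟩ hbdd, hinfle⟩

/-- for a smooth arc-length parametrized curve, for all sufficiently small
chord lengths `r`, the map `s ↦ s + l(s,r)` is strictly increasing (wherever defined). -/
theorem stmt6 (L : ℝ) (hL : 0 < L) (u : ℝ → EuclideanSpace ℝ (Fin 3))
    (hu : ContDiffOn ℝ (⊤ : ℕ∞) u (Icc 0 L))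
    (hunit : ∀ s ∈ Icc 0 L, ‖derivWithin u (Icc 0 L) s‖ = 1) :
    ∃ r₀ > (0:ℝ), ∀ r : ℝ, 0 < r → r ≤ r₀ → ∀ a b : ℝ, 0 ≤ a → a < b → b < L →
      {l : ℝ | 0 < l ∧ a + l ≤ L ∧ ‖u (a + l) - u a‖ = r}.Nonempty →
      {l : ℝ | 0 < l ∧ b + l ≤ L ∧ ‖u (b + l) - u b‖ = r}.Nonempty →
      a + lnext u L a r < b + lnext u L b r := by
  have hcont' : ContinuousOn (derivWithin u (Icc 0 L)) (Icc 0 L) := deriv_cont L hL u hu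
  have huc : UniformContinuousOn (derivWithin u (Icc 0 L)) (Icc 0 L) :=
    isCompact_Icc.uniformContinuousOn_of_continuous hcont'
  rw [Metric.uniformContinuousOn_iff] at huc
  obtain ⟨δ', hδ'pos, hδ'⟩ := huc (1/2) (by norm_num)
  set δ : ℝ := δ'/2 with hδdef
  have hδpos : 0 < δ := by positivity
  have hδ : ∀ p ∈ Icc 0 L, ∀ q ∈ Icc 0 L, |p - q| ≤ δ →
      ‖derivWithin u (Icc 0 L) p - derivWithin u (Icc 0 L) q‖ ≤ 1/2 := by
    intro p hp q hq hpq
    have := hδ' p hp q hq (show dist p q < δ' by rw [Real.dist_eq]; linarith)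
    rw [dist_eq_norm] at this; linarith
  refine ⟨δ/4, by positivity, ?_⟩
  intro r hr hrδ a b ha hab hbL hSa hSb
  obtain ⟨hmema, hlea⟩ := lnext_mem L δ hL hδpos u hu hunit hδ hr hrδ ha hSa
  obtain ⟨hmemb, hleb⟩ := lnext_mem L δ hL hδpos u hu hunit hδ hr hrδ
    (show (0:ℝ) ≤ b by linarith) hSb
  rw [show sInf {l : ℝ | 0 < l ∧ a + l ≤ L ∧ ‖u (a + l) - u a‖ = r} = lnext u L a r from rfl]
    at hmema hlea
  rw [show sInf {l : ℝ | 0 < l ∧ b + l ≤ L ∧ ‖u (b + l) - u b‖ = r} = lnext u L b r from rfl]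
    at hmemb hleb
  set la := lnext u L a r with hla
  set lb := lnext u L b r with hlb
  obtain ⟨hlapos, htaL, hnorma⟩ := hmema
  obtain ⟨hlbpos, htbL, hnormb⟩ := hmemb
  by_contra hcon
  push_neg at hcon
  -- hcon : b + lb ≤ a + la
  have haI : a ∈ Icc 0 L := ⟨ha, by linarith⟩
  have htbI : b + lb ∈ Icc 0 L := ⟨by linarith, htbL⟩
  have htaI : a + la ∈ Icc 0 L := ⟨by linarith, htaL⟩
  -- step 1 : r < ‖u (b + lb) - u a‖
  have hstep1 : r < ‖u (b + lb) - u a‖ := by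
    have := mono2 L δ hL u hu hunit hδ haI htbI hab (by linarith) (by linarith)
    rw [hnormb] at this
    exact this
  rcases eq_or_lt_of_le hcon with heq | hlt
  · rw [← heq] at hnorma
    linarith
  · have hstep2 : ‖u (b + lb) - u a‖ < ‖u (a + la) - u a‖ :=
      mono1 L δ hL u hu hunit hδ haI htaI (by linarith) hlt (by linarith)
    rw [hnorma] at hstep2
    linarith
end

section
/- Let L > 0 and let u : [0,L] → ℝ³ be smooth with |u'(s)| = 1 for all s. For r > 0 define recursively s₀(r) := 0 and, as long as max_{s∈[s_i(r),L]} |u(s) − u(s_i(r))| ≥ r, set s_{i+1}(r) := min{s ∈ [s_i(r),L] : |u(s) − u(s_i(r))| = r}; let N(r) be the first index i for which max_{s∈[s_i(r),L]} |u(s) − u(s_i(r))| < r. Then there exists r₀ > 0 such that: (i) for all 0 < ρ ≤ r ≤ r₀ one has N(ρ) ≥ N(r) (the function r ↦ N(r) is monotonically decreasing); and (ii) for every r ∈ (0,r₀] there exists δ > 0 with N(ρ) = N(r) for all ρ ∈ (r−δ, r] (the function r ↦ N(r) is left-continuous). -/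
open scoped RealInnerProductSpace


open Set

/-- The greedy chord construction: `greedyS u L r i` is the arc-length parameter `s_i(r)`,
defined by `s₀ := 0` and `s_{i+1} := min {t ∈ [s_i, L] : |u(t) − u(s_i)| = r}`
(the minimum exists, and agrees with the infimum, whenever the set is nonempty;
beyond the stopping index the values are irrelevant). -/
noncomputable def greedyS (u : ℝ → EuclideanSpace ℝ (Fin 3)) (L r : ℝ) : ℕ → ℝ
  | 0 => 0
  | i + 1 => sInf {t : ℝ | t ∈ Icc (greedyS u L r i) L ∧ ‖u t - u (greedyS u L r i)‖ = r}

/-- `greedyN u L r` is `N(r)`, the first index `i` for which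
`max_{t ∈ [s_i(r), L]} |u(t) − u(s_i(r))| < r`. -/
noncomputable def greedyN (u : ℝ → EuclideanSpace ℝ (Fin 3)) (L r : ℝ) : ℕ :=
  sInf {i : ℕ | ∀ t ∈ Icc (greedyS u L r i) L, ‖u t - u (greedyS u L r i)‖ < r}

section Aux

variable {u : ℝ → EuclideanSpace ℝ (Fin 3)} {L δ₀ : ℝ}

/-- local notation for the derivative -/
local notation "D" => derivWithin u (Icc 0 L)

-- Lipschitz bound
lemma lip (hder : ∀ s ∈ Icc 0 L, HasDerivWithinAt u (D s) (Icc 0 L) s)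
    (hunit : ∀ s ∈ Icc 0 L, ‖D s‖ = 1)
    {x y : ℝ} (hx : x ∈ Icc 0 L) (hy : y ∈ Icc 0 L) : ‖u y - u x‖ ≤ |y - x| := by
  have := Convex.norm_image_sub_le_of_norm_hasDerivWithin_le (f := u) (f' := D) (C := 1)
    hder (fun s hs => le_of_eq (hunit s hs)) (convex_Icc 0 L) hx hy
  simpa using this

lemma lowc (hder : ∀ s ∈ Icc 0 L, HasDerivWithinAt u (D s) (Icc 0 L) s)
    {x y m : ℝ} {c : EuclideanSpace ℝ (Fin 3)}
    (hx : x ∈ Icc 0 L) (hy : y ∈ Icc 0 L) (hxy : x ≤ y)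
    (h : ∀ a ∈ Icc x y, m ≤ ⟪D a, c⟫) : (y - x) * m ≤ ⟪u y - u x, c⟫ := by
  have hsub : Icc x y ⊆ Icc 0 L := Icc_subset_Icc hx.1 hy.2
  have hucont : ContinuousOn u (Icc 0 L) := fun s hs => (hder s hs).continuousWithinAt
  have hg : MonotoneOn (fun t => ⟪u t, c⟫ - m * t) (Icc x y) := by
    apply monotoneOn_of_hasDerivWithinAt_nonneg (convex_Icc x y)
      (f' := fun t => ⟪D t, c⟫ - m)
    · exact ContinuousOn.sub (ContinuousOn.inner (hucont.mono hsub) continuousOn_const)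
        (continuousOn_const.mul continuousOn_id)
    · intro t ht
      rw [interior_Icc] at ht
      have h1 : HasDerivWithinAt u (D t) (interior (Icc x y)) t :=
        (hder t (hsub (Ioo_subset_Icc_self ht))).mono
          (by rw [interior_Icc]; exact (Ioo_subset_Icc_self.trans hsub))
      have h2 := HasDerivWithinAt.inner ℝ h1
        (hasDerivWithinAt_const t (interior (Icc x y)) c)
      simp only [inner_zero_right, zero_add] at h2
      rw [interior_Icc]
      have h3 : HasDerivWithinAt (fun t : ℝ => m * t) m (Ioo x y) t := by
        simpa using (hasDerivWithinAt_id t (Ioo x y)).const_mul m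
      rw [interior_Icc] at h2
      exact h2.sub h3
    · intro t ht
      rw [interior_Icc] at ht
      have := h t (Ioo_subset_Icc_self ht)
      linarith
  have := hg (left_mem_Icc.2 hxy) (right_mem_Icc.2 hxy) hxy
  have hs : ⟪u y - u x, c⟫ = ⟪u y, c⟫ - ⟪u x, c⟫ := inner_sub_left _ _ _
  simp only at this
  linarith


lemma clb (hder : ∀ s ∈ Icc 0 L, HasDerivWithinAt u (D s) (Icc 0 L) s)
    (hunit : ∀ s ∈ Icc 0 L, ‖D s‖ = 1)
    (hwin : ∀ x ∈ Icc 0 L, ∀ y ∈ Icc 0 L, |x - y| ≤ δ₀ → (1:ℝ)/2 ≤ ⟪D x, D y⟫)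
    {x y : ℝ} (hx : x ∈ Icc 0 L) (hy : y ∈ Icc 0 L) (hxy : x ≤ y) (hw : y - x ≤ δ₀) :
    (y - x)/2 ≤ ‖u y - u x‖ := by
  have hsub : Icc x y ⊆ Icc 0 L := Icc_subset_Icc hx.1 hy.2
  have h1 : (y - x) * (1/2) ≤ ⟪u y - u x, D x⟫ := by
    apply lowc hder hx hy hxy
    intro a ha
    exact hwin a (hsub ha) x hx (by rw [abs_sub_le_iff]; constructor <;> [linarith [ha.1, ha.2]; linarith [ha.1, ha.2]])
  have h2 : ⟪u y - u x, D x⟫ ≤ ‖u y - u x‖ * ‖D x‖ := real_inner_le_norm _ _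
  rw [hunit x hx, mul_one] at h2
  linarith

lemma keyinner (hder : ∀ s ∈ Icc 0 L, HasDerivWithinAt u (D s) (Icc 0 L) s)
    (hwin : ∀ x ∈ Icc 0 L, ∀ y ∈ Icc 0 L, |x - y| ≤ δ₀ → (1:ℝ)/2 ≤ ⟪D x, D y⟫)
    {s t t' : ℝ} (hs : s ∈ Icc 0 L) (ht' : t' ∈ Icc 0 L)
    (h1 : s ≤ t) (h2 : t ≤ t') (hw : t' - s ≤ δ₀) :
    (t' - t) * ((t - s)/2) ≤ ⟪u t' - u t, u t - u s⟫ := by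
  have ht : t ∈ Icc 0 L := ⟨le_trans hs.1 h1, le_trans h2 ht'.2⟩
  apply lowc hder ht ht' h2
  intro a ha
  have ha' : a ∈ Icc 0 L := ⟨le_trans ht.1 ha.1, le_trans ha.2 ht'.2⟩
  have key : (t - s) * (1/2) ≤ ⟪u t - u s, D a⟫ := by
    apply lowc hder hs ht h1
    intro b hb
    exact hwin b ⟨le_trans hs.1 hb.1, le_trans hb.2 ht.2⟩ a ha'
      (by rw [abs_sub_le_iff]; constructor <;> [linarith [hb.1, hb.2, ha.1, ha.2]; linarith [hb.1, hb.2, ha.1, ha.2]])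
  rw [real_inner_comm]
  linarith

lemma inc (hder : ∀ s ∈ Icc 0 L, HasDerivWithinAt u (D s) (Icc 0 L) s)
    (hunit : ∀ s ∈ Icc 0 L, ‖D s‖ = 1)
    (hwin : ∀ x ∈ Icc 0 L, ∀ y ∈ Icc 0 L, |x - y| ≤ δ₀ → (1:ℝ)/2 ≤ ⟪D x, D y⟫)
    {s t t' : ℝ} (hs : s ∈ Icc 0 L) (ht' : t' ∈ Icc 0 L)
    (h1 : s ≤ t) (h2 : t ≤ t') (hw : t' - s ≤ δ₀) :
    ‖u t - u s‖ + (t' - t)/2 ≤ ‖u t' - u s‖ := by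
  have ht : t ∈ Icc 0 L := ⟨le_trans hs.1 h1, le_trans h2 ht'.2⟩
  rcases eq_or_lt_of_le h1 with rfl | hst
  · have := clb hder hunit hwin hs ht' h2 hw
    simp only [sub_self, norm_zero]
    linarith
  · set d := ‖u t - u s‖ with hd
    have hdlb : (t - s)/2 ≤ d := clb hder hunit hwin hs ht h1 (by linarith)
    have hdpos : 0 < d := by linarith
    have hdub : d ≤ t - s := by
      have := lip hder hunit hs ht
      rwa [abs_of_nonneg (by linarith)] at this
    have hkey := keyinner hder hwin hs ht' h1 h2 hw
    have hsplit : ⟪u t' - u s, u t - u s⟫ = ⟪u t' - u t, u t - u s⟫ + d^2 := by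
      have : u t' - u s = (u t' - u t) + (u t - u s) := by abel
      rw [this, inner_add_left, real_inner_self_eq_norm_sq]
    have hcs : ⟪u t' - u s, u t - u s⟫ ≤ ‖u t' - u s‖ * d := by
      have := real_inner_le_norm (u t' - u s) (u t - u s); rwa [← hd] at this
    have htt : 0 ≤ t' - t := by linarith
    nlinarith [norm_nonneg (u t' - u s)]

lemma dec (hder : ∀ s ∈ Icc 0 L, HasDerivWithinAt u (D s) (Icc 0 L) s)
    (hwin : ∀ x ∈ Icc 0 L, ∀ y ∈ Icc 0 L, |x - y| ≤ δ₀ → (1:ℝ)/2 ≤ ⟪D x, D y⟫)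
    {s s' t : ℝ} (hs : s ∈ Icc 0 L) (ht : t ∈ Icc 0 L)
    (h1 : s ≤ s') (h2 : s' ≤ t) (hw : t - s ≤ δ₀) :
    ‖u t - u s'‖ ≤ ‖u t - u s‖ := by
  set d := ‖u t - u s'‖ with hd
  rcases eq_or_lt_of_le (norm_nonneg (u t - u s')) with h0 | hdpos
  · rw [hd, ← h0]; exact norm_nonneg _
  · have hkey := keyinner hder hwin hs ht h1 h2 hw
    have hsplit : ⟪u t - u s, u t - u s'⟫ = d^2 + ⟪u t - u s', u s' - u s⟫ := by
      have : u t - u s = (u t - u s') + (u s' - u s) := by abel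
      nth_rewrite 1 [this]
      rw [inner_add_left, real_inner_self_eq_norm_sq, real_inner_comm]
    have hcs : ⟪u t - u s, u t - u s'⟫ ≤ ‖u t - u s‖ * d := real_inner_le_norm _ _
    have h3 : 0 ≤ (t - s') * ((s' - s)/2) := by
      apply mul_nonneg <;> [linarith; linarith]
    nlinarith [norm_nonneg (u t - u s)]

lemma ucont (hder : ∀ s ∈ Icc 0 L, HasDerivWithinAt u (D s) (Icc 0 L) s) :
    ContinuousOn u (Icc 0 L) := fun s hs => (hder s hs).continuousWithinAt

lemma ivt (hder : ∀ s ∈ Icc 0 L, HasDerivWithinAt u (D s) (Icc 0 L) s)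
    {s t r : ℝ} (hs : s ∈ Icc 0 L) (ht : t ∈ Icc s L) (hr : 0 ≤ r)
    (h : r ≤ ‖u t - u s‖) : ∃ t' ∈ Icc s t, ‖u t' - u s‖ = r := by
  have hsub : Icc s t ⊆ Icc 0 L := Icc_subset_Icc hs.1 ht.2
  have hc : ContinuousOn (fun a => ‖u a - u s‖) (Icc s t) :=
    (((ucont hder).mono hsub).sub continuousOn_const).norm
  have hmem : r ∈ Icc (‖u s - u s‖) (‖u t - u s‖) := by
    simp only [sub_self, norm_zero]; exact ⟨hr, h⟩
  obtain ⟨t', ht', h'⟩ := intermediate_value_Icc ht.1 hc hmem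
  exact ⟨t', ht', h'⟩

lemma stepA (hder : ∀ s ∈ Icc 0 L, HasDerivWithinAt u (D s) (Icc 0 L) s)
    {s r : ℝ} (hr : 0 < r) (hs : s ∈ Icc 0 L)
    (hex : ∃ t ∈ Icc s L, r ≤ ‖u t - u s‖) :
    sInf {t : ℝ | t ∈ Icc s L ∧ ‖u t - u s‖ = r} ∈ {t : ℝ | t ∈ Icc s L ∧ ‖u t - u s‖ = r} := by
  set A := {t : ℝ | t ∈ Icc s L ∧ ‖u t - u s‖ = r} with hA
  obtain ⟨t, ht, hft⟩ := hex
  obtain ⟨t', ht', hft'⟩ := ivt hder hs ht hr.le hft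
  have hne : A.Nonempty := ⟨t', ⟨⟨ht'.1, le_trans ht'.2 ht.2⟩, hft'⟩⟩
  have hbdd : BddBelow A := ⟨s, fun a ha => ha.1.1⟩
  have hclosed : IsClosed A := by
    have : A = Icc s L ∩ (fun a => ‖u a - u s‖) ⁻¹' {r} := by
      ext a; simp [hA, Set.mem_setOf_eq]
    rw [this]
    exact ContinuousOn.preimage_isClosed_of_isClosed
      ((((ucont hder).mono (Icc_subset_Icc hs.1 le_rfl)).sub continuousOn_const).norm)
      isClosed_Icc isClosed_singleton
  exact hclosed.csInf_mem hne hbdd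

lemma chain (hL : 0 ≤ L) (hder : ∀ s ∈ Icc 0 L, HasDerivWithinAt u (D s) (Icc 0 L) s)
    (hunit : ∀ s ∈ Icc 0 L, ‖D s‖ = 1) {r : ℝ} (hr : 0 < r) (i : ℕ)
    (hstop : ∀ j < i, ∃ t ∈ Icc (greedyS u L r j) L, r ≤ ‖u t - u (greedyS u L r j)‖) :
    greedyS u L r i ∈ Icc 0 L ∧ r * i ≤ greedyS u L r i ∧
      ∀ j < i, greedyS u L r (j+1) ∈ Icc (greedyS u L r j) L ∧
        ‖u (greedyS u L r (j+1)) - u (greedyS u L r j)‖ = r := by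
  induction i with
  | zero => exact ⟨by simp [greedyS, hL], by simp [greedyS], by simp⟩
  | succ i IH =>
    obtain ⟨hSi, hSilb, hsteps⟩ := IH (fun j hj => hstop j (Nat.lt_succ_of_lt hj))
    have hmem := stepA hder hr hSi (hstop i (Nat.lt_succ_self i))
    have hdef : greedyS u L r (i+1) =
        sInf {t : ℝ | t ∈ Icc (greedyS u L r i) L ∧ ‖u t - u (greedyS u L r i)‖ = r} := rfl
    rw [← hdef] at hmem
    have hmemK : greedyS u L r (i+1) ∈ Icc 0 L :=
      ⟨le_trans hSi.1 hmem.1.1, hmem.1.2⟩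
    have hinc : greedyS u L r i + r ≤ greedyS u L r (i+1) := by
      have hl := lip hder hunit hSi hmemK
      rw [hmem.2, abs_of_nonneg (by linarith [hmem.1.1])] at hl
      linarith
    refine ⟨hmemK, ?_, ?_⟩
    · push_cast; linarith
    · intro j hj
      rcases Nat.lt_succ_iff_lt_or_eq.1 hj with h | rfl
      · exact hsteps j h
      · exact ⟨hmem.1, hmem.2⟩

lemma stop_nonempty (hL : 0 ≤ L)
    (hder : ∀ s ∈ Icc 0 L, HasDerivWithinAt u (D s) (Icc 0 L) s)
    (hunit : ∀ s ∈ Icc 0 L, ‖D s‖ = 1) {r : ℝ} (hr : 0 < r) :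
    {i : ℕ | ∀ t ∈ Icc (greedyS u L r i) L, ‖u t - u (greedyS u L r i)‖ < r}.Nonempty := by
  by_contra hc
  rw [Set.not_nonempty_iff_eq_empty] at hc
  have hall : ∀ i : ℕ, ∃ t ∈ Icc (greedyS u L r i) L, r ≤ ‖u t - u (greedyS u L r i)‖ := by
    intro i
    have hi : i ∉ ({} : Set ℕ) := Set.notMem_empty i
    rw [← hc] at hi
    simp only [Set.mem_setOf_eq, not_forall, not_lt, exists_prop] at hi
    exact hi
  obtain ⟨n, hn⟩ := exists_nat_gt (L / r)
  have h1 : L < r * n := by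
    rw [div_lt_iff₀ hr] at hn; linarith
  have h2 := chain hL hder hunit hr n (fun j _ => hall j)
  linarith [h2.1.2, h2.2.1]

lemma greedyN_mem (hL : 0 ≤ L)
    (hder : ∀ s ∈ Icc 0 L, HasDerivWithinAt u (D s) (Icc 0 L) s)
    (hunit : ∀ s ∈ Icc 0 L, ‖D s‖ = 1) {r : ℝ} (hr : 0 < r) :
    ∀ t ∈ Icc (greedyS u L r (greedyN u L r)) L,
      ‖u t - u (greedyS u L r (greedyN u L r))‖ < r :=
  Nat.sInf_mem (stop_nonempty hL hder hunit hr)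

lemma not_stop_of_lt {r : ℝ} {i : ℕ} (hi : i < greedyN u L r) :
    ∃ t ∈ Icc (greedyS u L r i) L, r ≤ ‖u t - u (greedyS u L r i)‖ := by
  have := Nat.notMem_of_lt_sInf hi
  simp only [Set.mem_setOf_eq, not_forall, not_lt, exists_prop] at this
  exact this

lemma mono_aux (hL : 0 ≤ L)
    (hder : ∀ s ∈ Icc 0 L, HasDerivWithinAt u (D s) (Icc 0 L) s)
    (hunit : ∀ s ∈ Icc 0 L, ‖D s‖ = 1)
    (hwin : ∀ x ∈ Icc 0 L, ∀ y ∈ Icc 0 L, |x - y| ≤ δ₀ → (1:ℝ)/2 ≤ ⟪D x, D y⟫)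
    {ρ r : ℝ} (hρ : 0 < ρ) (hρr : ρ ≤ r) (hrδ : 4*r ≤ δ₀) :
    ∀ i, i ≤ greedyN u L r →
      greedyS u L ρ i ≤ greedyS u L r i ∧
      (i < greedyN u L r →
        ∃ t ∈ Icc (greedyS u L ρ i) L, ρ ≤ ‖u t - u (greedyS u L ρ i)‖) := by
  have hr : 0 < r := lt_of_lt_of_le hρ hρr
  have hδ : 0 < δ₀ := by linarith
  intro i
  induction i using Nat.strong_induction_on with
  | _ i IH =>
  intro hi
  match i with
  | 0 =>
    refine ⟨le_refl _, fun h0 => ?_⟩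
    obtain ⟨t, htm, htf⟩ := not_stop_of_lt h0
    have h00 : greedyS u L r 0 = greedyS u L ρ 0 := rfl
    rw [h00] at htm htf
    exact ⟨t, htm, le_trans hρr htf⟩
  | (j+1) =>
    have hj : j < greedyN u L r := Nat.lt_of_succ_le hi
    have hstopρ : ∀ k < j+1, ∃ t ∈ Icc (greedyS u L ρ k) L, ρ ≤ ‖u t - u (greedyS u L ρ k)‖ :=
      fun k hk => (IH k hk (le_of_lt (lt_of_lt_of_le hk hi))).2 (lt_of_lt_of_le hk hi)
    have hstopr : ∀ k < j+1, ∃ t ∈ Icc (greedyS u L r k) L, r ≤ ‖u t - u (greedyS u L r k)‖ :=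
      fun k hk => not_stop_of_lt (lt_of_lt_of_le hk hi)
    have chainρ := chain hL hder hunit hρ (j+1) hstopρ
    have chainr := chain hL hder hunit hr (j+1) hstopr
    have chainρj := chain hL hder hunit hρ j (fun k hk => hstopρ k (Nat.lt_succ_of_lt hk))
    have chainrj := chain hL hder hunit hr j (fun k hk => hstopr k (Nat.lt_succ_of_lt hk))
    have hsρK : greedyS u L ρ j ∈ Icc 0 L := chainρj.1
    have hsrK : greedyS u L r j ∈ Icc 0 L := chainrj.1
    have hss : greedyS u L ρ j ≤ greedyS u L r j := (IH j (Nat.lt_succ_self j) hj.le).1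
    have hTfacts := chainr.2.2 j (Nat.lt_succ_self j)
    have hTK : greedyS u L r (j+1) ∈ Icc 0 L := chainr.1
    -- goal 1
    have hbdd : BddBelow {t : ℝ | t ∈ Icc (greedyS u L ρ j) L ∧ ‖u t - u (greedyS u L ρ j)‖ = ρ} :=
      ⟨greedyS u L ρ j, fun a ha => ha.1.1⟩
    have hdefρ : greedyS u L ρ (j+1) =
        sInf {t : ℝ | t ∈ Icc (greedyS u L ρ j) L ∧ ‖u t - u (greedyS u L ρ j)‖ = ρ} := rfl
    have hgoal1 : greedyS u L ρ (j+1) ≤ greedyS u L r (j+1) := by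
      by_cases hcase : greedyS u L r (j+1) - greedyS u L ρ j ≤ δ₀
      · have hsρT : greedyS u L ρ j ≤ greedyS u L r (j+1) := hss.trans hTfacts.1.1
        have hdec := dec hder hwin hsρK hTK hss hTfacts.1.1 hcase
        rw [hTfacts.2] at hdec
        obtain ⟨t', ht', hft'⟩ := ivt hder hsρK ⟨hsρT, hTK.2⟩ hρ.le (le_trans hρr hdec)
        have : greedyS u L ρ (j+1) ≤ t' := by
          rw [hdefρ]
          exact csInf_le hbdd ⟨⟨ht'.1, le_trans ht'.2 hTK.2⟩, hft'⟩
        linarith [ht'.2]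
      · push_neg at hcase
        set m := greedyS u L ρ j + δ₀ with hm
        have hmT : m ≤ greedyS u L r (j+1) := by linarith
        have hmK : m ∈ Icc 0 L := ⟨by linarith [hsρK.1], le_trans hmT hTK.2⟩
        have hfm : ρ ≤ ‖u m - u (greedyS u L ρ j)‖ := by
          have := clb hder hunit hwin hsρK hmK (by linarith) (by simp [hm])
          have h2 : m - greedyS u L ρ j = δ₀ := by simp [hm]
          rw [h2] at this; linarith
        obtain ⟨t', ht', hft'⟩ := ivt hder hsρK ⟨by linarith, hmK.2⟩ hρ.le hfm
        have : greedyS u L ρ (j+1) ≤ t' := by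
          rw [hdefρ]
          exact csInf_le hbdd ⟨⟨ht'.1, le_trans ht'.2 hmK.2⟩, hft'⟩
        linarith [ht'.2]
    refine ⟨hgoal1, ?_⟩
    -- goal 2
    intro hlt
    obtain ⟨t, htm, htf⟩ := not_stop_of_lt hlt
    have haK : greedyS u L ρ (j+1) ∈ Icc 0 L := chainρ.1
    have hbK : greedyS u L r (j+1) ∈ Icc 0 L := chainr.1
    have htK : t ∈ Icc 0 L := ⟨le_trans hbK.1 htm.1, htm.2⟩
    by_cases hcase : t - greedyS u L ρ (j+1) ≤ δ₀
    · refine ⟨t, ⟨hgoal1.trans htm.1, htm.2⟩, ?_⟩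
      have hdec := dec hder hwin haK htK hgoal1 htm.1 hcase
      linarith
    · push_neg at hcase
      set m := greedyS u L ρ (j+1) + δ₀ with hm
      refine ⟨m, ⟨by linarith, by linarith [htm.2]⟩, ?_⟩
      have hmK : m ∈ Icc 0 L := ⟨by linarith [haK.1], by linarith [htm.2]⟩
      have := clb hder hunit hwin haK hmK (by linarith) (by simp [hm])
      have h2 : m - greedyS u L ρ (j+1) = δ₀ := by simp [hm]
      rw [h2] at this; linarith

lemma mono (hL : 0 ≤ L)
    (hder : ∀ s ∈ Icc 0 L, HasDerivWithinAt u (D s) (Icc 0 L) s)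
    (hunit : ∀ s ∈ Icc 0 L, ‖D s‖ = 1)
    (hwin : ∀ x ∈ Icc 0 L, ∀ y ∈ Icc 0 L, |x - y| ≤ δ₀ → (1:ℝ)/2 ≤ ⟪D x, D y⟫)
    {ρ r : ℝ} (hρ : 0 < ρ) (hρr : ρ ≤ r) (hrδ : 4*r ≤ δ₀) :
    greedyN u L r ≤ greedyN u L ρ := by
  by_contra hc
  push_neg at hc
  obtain ⟨t, htm, htf⟩ :=
    (mono_aux hL hder hunit hwin hρ hρr hrδ (greedyN u L ρ) hc.le).2 hc
  have h2 := greedyN_mem hL hder hunit hρ t htm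
  linarith

lemma step_ub (hder : ∀ s ∈ Icc 0 L, HasDerivWithinAt u (D s) (Icc 0 L) s)
    (hunit : ∀ s ∈ Icc 0 L, ‖D s‖ = 1)
    (hwin : ∀ x ∈ Icc 0 L, ∀ y ∈ Icc 0 L, |x - y| ≤ δ₀ → (1:ℝ)/2 ≤ ⟪D x, D y⟫)
    {s r : ℝ} (hr : 0 < r) (h2r : 2*r ≤ δ₀) (hs : s ∈ Icc 0 L)
    (hex : ∃ t ∈ Icc s L, r ≤ ‖u t - u s‖) :
    sInf {t : ℝ | t ∈ Icc s L ∧ ‖u t - u s‖ = r} ≤ s + 2*r := by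
  have hmem := stepA hder hr hs hex
  by_contra hc
  push_neg at hc
  have hmK : s + 2*r ∈ Icc 0 L := ⟨by linarith [hs.1], by linarith [hmem.1.2]⟩
  have hfm : r ≤ ‖u (s + 2*r) - u s‖ := by
    have := clb hder hunit hwin hs hmK (by linarith) (by linarith)
    linarith
  obtain ⟨t', ht', hft'⟩ := ivt hder hs ⟨by linarith, hmK.2⟩ hr.le hfm
  have hbdd : BddBelow {t : ℝ | t ∈ Icc s L ∧ ‖u t - u s‖ = r} :=
    ⟨s, fun a ha => ha.1.1⟩
  have := csInf_le hbdd (⟨⟨ht'.1, le_trans ht'.2 hmK.2⟩, hft'⟩ :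
    t' ∈ {t : ℝ | t ∈ Icc s L ∧ ‖u t - u s‖ = r})
  linarith [ht'.2]

lemma leftcont (hL : 0 ≤ L)
    (hder : ∀ s ∈ Icc 0 L, HasDerivWithinAt u (D s) (Icc 0 L) s)
    (hunit : ∀ s ∈ Icc 0 L, ‖D s‖ = 1)
    (hwin : ∀ x ∈ Icc 0 L, ∀ y ∈ Icc 0 L, |x - y| ≤ δ₀ → (1:ℝ)/2 ≤ ⟪D x, D y⟫)
    {r : ℝ} (hr : 0 < r) (hrδ : 4*r ≤ δ₀) :
    ∃ δ > (0:ℝ), ∀ ρ : ℝ, r - δ < ρ → ρ ≤ r → greedyN u L ρ = greedyN u L r := by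
  have hδ : 0 < δ₀ := by linarith
  set n := greedyN u L r with hn
  have hstopr : ∀ k < n, ∃ t ∈ Icc (greedyS u L r k) L, r ≤ ‖u t - u (greedyS u L r k)‖ :=
    fun k hk => not_stop_of_lt hk
  have chainrn := chain hL hder hunit hr n hstopr
  have hSrnK : greedyS u L r n ∈ Icc 0 L := chainrn.1
  obtain ⟨tmax, htmax, hMmax⟩ := (isCompact_Icc (a := greedyS u L r n) (b := L)).exists_isMaxOn
    (f := fun a => ‖u a - u (greedyS u L r n)‖) (nonempty_Icc.2 hSrnK.2)
    ((((ucont hder).mono (Icc_subset_Icc hSrnK.1 le_rfl)).sub continuousOn_const).norm)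
  set M := ‖u tmax - u (greedyS u L r n)‖ with hMdef
  have hMlt : M < r := greedyN_mem hL hder hunit hr tmax htmax
  have hM0 : 0 ≤ M := norm_nonneg _
  set ε := (r - M)/3 with hε
  have hεpos : 0 < ε := by linarith
  set C := (2:ℝ)^(n+1) with hC
  have hC1 : (1:ℝ) ≤ C := one_le_pow₀ (by norm_num)
  have hCpos : 0 < C := by linarith
  set δ := min (r/2) (min ε (δ₀/2) / C) with hδdef
  have hδpos : 0 < δ := lt_min (by linarith) (by positivity)
  refine ⟨δ, hδpos, ?_⟩
  intro ρ hρ1 hρ2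
  have hδr2 : δ ≤ r/2 := min_le_left _ _
  have hρpos : 0 < ρ := by linarith
  set e := r - ρ with he
  have he0 : 0 ≤ e := by linarith
  have heδ : e < δ := by linarith
  have hCe : C * e < min ε (δ₀/2) := by
    have h1 : e < min ε (δ₀/2) / C := lt_of_lt_of_le heδ (min_le_right _ _)
    calc C * e < C * (min ε (δ₀/2) / C) := by
          exact mul_lt_mul_of_pos_left h1 hCpos
      _ = min ε (δ₀/2) := by field_simp
  have hNρ : n ≤ greedyN u L ρ := mono hL hder hunit hwin hρpos hρ2 hrδ
  have hstopρ : ∀ k < n, ∃ t ∈ Icc (greedyS u L ρ k) L, ρ ≤ ‖u t - u (greedyS u L ρ k)‖ :=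
    fun k hk => not_stop_of_lt (lt_of_lt_of_le hk hNρ)
  -- key quantitative bound on drift
  have hpow : ∀ i : ℕ, i ≤ n → ((2:ℝ)^(i+1) - 2) * e ≤ C * e := by
    intro i hin
    apply mul_le_mul_of_nonneg_right _ he0
    have : (2:ℝ)^(i+1) ≤ 2^(n+1) := by
      apply pow_le_pow_right₀ (by norm_num)
      omega
    rw [hC]; linarith
  have hd : ∀ i ≤ n, greedyS u L r i - greedyS u L ρ i ≤ ((2:ℝ)^(i+1) - 2) * e := by
    intro i
    induction i with
    | zero =>
      intro _
      have h0 : greedyS u L r 0 = greedyS u L ρ 0 := rfl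
      rw [h0]
      simp
    | succ j IHj =>
      intro hjn
      have hj : j < n := Nat.lt_of_succ_le hjn
      have hdj := IHj hj.le
      have hdjub : greedyS u L r j - greedyS u L ρ j ≤ δ₀/2 :=
        le_trans hdj (le_trans (hpow j hj.le) (hCe.le.trans (min_le_right ε (δ₀/2))))
      have hstρ : ∀ k < j+1, ∃ t ∈ Icc (greedyS u L ρ k) L, ρ ≤ ‖u t - u (greedyS u L ρ k)‖ :=
        fun k hk => hstopρ k (lt_of_lt_of_le hk hjn)
      have hstr : ∀ k < j+1, ∃ t ∈ Icc (greedyS u L r k) L, r ≤ ‖u t - u (greedyS u L r k)‖ :=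
        fun k hk => hstopr k (lt_of_lt_of_le hk hjn)
      have chainρ := chain hL hder hunit hρpos (j+1) hstρ
      have chainr := chain hL hder hunit hr (j+1) hstr
      have chainρj := chain hL hder hunit hρpos j (fun k hk => hstρ k (Nat.lt_succ_of_lt hk))
      have chainrj := chain hL hder hunit hr j (fun k hk => hstr k (Nat.lt_succ_of_lt hk))
      have hsρK : greedyS u L ρ j ∈ Icc 0 L := chainρj.1
      have hsrK : greedyS u L r j ∈ Icc 0 L := chainrj.1
      have hstepρ := chainρ.2.2 j (Nat.lt_succ_self j)
      have hstepr := chainr.2.2 j (Nat.lt_succ_self j)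
      have hss : greedyS u L ρ j ≤ greedyS u L r j :=
        (mono_aux hL hder hunit hwin hρpos hρ2 hrδ j hj.le).1
      have hTT' : greedyS u L ρ (j+1) ≤ greedyS u L r (j+1) :=
        (mono_aux hL hder hunit hwin hρpos hρ2 hrδ (j+1) hjn).1
      have hub : greedyS u L r (j+1) ≤ greedyS u L r j + 2*r := by
        have hdefr : greedyS u L r (j+1) =
            sInf {t : ℝ | t ∈ Icc (greedyS u L r j) L ∧ ‖u t - u (greedyS u L r j)‖ = r} := rfl
        rw [hdefr]
        exact step_ub hder hunit hwin hr (by linarith) hsrK (hstr j (Nat.lt_succ_self j))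
      have hT'K : greedyS u L r (j+1) ∈ Icc 0 L := chainr.1
      have hwinOK : greedyS u L r (j+1) - greedyS u L ρ j ≤ δ₀ := by linarith
      have hinc := inc hder hunit hwin hsρK hT'K hstepρ.1.1 hTT' hwinOK
      rw [hstepρ.2] at hinc
      have htri : ‖u (greedyS u L r (j+1)) - u (greedyS u L ρ j)‖ ≤
          r + (greedyS u L r j - greedyS u L ρ j) := by
        have h1 : ‖u (greedyS u L r (j+1)) - u (greedyS u L ρ j)‖ ≤
            ‖u (greedyS u L r (j+1)) - u (greedyS u L r j)‖ +
            ‖u (greedyS u L r j) - u (greedyS u L ρ j)‖ :=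
          norm_sub_le_norm_sub_add_norm_sub _ _ _
        have h2 := lip hder hunit hsρK hsrK
        rw [abs_of_nonneg (by linarith)] at h2
        rw [hstepr.2] at h1
        linarith
      have hps : (2:ℝ)^(j+1+1) = 2 * 2^(j+1) := by ring
      rw [hps]
      linarith
  -- conclude: n is a stopping index for ρ
  have chainρn := chain hL hder hunit hρpos n hstopρ
  have hSρnK : greedyS u L ρ n ∈ Icc 0 L := chainρn.1
  have hdn : greedyS u L r n - greedyS u L ρ n ≤ C * e := le_trans (hd n le_rfl) (hpow n le_rfl)
  have hdnε : greedyS u L r n - greedyS u L ρ n < ε :=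
    lt_of_le_of_lt hdn (lt_of_lt_of_le hCe (min_le_left _ _))
  have hssn : greedyS u L ρ n ≤ greedyS u L r n :=
    (mono_aux hL hder hunit hwin hρpos hρ2 hrδ n le_rfl).1
  have hδε : δ ≤ ε := by
    have h1 : min ε (δ₀/2) / C ≤ min ε (δ₀/2) :=
      div_le_self (le_min hεpos.le (by linarith)) hC1
    have := min_le_right (r/2) (min ε (δ₀/2) / C)
    have h2 := min_le_left ε (δ₀/2)
    rw [hδdef]; linarith
  have hmemρ : n ∈ {i : ℕ | ∀ t ∈ Icc (greedyS u L ρ i) L,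
      ‖u t - u (greedyS u L ρ i)‖ < ρ} := by
    intro t htm
    have htK : t ∈ Icc 0 L := ⟨le_trans hSρnK.1 htm.1, htm.2⟩
    by_cases hcase : t ≤ greedyS u L r n
    · have h1 := lip hder hunit hSρnK htK
      rw [abs_of_nonneg (by linarith [htm.1])] at h1
      have heps2 : ε < ρ := by linarith
      linarith
    · push_neg at hcase
      have h1 : ‖u t - u (greedyS u L ρ n)‖ ≤
          ‖u t - u (greedyS u L r n)‖ + ‖u (greedyS u L r n) - u (greedyS u L ρ n)‖ :=
        norm_sub_le_norm_sub_add_norm_sub _ _ _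
      have h2 : ‖u t - u (greedyS u L r n)‖ ≤ M := hMmax ⟨hcase.le, htm.2⟩
      have h3 := lip hder hunit hSρnK hSrnK
      rw [abs_of_nonneg (by linarith)] at h3
      linarith
  have hle : greedyN u L ρ ≤ n := Nat.sInf_le hmemρ
  exact le_antisymm hle hNρ

end Aux

/-- for a smooth arc-length parametrized curve, the greedy chord-counting
function `r ↦ N(r)` is, for small `r`, monotonically decreasing and left-continuous. -/
theorem stmt7 (L : ℝ) (hL : 0 < L) (u : ℝ → EuclideanSpace ℝ (Fin 3))
    (hu : ContDiffOn ℝ (⊤ : ℕ∞) u (Icc 0 L))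
    (hunit : ∀ s ∈ Icc 0 L, ‖derivWithin u (Icc 0 L) s‖ = 1) :
    ∃ r₀ > (0:ℝ),
      (∀ ρ r : ℝ, 0 < ρ → ρ ≤ r → r ≤ r₀ → greedyN u L r ≤ greedyN u L ρ) ∧
      (∀ r : ℝ, 0 < r → r ≤ r₀ →
        ∃ δ > (0:ℝ), ∀ ρ : ℝ, r - δ < ρ → ρ ≤ r → greedyN u L ρ = greedyN u L r) := by
  have hder : ∀ s ∈ Icc 0 L, HasDerivWithinAt u (derivWithin u (Icc 0 L) s) (Icc 0 L) s :=
    fun s hs => (hu.differentiableOn (by norm_num) s hs).hasDerivWithinAt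
  have hD : ContinuousOn (derivWithin u (Icc 0 L)) (Icc 0 L) :=
    hu.continuousOn_derivWithin (uniqueDiffOn_Icc hL) (by norm_num)
  have huc := isCompact_Icc.uniformContinuousOn_of_continuous hD
  rw [Metric.uniformContinuousOn_iff] at huc
  obtain ⟨δ₁, hδ₁, hδc⟩ := huc (1/2) (by norm_num)
  set δ₀ := δ₁/2 with hδ₀def
  have hδ₀ : 0 < δ₀ := by positivity
  have hwin : ∀ x ∈ Icc 0 L, ∀ y ∈ Icc 0 L, |x - y| ≤ δ₀ →
      (1:ℝ)/2 ≤ ⟪derivWithin u (Icc 0 L) x, derivWithin u (Icc 0 L) y⟫ := by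
    intro x hx y hy hxy
    have hdist : dist x y < δ₁ := by
      rw [Real.dist_eq]; linarith
    have h1 := hδc x hx y hy hdist
    rw [dist_eq_norm] at h1
    have h2 := norm_sub_sq_real (derivWithin u (Icc 0 L) x) (derivWithin u (Icc 0 L) y)
    rw [hunit x hx, hunit y hy] at h2
    nlinarith [norm_nonneg (derivWithin u (Icc 0 L) x - derivWithin u (Icc 0 L) y)]
  refine ⟨δ₀/4, by positivity, ?_, ?_⟩
  · intro ρ r hρ hρr hrr₀
    exact mono hL.le hder hunit hwin hρ hρr (by linarith)
  · intro r hr hrr₀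
    exact leftcont hL.le hder hunit hwin hr (by linarith)
end

section
/- Let L > 0 and let u : [0,L] → ℝ³ be smooth with |u'(s)| = 1 for all s, and let N(r) denote the greedy chord-counting function of u. Then there exist constants C > 0 and r₀ > 0 such that for all r ∈ (0, r₀], N(r)·r ≤ L ≤ (N(r)+1)·(r + C·r³); in particular L/(r + C r³) − 1 ≤ N(r) ≤ L/r. -/
open Set

lemma chordLower (L : ℝ) (u : ℝ → EuclideanSpace ℝ (Fin 3))
    (hu : ContDiffOn ℝ (⊤ : ℕ∞) u (Icc 0 L))
    (hunit : ∀ s ∈ Icc 0 L, ‖derivWithin u (Icc 0 L) s‖ = 1)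
    {K : ℝ}
    (hK : ∀ s ∈ Icc 0 L, ∀ t ∈ Icc 0 L,
      ‖derivWithin u (Icc 0 L) t - derivWithin u (Icc 0 L) s‖ ≤ K * |t - s|)
    {s t : ℝ} (hs : s ∈ Icc 0 L) (ht : t ∈ Icc 0 L) (hst : s ≤ t) :
    (t - s) - K ^ 2 * (t - s) ^ 3 / 6 ≤ ‖u t - u s‖ := by
  set u' := derivWithin u (Icc 0 L) with hu'
  set v := u' s with hv
  set g : ℝ → ℝ := fun τ => (inner ℝ v (u τ) : ℝ) - τ + K ^ 2 * (τ - s) ^ 3 / 6 with hg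
  have hsub : Icc s t ⊆ Icc 0 L := Icc_subset_Icc hs.1 ht.2
  have hderivat : ∀ τ ∈ Ioo s t, HasDerivAt u (u' τ) τ := by
    intro τ hτ
    have hmem : τ ∈ Icc 0 L := hsub (Ioo_subset_Icc_self hτ)
    have hnhds : Icc 0 L ∈ nhds τ :=
      Icc_mem_nhds (lt_of_le_of_lt hs.1 hτ.1) (lt_of_lt_of_le hτ.2 ht.2)
    have hd : DifferentiableAt ℝ u τ :=
      (hu.differentiableOn (by simp) τ hmem).differentiableAt hnhds
    have : u' τ = deriv u τ := derivWithin_of_mem_nhds hnhds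
    rw [this]
    exact hd.hasDerivAt
  have hgderiv : ∀ τ ∈ Ioo s t,
      HasDerivAt g ((inner ℝ v (u' τ) : ℝ) - 1 + K ^ 2 * (3 * (τ - s) ^ 2) / 6) τ := by
    intro τ hτ
    have hinner : HasDerivAt (fun τ => (inner ℝ v (u τ) : ℝ)) (inner ℝ v (u' τ) : ℝ) τ :=
      (innerSL ℝ v).hasFDerivAt.comp_hasDerivAt τ (hderivat τ hτ)
    have h2 : HasDerivAt (fun τ : ℝ => K ^ 2 * (τ - s) ^ 3 / 6)
        (K ^ 2 * (3 * (τ - s) ^ 2) / 6) τ := by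
      have h3 := (((hasDerivAt_id τ).sub_const s).pow 3)
      have h4 := (h3.const_mul (K ^ 2)).div_const 6
      exact h4.congr_deriv (by norm_num [id])
    exact ((hinner.sub (hasDerivAt_id τ)).add h2)
  have hgmono : MonotoneOn g (Icc s t) := by
    apply monotoneOn_of_deriv_nonneg (convex_Icc s t)
    · have hcu : ContinuousOn u (Icc s t) := (hu.continuousOn).mono hsub
      exact ((continuousOn_const.inner hcu).sub continuousOn_id).add (by fun_prop)
    · rw [interior_Icc]
      intro τ hτ
      exact ((hgderiv τ hτ).differentiableAt).differentiableWithinAt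
    · rw [interior_Icc]
      intro τ hτ
      rw [(hgderiv τ hτ).deriv]
      have hmem : τ ∈ Icc 0 L := hsub (Ioo_subset_Icc_self hτ)
      have h5 : ‖u' τ - v‖ ≤ K * (τ - s) := by
        have := hK s hs τ hmem
        rwa [abs_of_nonneg (by linarith [hτ.1])] at this
      have h6 : ‖v - u' τ‖ ^ 2 ≤ (K * (τ - s)) ^ 2 := by
        rw [norm_sub_rev]
        exact pow_le_pow_left₀ (norm_nonneg _) h5 2
      have h7 : ‖v - u' τ‖ ^ 2 = ‖v‖ ^ 2 - 2 * (inner ℝ v (u' τ) : ℝ) + ‖u' τ‖ ^ 2 :=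
        norm_sub_sq_real v (u' τ)
      have h8 : ‖v‖ = 1 := hunit s hs
      have h9 : ‖u' τ‖ = 1 := hunit τ hmem
      rw [h8, h9] at h7
      nlinarith [sq_nonneg (τ - s), sq_nonneg K]
  have hgle : g s ≤ g t := hgmono (left_mem_Icc.2 hst) (right_mem_Icc.2 hst) hst
  have hinner2 : (inner ℝ v (u t - u s) : ℝ) ≤ ‖u t - u s‖ := by
    have := real_inner_le_norm v (u t - u s)
    rwa [hunit s hs, one_mul] at this
  have hinner3 : (inner ℝ v (u t - u s) : ℝ) = (inner ℝ v (u t) : ℝ) - (inner ℝ v (u s) : ℝ) :=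
    inner_sub_right v (u t) (u s)
  simp only [hg] at hgle
  nlinarith [hgle, hinner2, hinner3]

lemma topAddOne : ((⊤:ℕ∞) : WithTop ℕ∞) + 1 ≤ ((⊤:ℕ∞) : WithTop ℕ∞) := by
  exact_mod_cast le_top

/-- bounds for the greedy chord-counting function:
`N(r)·r ≤ L ≤ (N(r)+1)·(r + C·r³)`, hence `L/(r+Cr³) − 1 ≤ N(r) ≤ L/r`. -/
theorem stmt8 (L : ℝ) (hL : 0 < L) (u : ℝ → EuclideanSpace ℝ (Fin 3))
    (hu : ContDiffOn ℝ (⊤ : ℕ∞) u (Icc 0 L))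
    (hunit : ∀ s ∈ Icc 0 L, ‖derivWithin u (Icc 0 L) s‖ = 1) :
    ∃ C > (0:ℝ), ∃ r₀ > (0:ℝ), ∀ r : ℝ, 0 < r → r ≤ r₀ →
      (greedyN u L r : ℝ) * r ≤ L ∧
      L ≤ ((greedyN u L r : ℝ) + 1) * (r + C * r ^ 3) ∧
      L / (r + C * r ^ 3) - 1 ≤ (greedyN u L r : ℝ) ∧
      (greedyN u L r : ℝ) ≤ L / r := by
  have hUD : UniqueDiffOn ℝ (Icc (0:ℝ) L) := uniqueDiffOn_Icc hL
  set u' := derivWithin u (Icc 0 L) with hu'def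
  have hu' : ContDiffOn ℝ (⊤ : ℕ∞) u' (Icc 0 L) :=
    hu.derivWithin hUD topAddOne
  have hu'' : ContinuousOn (derivWithin u' (Icc 0 L)) (Icc 0 L) :=
    (hu'.derivWithin hUD topAddOne).continuousOn
  obtain ⟨K₀, hK₀⟩ := isCompact_Icc.exists_bound_of_continuousOn hu''
  set K := max K₀ 0 with hKdef
  have hKnn : 0 ≤ K := le_max_right _ _
  -- Lipschitz bound on u
  have lipu : ∀ s ∈ Icc (0:ℝ) L, ∀ t ∈ Icc (0:ℝ) L, ‖u t - u s‖ ≤ |t - s| := by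
    intro s hs t ht
    have := Convex.norm_image_sub_le_of_norm_derivWithin_le
      (hu.differentiableOn (by simp))
      (fun x hx => le_of_eq (hunit x hx)) (convex_Icc 0 L) hs ht
    simpa using this
  -- Lipschitz bound on u'
  have lipu' : ∀ s ∈ Icc (0:ℝ) L, ∀ t ∈ Icc (0:ℝ) L, ‖u' t - u' s‖ ≤ K * |t - s| := by
    intro s hs t ht
    have := Convex.norm_image_sub_le_of_norm_derivWithin_le (C := K)
      (hu'.differentiableOn (by simp))
      (fun x hx => le_trans (hK₀ x hx) (le_max_left K₀ 0)) (convex_Icc 0 L) hs ht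
    simpa using this
  have chord := fun {s t : ℝ} hs ht hst =>
    chordLower L u hu hunit (fun s hs t ht => lipu' s hs t ht) (s := s) (t := t) hs ht hst
  set C := 2 * K ^ 2 + 1 with hCdef
  have hC : (0:ℝ) < C := by positivity
  refine ⟨C, hC, 1 / C, by positivity, ?_⟩
  intro r hr hr₀
  set a := r + C * r ^ 3 with hadef
  have ha_pos : 0 < a := by positivity
  have h1 : C * r ≤ 1 := by
    calc C * r ≤ C * (1 / C) := mul_le_mul_of_nonneg_left hr₀ hC.le
      _ = 1 := by field_simp
  have h2 : r ≤ 1 := le_trans hr₀ (by rw [div_le_one hC]; nlinarith [sq_nonneg K])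
  have hCr2 : C * r ^ 2 ≤ 1 := by nlinarith
  have ha2 : a ≤ 2 * r := by nlinarith
  have ha3 : a ^ 3 ≤ 8 * r ^ 3 := by nlinarith [pow_le_pow_left₀ ha_pos.le ha2 3]
  have hstep : r ≤ a - K ^ 2 * a ^ 3 / 6 := by
    have h4 := mul_le_mul_of_nonneg_left ha3 (sq_nonneg K)
    have hr3 : (0:ℝ) ≤ r ^ 3 := by positivity
    have h5 : C * r ^ 3 = 2 * (K ^ 2 * r ^ 3) + r ^ 3 := by rw [hCdef]; ring
    have h6 : (0:ℝ) ≤ K ^ 2 * r ^ 3 := by positivity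
    have h7 : a = r + C * r ^ 3 := hadef
    clear_value K C a
    linarith [h4, hr3, h5, h6, h7]
  -- the stopping set
  set S : Set ℕ := {i | ∀ t ∈ Icc (greedyS u L r i) L, ‖u t - u (greedyS u L r i)‖ < r} with hSdef
  -- step lemma
  have stepLemma : ∀ i : ℕ, greedyS u L r i ∈ Icc (0:ℝ) L → i ∉ S →
      greedyS u L r (i+1) ∈ Icc (0:ℝ) L ∧
      greedyS u L r i + r ≤ greedyS u L r (i+1) ∧
      greedyS u L r (i+1) ≤ greedyS u L r i + a := by
    intro i hsi hns
    set si := greedyS u L r i with hsidef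
    obtain ⟨t, htmem, htge⟩ : ∃ t ∈ Icc si L, r ≤ ‖u t - u si‖ := by
      simp only [hSdef, mem_setOf_eq, not_forall, not_lt] at hns
      obtain ⟨t, ht1, ht2⟩ := hns
      exact ⟨t, ht1, ht2⟩
    set f : ℝ → ℝ := fun t => ‖u t - u si‖ with hfdef
    have hfc : ContinuousOn f (Icc si L) :=
      ((hu.continuousOn.mono (Icc_subset_Icc hsi.1 le_rfl)).sub continuousOn_const).norm
    have hfsi : f si = 0 := by simp [hfdef]
    set T : Set ℝ := {t : ℝ | t ∈ Icc si L ∧ ‖u t - u si‖ = r} with hTdef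
    have hs1 : greedyS u L r (i+1) = sInf T := rfl
    have hTbdd : BddBelow T := ⟨si, fun x hx => hx.1.1⟩
    have hTclosed : IsClosed T := by
      have : T = Icc si L ∩ f ⁻¹' {r} := by
        ext x; simp [hTdef, hfdef]
      rw [this]
      exact hfc.preimage_isClosed_of_isClosed isClosed_Icc isClosed_singleton
    have hTne : T.Nonempty := by
      have h1 : r ∈ Icc (f si) (f t) := by
        rw [hfsi]; exact ⟨hr.le, htge⟩
      obtain ⟨t', ht'mem, ht'eq⟩ :=
        intermediate_value_Icc htmem.1 (hfc.mono (Icc_subset_Icc le_rfl htmem.2)) h1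
      exact ⟨t', ⟨⟨ht'mem.1, le_trans ht'mem.2 htmem.2⟩, ht'eq⟩⟩
    have hmemT : sInf T ∈ T := hTclosed.csInf_mem hTne hTbdd
    have hsiL : si ≤ sInf T := hmemT.1.1
    have hsL : sInf T ≤ L := hmemT.1.2
    have hs0 : (0:ℝ) ≤ si := hsi.1
    have hmemI : sInf T ∈ Icc (0:ℝ) L := ⟨le_trans hs0 hsiL, hsL⟩
    have hlower : si + r ≤ sInf T := by
      have h1 : ‖u (sInf T) - u si‖ = r := hmemT.2
      have h2 := lipu si hsi (sInf T) hmemI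
      rw [h1, abs_of_nonneg (by linarith)] at h2
      linarith
    have hupper : sInf T ≤ si + a := by
      by_contra h
      push_neg at h
      set t' := si + a with ht'def
      have ht'L : t' ≤ L := le_trans h.le hsL
      have ht'I : t' ∈ Icc (0:ℝ) L := ⟨by positivity, ht'L⟩
      have hch : r ≤ ‖u t' - u si‖ := by
        have := chord hsi ht'I (by simp [ht'def]; positivity)
        have heq : t' - si = a := by ring
        rw [heq] at this
        linarith
      have h1 : r ∈ Icc (f si) (f t') := by
        rw [hfsi]; exact ⟨hr.le, hch⟩
      obtain ⟨t'', ht''mem, ht''eq⟩ :=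
        intermediate_value_Icc (by linarith [hsiL] : si ≤ t')
          (hfc.mono (Icc_subset_Icc le_rfl ht'L)) h1
      have ht''T : t'' ∈ T := ⟨⟨ht''mem.1, le_trans ht''mem.2 ht'L⟩, ht''eq⟩
      have := csInf_le hTbdd ht''T
      linarith [ht''mem.2]
    exact ⟨by rw [hs1]; exact hmemI, by rw [hs1]; exact hlower, by rw [hs1]; exact hupper⟩
  -- the chain of greedy points
  have chain : ∀ i : ℕ, (∀ j < i, j ∉ S) →
      greedyS u L r i ∈ Icc (0:ℝ) L ∧ (i:ℝ) * r ≤ greedyS u L r i ∧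
      greedyS u L r i ≤ (i:ℝ) * a := by
    intro i
    induction i with
    | zero =>
      intro _
      have h0 : greedyS u L r 0 = 0 := rfl
      simp [h0, hL.le]
    | succ i ih =>
      intro h
      obtain ⟨h1, h2, h3⟩ := ih (fun j hj => h j (Nat.lt_succ_of_lt hj))
      obtain ⟨h4, h5, h6⟩ := stepLemma i h1 (h i (Nat.lt_succ_self i))
      refine ⟨h4, ?_, ?_⟩ <;> push_cast <;> linarith
  -- S is nonempty
  have hSne : S.Nonempty := by
    by_contra h
    rw [not_nonempty_iff_eq_empty] at h
    obtain ⟨n, hn⟩ := exists_nat_gt (L / r)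
    have hn' : L < n * r := by
      rw [div_lt_iff₀ hr] at hn; linarith
    obtain ⟨h1, h2, _⟩ := chain n (fun j _ => by simp [h])
    linarith [h1.2]
  have hNdef : greedyN u L r = sInf S := rfl
  set N := greedyN u L r with hN
  have hNmem : N ∈ S := by rw [hNdef]; exact Nat.sInf_mem hSne
  have hNnot : ∀ j < N, j ∉ S := fun j hj => Nat.notMem_of_lt_sInf (hNdef ▸ hj)
  obtain ⟨hNI, hNlow, hNhigh⟩ := chain N hNnot
  -- final segment bound
  have hfinal : L ≤ greedyS u L r N + a := by
    by_contra h
    push_neg at h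
    have hsNt' : greedyS u L r N ≤ greedyS u L r N + a := le_add_of_nonneg_right ha_pos.le
    have ht'I : greedyS u L r N + a ∈ Icc (0:ℝ) L := ⟨add_nonneg hNI.1 ha_pos.le, h.le⟩
    have hch : r ≤ ‖u (greedyS u L r N + a) - u (greedyS u L r N)‖ := by
      have hc := chord hNI ht'I hsNt'
      have heq : greedyS u L r N + a - greedyS u L r N = a := by ring
      rw [heq] at hc
      linarith
    have hlt := hNmem (greedyS u L r N + a) ⟨hsNt', h.le⟩
    linarith
  have main1 : (N:ℝ) * r ≤ L := le_trans hNlow hNI.2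
  have main2 : L ≤ ((N:ℝ) + 1) * a := by nlinarith
  refine ⟨main1, main2, ?_, ?_⟩
  · have h1 : L / a ≤ (N:ℝ) + 1 := (div_le_iff₀ ha_pos).2 (by linarith [main2])
    linarith
  · exact (le_div_iff₀ hr).2 main1
end

section
/- Let L > 0 and let u : [0,L] → ℝ³ be smooth with |u'(s)| = 1 for all s, and let N(r) and s_i(r) denote the greedy chord construction of u. Then there exists r₀ > 0 such that for every r̂ ∈ (0, r₀]: if s_{N(r̂)}(r̂) < L then N is right-continuous at r̂ (there is δ > 0 with N(ρ) = N(r̂) for all ρ ∈ [r̂, r̂+δ)); and if N is not right-continuous at r̂, then s_{N(r̂)}(r̂) = L and N(ρ) = N(r̂) − 1 for all ρ > r̂ sufficiently close to r̂, i.e., every jump of r ↦ N(r) has size exactly 1. -/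
set_option maxHeartbeats 1000000
open scoped RealInnerProductSpace


open Set

lemma key (L : ℝ) (hL : 0 < L) (u : ℝ → EuclideanSpace ℝ (Fin 3))
    (hu : ContDiffOn ℝ (⊤ : ℕ∞) u (Icc 0 L))
    (hunit : ∀ s ∈ Icc 0 L, ‖derivWithin u (Icc 0 L) s‖ = 1) :
    ∃ c > (0:ℝ),
      (∀ s ∈ Icc 0 L, ∀ t ∈ Icc 0 L, ‖u t - u s‖ ≤ |t - s|) ∧
      (∀ s t : ℝ, s ∈ Icc 0 L → t ∈ Icc 0 L → s ≤ t → t - s ≤ c →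
        (t - s) * (3/4) ≤ ‖u t - u s‖) ∧
      (∀ s t1 t2 : ℝ, 0 ≤ s → s ≤ t1 → t1 < t2 → t2 ≤ L → t2 - s ≤ c →
        ‖u t1 - u s‖ < ‖u t2 - u s‖) ∧
      (∀ s1 s2 t : ℝ, 0 ≤ s1 → s1 < s2 → s2 ≤ t → t ≤ L → t - s1 ≤ c →
        ‖u t - u s2‖ < ‖u t - u s1‖) := by
  have hI : UniqueDiffOn ℝ (Icc (0:ℝ) L) := uniqueDiffOn_Icc hL
  set v := derivWithin u (Icc 0 L) with hv
  have htop : ((1:ℕ∞) : WithTop ℕ∞) ≤ ((⊤ : ℕ∞) : WithTop ℕ∞) := by exact_mod_cast le_top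
  have hudiff : DifferentiableOn ℝ u (Icc 0 L) := hu.differentiableOn (by simp)
  have hvd : ∀ s ∈ Icc 0 L, HasDerivWithinAt u (v s) (Icc 0 L) s := fun s hs =>
    (hudiff s hs).hasDerivWithinAt
  have hvcd : ContDiffOn ℝ (⊤ : ℕ∞) v (Icc 0 L) :=
    hu.derivWithin hI (by exact_mod_cast le_top)
  have hvdiff : DifferentiableOn ℝ v (Icc 0 L) := hvcd.differentiableOn (by simp)
  set w := derivWithin v (Icc 0 L) with hw
  have hwd : ∀ s ∈ Icc 0 L, HasDerivWithinAt v (w s) (Icc 0 L) s := fun s hs =>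
    (hvdiff s hs).hasDerivWithinAt
  have hwcd : ContDiffOn ℝ (⊤ : ℕ∞) w (Icc 0 L) :=
    hvcd.derivWithin hI (by exact_mod_cast le_top)
  have hwcont : ContinuousOn w (Icc 0 L) := hwcd.continuousOn
  obtain ⟨M0, hM0⟩ := isCompact_Icc.exists_bound_of_continuousOn hwcont
  set M := max M0 0 with hM
  have hMnn : (0:ℝ) ≤ M := le_max_right _ _
  have hMb : ∀ s ∈ Icc 0 L, ‖w s‖ ≤ M := fun s hs => (hM0 s hs).trans (le_max_left _ _)
  have hvlip : ∀ a ∈ Icc 0 L, ∀ b ∈ Icc 0 L, ‖v b - v a‖ ≤ M * |b - a| := by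
    intro a ha b hb
    have := Convex.norm_image_sub_le_of_norm_hasDerivWithin_le hwd hMb (convex_Icc _ _) ha hb
    simpa [Real.norm_eq_abs] using this
  -- Lipschitz bound for u
  have H1 : ∀ s ∈ Icc 0 L, ∀ t ∈ Icc 0 L, ‖u t - u s‖ ≤ |t - s| := by
    intro s hs t ht
    have hb : ∀ x ∈ Icc (0:ℝ) L, ‖v x‖ ≤ 1 := fun x hx => le_of_eq (hunit x hx)
    have := Convex.norm_image_sub_le_of_norm_hasDerivWithin_le hvd hb (convex_Icc _ _) hs ht
    simpa [Real.norm_eq_abs] using this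
  -- Taylor estimates at both endpoints
  have htay : ∀ a : ℝ, ∀ s t : ℝ, a ∈ Icc 0 L → s ∈ Icc 0 L → t ∈ Icc 0 L → s ≤ t →
      (∀ τ ∈ Icc s t, ‖v τ - v a‖ ≤ M * (t - s)) →
      ‖u t - u s - (t - s) • v a‖ ≤ M * (t - s)^2 := by
    intro a s t ha hs ht hst hbnd
    have hsub : Icc s t ⊆ Icc 0 L := Icc_subset_Icc hs.1 ht.2
    have hg : ∀ τ ∈ Icc s t, HasDerivWithinAt (fun τ => u τ - τ • v a)
        (v τ - v a) (Icc s t) τ := by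
      intro τ hτ
      have h1 : HasDerivWithinAt u (v τ) (Icc s t) τ := (hvd τ (hsub hτ)).mono hsub
      have h2 : HasDerivWithinAt (fun y : ℝ => y • v a) ((1:ℝ) • v a) (Icc s t) τ :=
        (hasDerivWithinAt_id τ _).smul_const (v a)
      rw [one_smul] at h2
      exact h1.sub h2
    have := Convex.norm_image_sub_le_of_norm_hasDerivWithin_le hg hbnd (convex_Icc _ _)
      (left_mem_Icc.2 hst) (right_mem_Icc.2 hst)
    have heq : (u t - t • v a) - (u s - s • v a) = u t - u s - (t - s) • v a := by
      rw [sub_smul]; abel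
    rw [heq] at this
    calc ‖u t - u s - (t - s) • v a‖ ≤ M * (t - s) * ‖t - s‖ := this
      _ = M * (t - s)^2 := by
          rw [Real.norm_eq_abs, abs_of_nonneg (by linarith)]; ring
  have htayL : ∀ s t : ℝ, s ∈ Icc 0 L → t ∈ Icc 0 L → s ≤ t →
      ‖u t - u s - (t - s) • v s‖ ≤ M * (t - s)^2 := by
    intro s t hs ht hst
    refine htay s s t hs hs ht hst ?_
    intro τ hτ
    have hsub : Icc s t ⊆ Icc 0 L := Icc_subset_Icc hs.1 ht.2
    calc ‖v τ - v s‖ ≤ M * |τ - s| := hvlip s hs τ (hsub hτ)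
      _ ≤ M * (t - s) := by
          rw [abs_of_nonneg (by linarith [hτ.1])]
          exact mul_le_mul_of_nonneg_left (by linarith [hτ.2]) hMnn
  have htayR : ∀ s t : ℝ, s ∈ Icc 0 L → t ∈ Icc 0 L → s ≤ t →
      ‖u t - u s - (t - s) • v t‖ ≤ M * (t - s)^2 := by
    intro s t hs ht hst
    refine htay t s t ht hs ht hst ?_
    intro τ hτ
    have hsub : Icc s t ⊆ Icc 0 L := Icc_subset_Icc hs.1 ht.2
    calc ‖v τ - v t‖ ≤ M * |τ - t| := hvlip t ht τ (hsub hτ)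
      _ ≤ M * (t - s) := by
          rw [abs_of_nonpos (by linarith [hτ.2]), neg_sub]
          exact mul_le_mul_of_nonneg_left (by linarith [hτ.1]) hMnn
  -- inner product estimates
  have hip : ∀ a : ℝ, ∀ s t : ℝ, a ∈ Icc 0 L → s ≤ t →
      ‖u t - u s - (t - s) • v a‖ ≤ M * (t - s)^2 →
      (t - s) - M * (t - s)^2 ≤ ⟪v a, u t - u s⟫ := by
    intro a s t ha hst hest
    have hva : ‖v a‖ = 1 := hunit a ha
    have h1 : ⟪v a, u t - u s⟫ =
        (t - s) * ⟪v a, v a⟫ + ⟪v a, u t - u s - (t - s) • v a⟫ := by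
      simp only [inner_sub_right, real_inner_smul_right]; ring
    have h2 : ⟪v a, v a⟫ = 1 := by
      rw [real_inner_self_eq_norm_sq, hva]; norm_num
    have h3 : |⟪v a, u t - u s - (t - s) • v a⟫| ≤ M * (t - s)^2 := by
      calc |⟪v a, u t - u s - (t - s) • v a⟫| ≤ ‖v a‖ * ‖u t - u s - (t - s) • v a‖ :=
            abs_real_inner_le_norm _ _
        _ ≤ M * (t - s)^2 := by rw [hva, one_mul]; exact hest
    have := abs_le.1 h3
    rw [h1, h2]
    linarith [this.1]
  -- lower norm bound
  have hlow : ∀ s t : ℝ, s ∈ Icc 0 L → t ∈ Icc 0 L → s ≤ t →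
      (t - s) - M * (t - s)^2 ≤ ‖u t - u s‖ := by
    intro s t hs ht hst
    have hest := htayL s t hs ht hst
    have hva : ‖v s‖ = 1 := hunit s hs
    have h1 : ‖(t - s) • v s‖ = t - s := by
      rw [norm_smul, Real.norm_eq_abs, abs_of_nonneg (by linarith), hva, mul_one]
    have h2 : ‖(t - s) • v s‖ ≤ ‖u t - u s‖ + ‖u t - u s - (t - s) • v s‖ := by
      have h3 := norm_sub_le (u t - u s) (u t - u s - (t - s) • v s)
      have h4 : (u t - u s) - (u t - u s - (t - s) • v s) = (t - s) • v s := by abel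
      rwa [h4] at h3
    linarith
  -- choose c
  refine ⟨1 / (4 * (M + 1)), by positivity, H1, ?_, ?_, ?_⟩
  · -- H2
    intro s t hs ht hst hwin
    have hMd : M * (t - s) ≤ 1/4 := by
      calc M * (t - s) ≤ M * (1 / (4 * (M + 1))) :=
            mul_le_mul_of_nonneg_left hwin hMnn
        _ ≤ (M + 1) * (1 / (4 * (M + 1))) := by
            apply mul_le_mul_of_nonneg_right (by linarith) (by positivity)
        _ = 1/4 := by field_simp
    have := hlow s t hs ht hst
    nlinarith [sub_nonneg.2 hst]
  · -- forward monotonicity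
    intro s t1 t2 hs0 hst1 h12 ht2 hwin
    have hs : s ∈ Icc 0 L := ⟨hs0, by linarith⟩
    have ht1m : t1 ∈ Icc 0 L := ⟨by linarith, by linarith⟩
    have ht2m : t2 ∈ Icc 0 L := ⟨by linarith, ht2⟩
    have hMd : M * (t2 - s) ≤ 1/4 := by
      calc M * (t2 - s) ≤ M * (1 / (4 * (M + 1))) :=
            mul_le_mul_of_nonneg_left hwin hMnn
        _ ≤ (M + 1) * (1 / (4 * (M + 1))) := by
            apply mul_le_mul_of_nonneg_right (by linarith) (by positivity)
        _ = 1/4 := by field_simp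
    have hAn : ‖u t1 - u s‖ ≤ t1 - s := by
      have := H1 s hs t1 ht1m
      rwa [abs_of_nonneg (by linarith)] at this
    have he2 : ‖u t2 - u t1 - (t2 - t1) • v t1‖ ≤ M * (t2 - t1)^2 :=
      htayL t1 t2 ht1m ht2m (le_of_lt h12)
    have hiA : (t1 - s) - M * (t1 - s)^2 ≤ ⟪v t1, u t1 - u s⟫ :=
      hip t1 s t1 ht1m hst1 (htayR s t1 hs ht1m hst1)
    have hinner : (0:ℝ) ≤ ⟪u t1 - u s, u t2 - u t1⟫ := by
      have h1 : ⟪u t1 - u s, u t2 - u t1⟫ =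
          (t2 - t1) * ⟪v t1, u t1 - u s⟫ +
          ⟪u t1 - u s, u t2 - u t1 - (t2 - t1) • v t1⟫ := by
        simp only [inner_sub_right, real_inner_smul_right, real_inner_comm (u t1 - u s) (v t1)]; ring
      have h2 : |⟪u t1 - u s, u t2 - u t1 - (t2 - t1) • v t1⟫| ≤ (t1 - s) * (M * (t2 - t1)^2) := by
        calc |⟪u t1 - u s, u t2 - u t1 - (t2 - t1) • v t1⟫|
            ≤ ‖u t1 - u s‖ * ‖u t2 - u t1 - (t2 - t1) • v t1‖ := abs_real_inner_le_norm _ _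
          _ ≤ (t1 - s) * (M * (t2 - t1)^2) := by
              apply mul_le_mul hAn he2 (norm_nonneg _) (by linarith)
      have h2' := (abs_le.1 h2).1
      have k1 : (t2 - t1) * ((t1 - s) - M * (t1 - s)^2) ≤ (t2 - t1) * ⟪v t1, u t1 - u s⟫ :=
        mul_le_mul_of_nonneg_left hiA (by linarith)
      have k2 : (0:ℝ) ≤ (t1 - s) * (t2 - t1) * (1 - M * (t2 - s)) := by
        apply mul_nonneg (mul_nonneg (by linarith) (by linarith)) (by linarith)
      rw [h1]
      nlinarith [k1, k2, h2']
    have hDlow : (t2 - t1) * (3/4) ≤ ‖u t2 - u t1‖ := by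
      have := hlow t1 t2 ht1m ht2m (le_of_lt h12)
      nlinarith [sub_nonneg.2 (le_of_lt h12)]
    have hsq : ‖u t1 - u s‖^2 < ‖u t2 - u s‖^2 := by
      have hexp : u t2 - u s = (u t1 - u s) + (u t2 - u t1) := by abel
      rw [hexp, norm_add_sq_real]
      nlinarith [sub_nonneg.2 (le_of_lt h12)]
    exact lt_of_pow_lt_pow_left₀ 2 (norm_nonneg _) hsq
  · -- backward monotonicity
    intro s1 s2 t hs10 h12 h2t htL hwin
    have hs1 : s1 ∈ Icc 0 L := ⟨hs10, by linarith⟩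
    have hs2 : s2 ∈ Icc 0 L := ⟨by linarith, by linarith⟩
    have htm : t ∈ Icc 0 L := ⟨by linarith, htL⟩
    have hMd : M * (t - s1) ≤ 1/4 := by
      calc M * (t - s1) ≤ M * (1 / (4 * (M + 1))) :=
            mul_le_mul_of_nonneg_left hwin hMnn
        _ ≤ (M + 1) * (1 / (4 * (M + 1))) := by
            apply mul_le_mul_of_nonneg_right (by linarith) (by positivity)
        _ = 1/4 := by field_simp
    have hAn : ‖u t - u s2‖ ≤ t - s2 := by
      have := H1 s2 hs2 t htm
      rwa [abs_of_nonneg (by linarith)] at this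
    have he3 : ‖u s2 - u s1 - (s2 - s1) • v s2‖ ≤ M * (s2 - s1)^2 :=
      htayR s1 s2 hs1 hs2 (le_of_lt h12)
    have hiA : (t - s2) - M * (t - s2)^2 ≤ ⟪v s2, u t - u s2⟫ :=
      hip s2 s2 t hs2 h2t (htayL s2 t hs2 htm h2t)
    have hinner : (0:ℝ) ≤ ⟪u t - u s2, u s2 - u s1⟫ := by
      have h1 : ⟪u t - u s2, u s2 - u s1⟫ =
          (s2 - s1) * ⟪v s2, u t - u s2⟫ +
          ⟪u t - u s2, u s2 - u s1 - (s2 - s1) • v s2⟫ := by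
        simp only [inner_sub_right, real_inner_smul_right, real_inner_comm (u t - u s2) (v s2)]; ring
      have h2 : |⟪u t - u s2, u s2 - u s1 - (s2 - s1) • v s2⟫| ≤ (t - s2) * (M * (s2 - s1)^2) := by
        calc |⟪u t - u s2, u s2 - u s1 - (s2 - s1) • v s2⟫|
            ≤ ‖u t - u s2‖ * ‖u s2 - u s1 - (s2 - s1) • v s2‖ := abs_real_inner_le_norm _ _
          _ ≤ (t - s2) * (M * (s2 - s1)^2) := by
              apply mul_le_mul hAn he3 (norm_nonneg _) (by linarith)
      have h2' := (abs_le.1 h2).1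
      have k1 : (s2 - s1) * ((t - s2) - M * (t - s2)^2) ≤ (s2 - s1) * ⟪v s2, u t - u s2⟫ :=
        mul_le_mul_of_nonneg_left hiA (by linarith)
      have k2 : (0:ℝ) ≤ (s2 - s1) * (t - s2) * (1 - M * (t - s1)) := by
        apply mul_nonneg (mul_nonneg (by linarith) (by linarith)) (by linarith)
      rw [h1]
      nlinarith [k1, k2, h2']
    have hDlow : (s2 - s1) * (3/4) ≤ ‖u s2 - u s1‖ := by
      have := hlow s1 s2 hs1 hs2 (le_of_lt h12)
      nlinarith [sub_nonneg.2 (le_of_lt h12)]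
    have hsq : ‖u t - u s2‖^2 < ‖u t - u s1‖^2 := by
      have hexp : u t - u s1 = (u t - u s2) + (u s2 - u s1) := by abel
      rw [hexp, norm_add_sq_real]
      nlinarith [sub_nonneg.2 (le_of_lt h12)]
    exact lt_of_pow_lt_pow_left₀ 2 (norm_nonneg _) hsq

structure Hyp (u : ℝ → EuclideanSpace ℝ (Fin 3)) (L c : ℝ) : Prop where
  hL : 0 < L
  hc : 0 < c
  lip : ∀ s ∈ Icc 0 L, ∀ t ∈ Icc 0 L, ‖u t - u s‖ ≤ |t - s|
  low : ∀ s t : ℝ, s ∈ Icc 0 L → t ∈ Icc 0 L → s ≤ t → t - s ≤ c →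
    (t - s) * (3/4) ≤ ‖u t - u s‖
  monoF : ∀ s t1 t2 : ℝ, 0 ≤ s → s ≤ t1 → t1 < t2 → t2 ≤ L → t2 - s ≤ c →
    ‖u t1 - u s‖ < ‖u t2 - u s‖
  monoB : ∀ s1 s2 t : ℝ, 0 ≤ s1 → s1 < s2 → s2 ≤ t → t ≤ L → t - s1 ≤ c →
    ‖u t - u s2‖ < ‖u t - u s1‖
  cont : ContinuousOn u (Icc 0 L)

namespace Hyp

variable {u : ℝ → EuclideanSpace ℝ (Fin 3)} {L c : ℝ}

lemma lip' (h : Hyp u L c) {s t : ℝ} (hs : s ∈ Icc 0 L) (ht : t ∈ Icc 0 L) (hst : s ≤ t) :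
    ‖u t - u s‖ ≤ t - s := by
  have := h.lip s hs t ht
  rwa [abs_of_nonneg (by linarith)] at this

lemma cross (h : Hyp u L c) {s t0 q : ℝ} (hs : s ∈ Icc 0 L) (ht0 : t0 ∈ Icc s L)
    (hq : 0 ≤ q) (hgt : q ≤ ‖u t0 - u s‖) : ∃ w ∈ Icc s t0, ‖u w - u s‖ = q := by
  have hsub : Icc s t0 ⊆ Icc 0 L := Icc_subset_Icc hs.1 ht0.2
  have hgc : ContinuousOn (fun t => ‖u t - u s‖) (Icc s t0) :=
    ((h.cont.mono hsub).sub continuousOn_const).norm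
  have := intermediate_value_Icc ht0.1 hgc
  have hmem : q ∈ Icc (‖u s - u s‖) (‖u t0 - u s‖) := by
    constructor
    · simpa using hq
    · exact hgt
  obtain ⟨w, hw, hwq⟩ := this hmem
  exact ⟨w, hw, hwq⟩

lemma step (h : Hyp u L c) {q s : ℝ} (hq : 0 < q) (hqc : 4*q ≤ c) (hs : s ∈ Icc 0 L)
    (hex : ∃ t ∈ Icc s L, q ≤ ‖u t - u s‖) :
    sInf {t : ℝ | t ∈ Icc s L ∧ ‖u t - u s‖ = q} ∈ Icc s L ∧
    ‖u (sInf {t : ℝ | t ∈ Icc s L ∧ ‖u t - u s‖ = q}) - u s‖ = q ∧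
    s + q ≤ sInf {t : ℝ | t ∈ Icc s L ∧ ‖u t - u s‖ = q} ∧
    sInf {t : ℝ | t ∈ Icc s L ∧ ‖u t - u s‖ = q} ≤ s + 2*q ∧
    (∀ t, s ≤ t → t < sInf {t : ℝ | t ∈ Icc s L ∧ ‖u t - u s‖ = q} → ‖u t - u s‖ < q) := by
  set A := {t : ℝ | t ∈ Icc s L ∧ ‖u t - u s‖ = q} with hA
  obtain ⟨t0, ht0m, ht0⟩ := hex
  have hAne : A.Nonempty := by
    obtain ⟨w, hw, hwq⟩ := h.cross hs ht0m hq.le ht0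
    exact ⟨w, ⟨⟨hw.1, hw.2.trans ht0m.2⟩, hwq⟩⟩
  have hAcl : IsClosed A := by
    have hgc : ContinuousOn (fun t => ‖u t - u s‖) (Icc s L) :=
      ((h.cont.mono (Icc_subset_Icc hs.1 le_rfl)).sub continuousOn_const).norm
    have := hgc.preimage_isClosed_of_isClosed isClosed_Icc (isClosed_singleton (x := q))
    convert this using 1
    ext t; simp [hA]
  have hAbdd : BddBelow A := ⟨s, fun t ht => ht.1.1⟩
  have hmemA : sInf A ∈ A := hAcl.csInf_mem hAne hAbdd
  have hnorm : ‖u (sInf A) - u (s)‖ = q := hmemA.2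
  have hmi : sInf A ∈ Icc s L := hmemA.1
  have hsm : sInf A ∈ Icc 0 L := ⟨le_trans hs.1 hmi.1, hmi.2⟩
  have hlb : s + q ≤ sInf A := by
    have := h.lip' hs hsm hmi.1
    rw [hnorm] at this; linarith
  have hub : sInf A ≤ s + 2*q := by
    rcases le_or_gt (s + 2*q) L with hcase | hcase
    · have h2m : s + 2*q ∈ Icc 0 L := ⟨by linarith [hs.1], hcase⟩
      have hlow2 : q ≤ ‖u (s + 2*q) - u s‖ := by
        have := h.low s (s + 2*q) hs h2m (by linarith) (by linarith)
        linarith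
      obtain ⟨w, hw, hwq⟩ := h.cross hs ⟨by linarith, hcase⟩ hq.le hlow2
      have : sInf A ≤ w := csInf_le hAbdd ⟨⟨hw.1, le_trans hw.2 hcase⟩, hwq⟩
      linarith [hw.2]
    · linarith [hmi.2]
  refine ⟨hmi, hnorm, hlb, hub, ?_⟩
  intro t hst htA
  have htm : t ∈ Icc s L := ⟨hst, le_trans htA.le hmi.2⟩
  rcases lt_trichotomy (‖u t - u s‖) q with h1 | h1 | h1
  · exact h1
  · exact absurd (csInf_le hAbdd ⟨htm, h1⟩) (by linarith)
  · obtain ⟨w, hw, hwq⟩ := h.cross hs htm hq.le h1.le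
    have : sInf A ≤ w := csInf_le hAbdd ⟨⟨hw.1, le_trans hw.2 htm.2⟩, hwq⟩
    linarith [hw.2]

/-- the stopping set is nonempty -/
lemma stop_nonempty (h : Hyp u L c) {q : ℝ} (hq : 0 < q) (hqc : 4*q ≤ c) :
    {i : ℕ | ∀ t ∈ Icc (greedyS u L q i) L, ‖u t - u (greedyS u L q i)‖ < q}.Nonempty := by
  by_contra hco
  rw [not_nonempty_iff_eq_empty] at hco
  have hne : ∀ i : ℕ, ∃ t ∈ Icc (greedyS u L q i) L, q ≤ ‖u t - u (greedyS u L q i)‖ := by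
    intro i
    have : i ∉ ({} : Set ℕ) := notMem_empty i
    rw [← hco] at this
    simp only [mem_setOf_eq, not_forall] at this
    obtain ⟨t, ht, hlt⟩ := this
    exact ⟨t, ht, by push_neg at hlt; exact hlt⟩
  have hind : ∀ i : ℕ, greedyS u L q i ∈ Icc 0 L ∧ q * i ≤ greedyS u L q i := by
    intro i
    induction i with
    | zero => exact ⟨by rw [show greedyS u L q 0 = 0 from rfl]; exact ⟨le_rfl, h.hL.le⟩, by simp [show greedyS u L q 0 = 0 from rfl]⟩
    | succ n ih =>
      have hst := h.step hq hqc ih.1 (hne n)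
      refine ⟨⟨le_trans ih.1.1 hst.1.1, hst.1.2⟩, ?_⟩
      push_cast
      calc q * (n + 1) = q * n + q := by ring
        _ ≤ greedyS u L q n + q := by linarith [ih.2]
        _ ≤ greedyS u L q (n+1) := hst.2.2.1
  obtain ⟨n, hn⟩ := exists_nat_gt (L / q)
  have h1 := (hind n).1.2
  have h2 := (hind n).2
  have : L / q < n := hn
  have : L < q * n := by
    rw [div_lt_iff₀ hq] at hn
    linarith [hn]
  linarith

lemma stop_N (h : Hyp u L c) {q : ℝ} (hq : 0 < q) (hqc : 4*q ≤ c) :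
    ∀ t ∈ Icc (greedyS u L q (greedyN u L q)) L,
      ‖u t - u (greedyS u L q (greedyN u L q))‖ < q :=
  Nat.sInf_mem (h.stop_nonempty hq hqc)

lemma not_stop (h : Hyp u L c) {q : ℝ} {i : ℕ} (hi : i < greedyN u L q) :
    ∃ t ∈ Icc (greedyS u L q i) L, q ≤ ‖u t - u (greedyS u L q i)‖ := by
  have := Nat.notMem_of_lt_sInf hi
  simp only [mem_setOf_eq, not_forall] at this
  obtain ⟨t, ht, hlt⟩ := this
  exact ⟨t, ht, by push_neg at hlt; exact hlt⟩

lemma mem_chain (h : Hyp u L c) {q : ℝ} (hq : 0 < q) (hqc : 4*q ≤ c) :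
    ∀ i, i ≤ greedyN u L q → greedyS u L q i ∈ Icc 0 L := by
  intro i
  induction i with
  | zero => intro _; rw [show greedyS u L q 0 = 0 from rfl]; exact ⟨le_rfl, h.hL.le⟩
  | succ n ih =>
    intro hn
    have hn' : n < greedyN u L q := Nat.lt_of_succ_le hn
    have hst := h.step hq hqc (ih hn'.le) (h.not_stop hn')
    exact ⟨le_trans (ih hn'.le).1 hst.1.1, hst.1.2⟩

lemma step_chain (h : Hyp u L c) {q : ℝ} (hq : 0 < q) (hqc : 4*q ≤ c) {i : ℕ}
    (hi : i < greedyN u L q) :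
    greedyS u L q (i+1) ∈ Icc (greedyS u L q i) L ∧
    ‖u (greedyS u L q (i+1)) - u (greedyS u L q i)‖ = q ∧
    greedyS u L q i + q ≤ greedyS u L q (i+1) ∧
    greedyS u L q (i+1) ≤ greedyS u L q i + 2*q ∧
    (∀ t, greedyS u L q i ≤ t → t < greedyS u L q (i+1) →
      ‖u t - u (greedyS u L q i)‖ < q) :=
  h.step hq hqc (h.mem_chain hq hqc i hi.le) (h.not_stop hi)


lemma T (h : Hyp u L c) {r : ℝ} (hr : 0 < r) (hrc : 4*r ≤ c) :
    ∀ i : ℕ, i ≤ greedyN u L r → greedyS u L r i < L → ∀ ε > (0:ℝ), ∃ δ > (0:ℝ),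
      ∀ ρ : ℝ, r ≤ ρ → ρ < r + δ → 4*ρ ≤ c →
        i ≤ greedyN u L ρ ∧ greedyS u L r i ≤ greedyS u L ρ i ∧
        greedyS u L ρ i < greedyS u L r i + ε := by
  intro i
  induction i with
  | zero =>
    intro _ _ ε hε
    exact ⟨1, one_pos, fun ρ _ _ _ => ⟨Nat.zero_le _,
      by rw [show greedyS u L r 0 = 0 from rfl, show greedyS u L ρ 0 = 0 from rfl],
      by rw [show greedyS u L r 0 = 0 from rfl, show greedyS u L ρ 0 = 0 from rfl]; linarith⟩⟩
  | succ i IH =>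
    intro hiN hSlt ε hε
    have hi : i < greedyN u L r := Nat.lt_of_succ_le hiN
    obtain ⟨hσm, hnormσ, hgap1, hgap2, hfirst⟩ := h.step_chain hr hrc hi
    set s := greedyS u L r i with hs
    set σ := greedyS u L r (i+1) with hσ
    have hsm : s ∈ Icc 0 L := h.mem_chain hr hrc i hi.le
    have hσmem : σ ∈ Icc 0 L := ⟨le_trans hsm.1 hσm.1, hσm.2⟩
    have hsL : s < L := by linarith [hσm.2]
    -- choose the probe point t* := σ + η
    set η := min (min (ε/2) ((L - σ)/2)) (r/2) with hη
    have hηpos : 0 < η := by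
      apply lt_min (lt_min (by linarith) (by linarith)) (by linarith)
    have hηε : η ≤ ε/2 := le_trans (min_le_left _ _) (min_le_left _ _)
    have hηL : η ≤ (L - σ)/2 := le_trans (min_le_left _ _) (min_le_right _ _)
    have hηr : η ≤ r/2 := min_le_right _ _
    set tstar := σ + η with htstar
    have htsL : tstar ≤ L := by simp only [htstar]; linarith
    have htsm : tstar ∈ Icc 0 L := ⟨by linarith [hσmem.1], htsL⟩
    have hts_win : tstar - s ≤ c := by simp only [htstar]; linarith
    have hκ : r < ‖u tstar - u s‖ := by
      have := h.monoF s σ tstar hsm.1 hσm.1 (by linarith) htsL hts_win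
      rwa [hnormσ] at this
    set κ := ‖u tstar - u s‖ - r with hκdef
    have hκpos : 0 < κ := by linarith
    -- apply the induction hypothesis
    obtain ⟨δ₁, hδ₁, hIH⟩ := IH hi.le (by linarith [hgap1, hσm.2])
      (min (min (κ/3) (ε/2)) (r/2)) (by positivity)
    refine ⟨min δ₁ (κ/3), lt_min hδ₁ (by linarith), ?_⟩
    intro ρ hrρ hρδ hρc
    have hρ : 0 < ρ := lt_of_lt_of_le hr hrρ
    obtain ⟨hiNρ, hss', hs'e⟩ := hIH ρ hrρ (lt_of_lt_of_le hρδ (by have := min_le_left δ₁ (κ/3); linarith)) hρc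
    set s' := greedyS u L ρ i with hs'
    have hε₁ : s' < s + min (min (κ/3) (ε/2)) (r/2) := hs'e
    have hε₁κ : s' < s + κ/3 := by
      have : min (min (κ/3) (ε/2)) (r/2) ≤ κ/3 := le_trans (min_le_left _ _) (min_le_left _ _)
      linarith
    have hε₁r : s' < s + r/2 := by
      have : min (min (κ/3) (ε/2)) (r/2) ≤ r/2 := min_le_right _ _
      linarith
    have hs'm : s' ∈ Icc 0 L := h.mem_chain hρ hρc i hiNρ
    have hρκ : ρ < r + κ/3 := lt_of_lt_of_le hρδ (by
      have : min δ₁ (κ/3) ≤ κ/3 := min_le_right _ _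
      linarith)
    -- the probe point witnesses that step i is taken for ρ
    have hstrip : ‖u s' - u s‖ ≤ s' - s := h.lip' hsm hs'm hss'
    have hprobe : r + κ/3 ≤ ‖u tstar - u s'‖ := by
      have htr : ‖u tstar - u s‖ ≤ ‖u tstar - u s'‖ + ‖u s' - u s‖ := by
        have : u tstar - u s = (u tstar - u s') + (u s' - u s) := by abel
        rw [this]; exact norm_add_le _ _
      have : ‖u tstar - u s‖ = r + κ := by rw [hκdef]; ring
      linarith
    have hs'ts : s' ≤ tstar := by
      have : s' < s + r := by linarith
      simp only [htstar]; linarith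
    have hnotstop : ∃ t ∈ Icc s' L, ρ ≤ ‖u t - u s'‖ :=
      ⟨tstar, ⟨hs'ts, htsL⟩, by linarith⟩
    have hilt : i < greedyN u L ρ := by
      rcases lt_or_eq_of_le hiNρ with h' | h'
      · exact h'
      · exfalso
        have hmemN := h.stop_N hρ hρc
        rw [← h'] at hmemN
        obtain ⟨t, ht, hge⟩ := hnotstop
        exact absurd (hmemN t ht) (by rw [← hs'] at *; linarith)
    obtain ⟨hσ'm, hnormσ', hgap1', hgap2', hfirst'⟩ := h.step_chain hρ hρc hilt
    set σ' := greedyS u L ρ (i+1) with hσ'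
    -- σ ≤ σ'
    have hle : σ ≤ σ' := by
      by_contra hcon
      push_neg at hcon
      have hσ's : s ≤ σ' := le_trans hss' hσ'm.1
      have h1 : ‖u σ' - u s‖ < r := hfirst σ' hσ's hcon
      rcases eq_or_lt_of_le hss' with heq | hlt'
      · have h3 : ‖u σ' - u s‖ = ρ := by rw [heq]; exact hnormσ'
        linarith
      · have h2 : ‖u σ' - u s'‖ < ‖u σ' - u s‖ :=
          h.monoB s s' σ' hsm.1 hlt' hσ'm.1 hσ'm.2 (by linarith)
        rw [hnormσ'] at h2
        linarith
    -- σ' ≤ tstar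
    have hub : σ' ≤ tstar := by
      obtain ⟨w, hw, hwq⟩ := h.cross hs'm ⟨hs'ts, htsL⟩ hρ.le (by linarith [hprobe])
      have hbdd : BddBelow {t : ℝ | t ∈ Icc s' L ∧ ‖u t - u s'‖ = ρ} :=
        ⟨s', fun t ht => ht.1.1⟩
      have : σ' ≤ w := by
        rw [hσ', show greedyS u L ρ (i+1) =
          sInf {t : ℝ | t ∈ Icc (greedyS u L ρ i) L ∧ ‖u t - u (greedyS u L ρ i)‖ = ρ} from rfl]
        exact csInf_le hbdd ⟨⟨hw.1, le_trans hw.2 htsL⟩, hwq⟩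
      linarith [hw.2]
    have h9 : tstar = σ + η := rfl
    exact ⟨hilt, hle, by linarith⟩



lemma main (h : Hyp u L c) :
    ∃ r₀ > (0:ℝ), ∀ r : ℝ, 0 < r → r ≤ r₀ →
      (greedyS u L r (greedyN u L r) < L →
        ∃ δ > (0:ℝ), ∀ ρ : ℝ, r ≤ ρ → ρ < r + δ → greedyN u L ρ = greedyN u L r) ∧
      ((¬ ∃ δ > (0:ℝ), ∀ ρ : ℝ, r ≤ ρ → ρ < r + δ → greedyN u L ρ = greedyN u L r) →
        greedyS u L r (greedyN u L r) = L ∧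
        ∃ δ > (0:ℝ), ∀ ρ : ℝ, r < ρ → ρ < r + δ → greedyN u L ρ = greedyN u L r - 1) := by
  refine ⟨c/8, by linarith [h.hc], ?_⟩
  intro r hr hrr₀
  have hrc : 4*r ≤ c := by linarith
  have hNmem : greedyS u L r (greedyN u L r) ∈ Icc 0 L := h.mem_chain hr hrc _ le_rfl
  rcases lt_or_eq_of_le hNmem.2 with hlt | heq
  · -- the chain does not end at L : right-continuity
    have hrc_holds : ∃ δ > (0:ℝ), ∀ ρ : ℝ, r ≤ ρ → ρ < r + δ →
        greedyN u L ρ = greedyN u L r := by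
      have hstop := h.stop_N hr hrc
      have hgc : ContinuousOn (fun t => ‖u t - u (greedyS u L r (greedyN u L r))‖)
          (Icc (greedyS u L r (greedyN u L r)) L) :=
        ((h.cont.mono (Icc_subset_Icc hNmem.1 le_rfl)).sub continuousOn_const).norm
      obtain ⟨tm, htm, hmax⟩ := isCompact_Icc.exists_isMaxOn (nonempty_Icc.2 hlt.le) hgc
      have hε₀ : 0 < r - ‖u tm - u (greedyS u L r (greedyN u L r))‖ := by
        have := hstop tm htm
        linarith
      set ε₀ := r - ‖u tm - u (greedyS u L r (greedyN u L r))‖ with hε₀def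
      obtain ⟨δ₁, hδ₁, hT⟩ := h.T hr hrc _ le_rfl hlt (ε₀/4) (by linarith)
      refine ⟨min (min δ₁ (ε₀/4)) (c/8), lt_min (lt_min hδ₁ (by linarith)) (by linarith [h.hc]), ?_⟩
      intro ρ hrρ hρδ
      have hρ : 0 < ρ := lt_of_lt_of_le hr hrρ
      have hρc : 4*ρ ≤ c := by
        have h1 : min (min δ₁ (ε₀/4)) (c/8) ≤ c/8 := min_le_right _ _
        linarith
      obtain ⟨hNρ, hss', hs'e⟩ := hT ρ hrρ (by
        have h1 : min (min δ₁ (ε₀/4)) (c/8) ≤ δ₁ := le_trans (min_le_left _ _) (min_le_left _ _)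
        linarith) hρc
      have hs'm : greedyS u L ρ (greedyN u L r) ∈ Icc 0 L := h.mem_chain hρ hρc _ hNρ
      have hs'e' : greedyS u L ρ (greedyN u L r) < greedyS u L r (greedyN u L r) + ε₀/4 := hs'e
      have hstopρ : greedyN u L r ∈
          {i : ℕ | ∀ t ∈ Icc (greedyS u L ρ i) L, ‖u t - u (greedyS u L ρ i)‖ < ρ} := by
        intro t ht
        have htm2 : t ∈ Icc (greedyS u L r (greedyN u L r)) L := ⟨le_trans hss' ht.1, ht.2⟩
        have h1 : ‖u t - u (greedyS u L r (greedyN u L r))‖ ≤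
            ‖u tm - u (greedyS u L r (greedyN u L r))‖ := hmax htm2
        have h2 : ‖u (greedyS u L ρ (greedyN u L r)) - u (greedyS u L r (greedyN u L r))‖
            ≤ greedyS u L ρ (greedyN u L r) - greedyS u L r (greedyN u L r) :=
          h.lip' hNmem hs'm hss'
        have h3 : ‖u t - u (greedyS u L ρ (greedyN u L r))‖ ≤
            ‖u t - u (greedyS u L r (greedyN u L r))‖ +
            ‖u (greedyS u L ρ (greedyN u L r)) - u (greedyS u L r (greedyN u L r))‖ := by
          have : u t - u (greedyS u L ρ (greedyN u L r)) =
              (u t - u (greedyS u L r (greedyN u L r))) -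
              (u (greedyS u L ρ (greedyN u L r)) - u (greedyS u L r (greedyN u L r))) := by abel
          rw [this]; exact norm_sub_le _ _
        linarith
      have hle : greedyN u L ρ ≤ greedyN u L r := Nat.sInf_le hstopρ
      exact le_antisymm hle hNρ
    exact ⟨fun _ => hrc_holds, fun hn => absurd hrc_holds hn⟩
  · -- the chain ends exactly at L : jump of size one
    constructor
    · intro hlt'; rw [heq] at hlt'; exact absurd hlt' (lt_irrefl L)
    · intro _
      refine ⟨heq, ?_⟩
      have hN1 : 1 ≤ greedyN u L r := by
        by_contra hn
        push_neg at hn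
        have h0 : greedyN u L r = 0 := by omega
        rw [h0, show greedyS u L r 0 = 0 from rfl] at heq
        linarith [h.hL]
      obtain ⟨n, hNn⟩ : ∃ n, greedyN u L r = n + 1 := ⟨greedyN u L r - 1, by omega⟩
      have hn : n < greedyN u L r := by omega
      obtain ⟨hσm, hnormσ, hgap1, hgap2, hfirst⟩ := h.step_chain hr hrc hn
      have hL' : greedyS u L r (n+1) = L := by rw [← hNn]; exact heq
      have hsnm : greedyS u L r n ∈ Icc 0 L := h.mem_chain hr hrc n hn.le
      have hsnL : greedyS u L r n < L := by rw [hL'] at hgap1; linarith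
      have hwin : L - greedyS u L r n ≤ c := by rw [hL'] at hgap2; linarith
      have hnormL : ‖u L - u (greedyS u L r n)‖ = r := by
        have h5 := hnormσ
        rw [hL'] at h5
        exact h5
      obtain ⟨δ₁, hδ₁, hT⟩ := h.T hr hrc n hn.le hsnL (r/2) (by linarith)
      refine ⟨min δ₁ (c/8), lt_min hδ₁ (by linarith [h.hc]), ?_⟩
      intro ρ hrρ hρδ
      have hρ : 0 < ρ := lt_trans hr hrρ
      have hρc : 4*ρ ≤ c := by
        have h1 : min δ₁ (c/8) ≤ c/8 := min_le_right _ _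
        linarith
      obtain ⟨hnNρ, hss', hs'e⟩ := hT ρ hrρ.le (by
        have h1 : min δ₁ (c/8) ≤ δ₁ := min_le_left _ _
        linarith) hρc
      have hs'm : greedyS u L ρ n ∈ Icc 0 L := h.mem_chain hρ hρc n hnNρ
      have hLle : ‖u L - u (greedyS u L ρ n)‖ ≤ r := by
        rcases eq_or_lt_of_le hss' with heq2 | hlt2
        · rw [← heq2]; exact le_of_eq hnormL
        · have := h.monoB (greedyS u L r n) (greedyS u L ρ n) L hsnm.1 hlt2 hs'm.2 le_rfl hwin
          linarith [hnormL]
      have hstopρ : n ∈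
          {i : ℕ | ∀ t ∈ Icc (greedyS u L ρ i) L, ‖u t - u (greedyS u L ρ i)‖ < ρ} := by
        intro t ht
        rcases lt_or_eq_of_le ht.2 with htL | htL
        · have := h.monoF (greedyS u L ρ n) t L hs'm.1 ht.1 htL le_rfl
            (by linarith [hss'])
          linarith
        · rw [htL]; linarith
      have hle : greedyN u L ρ ≤ n := Nat.sInf_le hstopρ
      have : greedyN u L ρ = n := le_antisymm hle hnNρ
      omega

end Hyp

/-- for small `r̂`, if the greedy chain does not end exactly at `u(L)`
(i.e. `s_{N(r̂)}(r̂) < L`) then `N` is right-continuous at `r̂`; and if `N` fails to be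
right-continuous at `r̂`, then `s_{N(r̂)}(r̂) = L` and `N(ρ) = N(r̂) − 1` for all `ρ > r̂`
close to `r̂`, i.e. every jump of `r ↦ N(r)` has size exactly 1. -/
theorem stmt9 (L : ℝ) (hL : 0 < L) (u : ℝ → EuclideanSpace ℝ (Fin 3))
    (hu : ContDiffOn ℝ (⊤ : ℕ∞) u (Icc 0 L))
    (hunit : ∀ s ∈ Icc 0 L, ‖derivWithin u (Icc 0 L) s‖ = 1) :
    ∃ r₀ > (0:ℝ), ∀ r : ℝ, 0 < r → r ≤ r₀ →
      (greedyS u L r (greedyN u L r) < L →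
        ∃ δ > (0:ℝ), ∀ ρ : ℝ, r ≤ ρ → ρ < r + δ → greedyN u L ρ = greedyN u L r) ∧
      ((¬ ∃ δ > (0:ℝ), ∀ ρ : ℝ, r ≤ ρ → ρ < r + δ → greedyN u L ρ = greedyN u L r) →
        greedyS u L r (greedyN u L r) = L ∧
        ∃ δ > (0:ℝ), ∀ ρ : ℝ, r < ρ → ρ < r + δ → greedyN u L ρ = greedyN u L r - 1) := by
  obtain ⟨c, hc, H1, H2, H3, H4⟩ := key L hL u hu hunit
  have h : Hyp u L c := ⟨hL, hc, H1, H2, H3, H4, hu.continuousOn⟩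
  exact h.main
end
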